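/- arXiv:1109.4775 — 3 statements merged into one kernel-verified Lean document; each statement's English description precedes it below -/
import Mathlib

section
/- Let k be a field. For any finite simple graph G with n vertices, the total Betti number of its independence complex satisfies b(Ind(G)) ≤ (4^{1/5})^n. -/
open Finset

attribute [local instance] Classical.propDecidable

set_option synthInstance.maxHeartbeats 1000000
set_option maxHeartbeats 1000000
set_option linter.unusedSectionVars false

/-- A finite abstract simplicial complex on the ambient (finite) vertex type `V`:
a collection of finite subsets of `V` containing the empty set and closed
under taking subsets. -/
structure SComplex (V : Type*) where
  faces : Set (Finset V)
  empty_mem : ∅ ∈ faces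
  down_closed : ∀ ⦃s t : Finset V⦄, s ∈ faces → t ⊆ s → t ∈ faces

namespace SComplex

variable {V : Type*} {W : Type*}

/-- The space of `j`-chains over the field `k`: formal `k`-linear combinations of
the faces of cardinality `j` (the free `k`-module on them; `V` is finite).
Here `j = i + 1` where `i` is the reduced homological degree; in particular
`j = 0` corresponds to the empty face (reduced degree `-1`). -/
abbrev Chains (k : Type*) [Field k] [Fintype V] (K : SComplex V) (j : ℕ) : Type _ :=
  {s : Finset V // s ∈ K.faces ∧ s.card = j} → k

/-- The boundary of a single `(j+1)`-face: the alternating sum of its codimension-one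
subfaces, with signs determined by a (well-)ordering of the vertex type. -/
noncomputable def bdryElt (k : Type*) [Field k] [Fintype V] (K : SComplex V) (j : ℕ)
    (s : {s : Finset V // s ∈ K.faces ∧ s.card = j + 1}) : Chains k K j :=
  letI : LinearOrder V := IsWellOrder.linearOrder WellOrderingRel
  fun t =>
    if t.1 ⊆ s.1 then
      ∑ v ∈ s.1 \ t.1, (-1 : k) ^ (s.1.filter (fun w => w < v)).card
    else 0

/-- The simplicial boundary operator from `(j+1)`-chains to `j`-chains. -/
noncomputable def bdry (k : Type*) [Field k] [Fintype V] (K : SComplex V) (j : ℕ) :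
    Chains k K (j + 1) →ₗ[k] Chains k K j :=
  ∑ s : {s : Finset V // s ∈ K.faces ∧ s.card = j + 1},
    (LinearMap.toSpanSingleton k _ (bdryElt k K j s)).comp (LinearMap.proj s)

/-- The submodule of cycles in chain degree `j` (everything in degree `0`,
since the boundary of the empty face is zero). -/
noncomputable def cycles (k : Type*) [Field k] [Fintype V] (K : SComplex V) :
    (j : ℕ) → Submodule k (Chains k K j)
  | 0 => ⊤
  | (j + 1) => LinearMap.ker (bdry k K j)

/-- The submodule of boundaries in chain degree `j`. -/
noncomputable def bdries (k : Type*) [Field k] [Fintype V] (K : SComplex V) (j : ℕ) :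
    Submodule k (Chains k K j) :=
  LinearMap.range (bdry k K j)

/-- The reduced simplicial homology `H̃_{j-1}(K; k)` of `K` with coefficients in `k`,
in chain degree `j` (that is, homological degree `i = j - 1`): cycles modulo
boundaries. -/
noncomputable abbrev homologyMod (k : Type*) [Field k] [Fintype V] (K : SComplex V) (j : ℕ) :=
  ↥(cycles k K j) ⧸ Submodule.comap (cycles k K j).subtype (bdries k K j)

/-- The reduced Betti number `b_{j-1}(K) = dim_k H̃_{j-1}(K; k)` (chain-degree
indexing: `bettiNum k K j` is the Betti number in homological degree `j - 1`). -/
noncomputable def bettiNum (k : Type*) [Field k] [Fintype V] (K : SComplex V) (j : ℕ) : ℕ :=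
  Module.finrank k (homologyMod k K j)

/-- The total (reduced) Betti number `b(K) = ∑ᵢ dim_k H̃ᵢ(K; k)`. -/
noncomputable def totalBetti (k : Type*) [Field k] [Fintype V] (K : SComplex V) : ℕ :=
  ∑ j ∈ Finset.range (Fintype.card V + 1), bettiNum k K j

/-- The set of maximal faces (facets) of `K`. -/
def Facets (K : SComplex V) : Set (Finset V) :=
  {F | F ∈ K.faces ∧ ∀ G ∈ K.faces, F ⊆ G → F = G}

/-- A minimal non-face: not a face, but all proper subsets are faces. -/
def IsMinNonFace (K : SComplex V) (s : Finset V) : Prop :=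
  s ∉ K.faces ∧ ∀ t ⊂ s, t ∈ K.faces

/-- The vertex set of a complex. -/
def vertices (K : SComplex V) : Set V := {v | {v} ∈ K.faces}

/-- Deletion of a vertex: the induced subcomplex on `V(K) \ {v}`. -/
def delete (K : SComplex V) (v : V) : SComplex V where
  faces := {s | s ∈ K.faces ∧ v ∉ s}
  empty_mem := ⟨K.empty_mem, by simp⟩
  down_closed := by
    intro s t hs hts
    exact ⟨K.down_closed hs.1 hts, fun hv => hs.2 (hts hv)⟩

/-- The link of a vertex `v`: all faces `τ` with `v ∉ τ` and `τ ∪ {v} ∈ K`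
(together with the empty face). -/
def link (K : SComplex V) (v : V) : SComplex V where
  faces := {s | v ∉ s ∧ insert v s ∈ K.faces} ∪ {∅}
  empty_mem := Or.inr rfl
  down_closed := by
    intro s t hs hts
    rcases hs with ⟨hvs, hins⟩ | h
    · exact Or.inl ⟨fun hvt => hvs (hts hvt),
        K.down_closed hins (Finset.insert_subset_insert v hts)⟩
    · right
      have hs' : s = ∅ := h
      subst hs'
      exact Finset.subset_empty.mp hts

/-- The join of two complexes (on the disjoint union of the vertex types `V` and `W`):
the faces are exactly the unions `σ ⊔ τ` of a face `σ` of `X` and a face `τ` of `Y`. -/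
def join (X : SComplex V) (Y : SComplex W) : SComplex (V ⊕ W) where
  faces := {s | s.preimage Sum.inl Sum.inl_injective.injOn ∈ X.faces ∧
               s.preimage Sum.inr Sum.inr_injective.injOn ∈ Y.faces}
  empty_mem := by
    constructor
    · simpa using X.empty_mem
    · simpa using Y.empty_mem
  down_closed := by
    intro s t hs hts
    constructor
    · refine X.down_closed hs.1 (fun x hx => ?_)
      simp only [Finset.mem_preimage] at hx ⊢
      exact hts hx
    · refine Y.down_closed hs.2 (fun x hx => ?_)
      simp only [Finset.mem_preimage] at hx ⊢
      exact hts hx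

end SComplex

open SComplex

/-- The independence complex of a graph: faces are the independent sets. -/
def indComplex {V : Type*} (G : SimpleGraph V) : SComplex V where
  faces := {s | ∀ ⦃v⦄, v ∈ s → ∀ ⦃w⦄, w ∈ s → ¬ G.Adj v w}
  empty_mem := by intro v hv; simp at hv
  down_closed := by
    intro s t hs hts v hv w hw
    exact hs (hts hv) (hts hw)

/-- The neighbourhood complex of a graph: faces are the sets of vertices having a
common neighbour; its vertices are exactly the non-isolated vertices of `G`. -/
def nbhdComplex {V : Type*} (G : SimpleGraph V) : SComplex V where
  faces := {s | s = ∅ ∨ ∃ v, ∀ w ∈ s, G.Adj v w}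
  empty_mem := Or.inl rfl
  down_closed := by
    intro s t hs hts
    rcases hs with h | ⟨v, hv⟩
    · subst h
      exact Or.inl (Finset.subset_empty.mp hts)
    · exact Or.inr ⟨v, fun w hw => hv w (hts hw)⟩

/-- The disjoint union `G ⊔ H` of two graphs. -/
def disjUnion {V W : Type*} (G : SimpleGraph V) (H : SimpleGraph W) :
    SimpleGraph (V ⊕ W) where
  Adj x y := match x, y with
    | Sum.inl a, Sum.inl b => G.Adj a b
    | Sum.inr a, Sum.inr b => H.Adj a b
    | _, _ => False
  symm := by
    constructor
    rintro (a | a) (b | b) h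
    · exact h.symm
    · exact h.elim
    · exact h.elim
    · exact h.symm
  loopless := by
    constructor
    rintro (a | a) h
    · exact G.irrefl h
    · exact H.irrefl h

/-- The graph join `G ⊕ H`: disjoint union together with all edges between the parts. -/
def graphJoin {V W : Type*} (G : SimpleGraph V) (H : SimpleGraph W) :
    SimpleGraph (V ⊕ W) where
  Adj x y := match x, y with
    | Sum.inl a, Sum.inl b => G.Adj a b
    | Sum.inr a, Sum.inr b => H.Adj a b
    | _, _ => True
  symm := by
    constructor
    rintro (a | a) (b | b) h
    · exact h.symm
    · trivial
    · trivial
    · exact h.symm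
  loopless := by
    constructor
    rintro (a | a) h
    · exact G.irrefl h
    · exact H.irrefl h

/-- The total algebraic Betti number `β(G) = ∑_{W ⊆ V(G)} b(Ind(G[W]))` of the
Stanley–Reisner ring of `Ind(G)` (this is Hochster's formula). -/
noncomputable def algBetti (k : Type*) [Field k] {V : Type*} [Fintype V]
    (G : SimpleGraph V) : ℕ :=
  ∑ W : Finset V, totalBetti k (indComplex (G.induce ↑W))

/-- The bipartite graph `Bip(K)` associated to a complex `K`: one side is the vertex
set of `K`, the other side is the set of maximal faces of `K`, and `v` is adjacent
to `F` iff `v ∉ F`. -/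
def bipGraph {V : Type*} (K : SComplex V) : SimpleGraph (V ⊕ ↥K.Facets) where
  Adj x y := match x, y with
    | Sum.inl v, Sum.inr F => v ∉ F.1
    | Sum.inr F, Sum.inl v => v ∉ F.1
    | _, _ => False
  symm := by
    constructor
    rintro (a | a) (b | b) h
    · exact h.elim
    · exact h
    · exact h
    · exact h.elim
  loopless := by
    constructor
    rintro (a | a) h <;> exact h.elim

noncomputable instance {V : Type*} [Fintype V] (K : SComplex V) : Fintype ↥K.Facets :=
  (Set.toFinite _).fintype



namespace SCproof

variable {V : Type*} [Fintype V] (k : Type*) [Field k]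

noncomputable def ent (s t : Finset V) : k :=
  letI : LinearOrder V := IsWellOrder.linearOrder WellOrderingRel
  if t ⊆ s then
    ∑ v ∈ s \ t, (-1 : k) ^ (s.filter (fun w => w < v)).card
  else 0

lemma bdryElt_eq (K : SComplex V) (j : ℕ) (s : {s : Finset V // s ∈ K.faces ∧ s.card = j + 1})
    (t : {s : Finset V // s ∈ K.faces ∧ s.card = j}) :
    bdryElt k K j s t = ent k s.1 t.1 := rfl

lemma ent_of_not_subset {s t : Finset V} (h : ¬ t ⊆ s) : ent k s t = 0 := by
  rw [ent]; exact if_neg h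

lemma bdry_apply (K : SComplex V) (j : ℕ) (x : Chains k K (j+1))
    (t : {s : Finset V // s ∈ K.faces ∧ s.card = j}) :
    bdry k K j x t = ∑ s : {s : Finset V // s ∈ K.faces ∧ s.card = j + 1},
      x s * ent k s.1 t.1 := by
  simp [bdry, LinearMap.sum_apply, bdryElt_eq, LinearMap.toSpanSingleton_apply,
    Finset.sum_apply, mul_comm]

lemma ent_erase_ne_zero {s : Finset V} {v : V} (hv : v ∈ s) : ent k s (s.erase v) ≠ 0 := by
  rw [ent, if_pos (Finset.erase_subset v s), Finset.sdiff_erase_self hv,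
    Finset.sum_singleton]
  exact pow_ne_zero _ (by norm_num)

/-- The sign relation between link entries and ambient entries. -/
lemma ent_insert_sign : ∃ ε : V → Finset V → k,
    (∀ u t, ε u t * ε u t = 1) ∧
    ∀ (u : V) (s t : Finset V), u ∉ s → u ∉ t → t.card + 1 = s.card →
      ent k (insert u s) (insert u t) = -(ε u s * ε u t * ent k s t) := by
  letI : LinearOrder V := IsWellOrder.linearOrder WellOrderingRel
  refine ⟨fun u t => (-1 : k) ^ (t.filter (fun w => w < u)).card, fun u t => ?_, ?_⟩
  · rw [← mul_pow]; norm_num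
  intro u s t hus hut hcard
  by_cases hts : t ⊆ s
  · -- s \ t is a singleton {w}
    have hsd : (s \ t).card = 1 := by
      rw [Finset.card_sdiff_of_subset hts]; omega
    obtain ⟨w, hw⟩ := Finset.card_eq_one.mp hsd
    have hwst : w ∈ s ∧ w ∉ t := by
      have := hw ▸ Finset.mem_singleton_self w
      exact Finset.mem_sdiff.mp this
    have hwu : w ≠ u := fun h => hus (h ▸ hwst.1)
    have hseq : s = insert w t := by
      ext x
      constructor
      · intro hx
        by_cases hxt : x ∈ t
        · exact Finset.mem_insert_of_mem hxt
        · have : x ∈ s \ t := Finset.mem_sdiff.mpr ⟨hx, hxt⟩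
          rw [hw] at this
          exact Finset.mem_insert.mpr (Or.inl (Finset.mem_singleton.mp this))
      · intro hx
        rcases Finset.mem_insert.mp hx with h | h
        · exact h ▸ hwst.1
        · exact hts h
    have hsd2 : insert u s \ insert u t = {w} := by
      ext x
      simp only [Finset.mem_sdiff, Finset.mem_insert, Finset.mem_singleton]
      constructor
      · rintro ⟨hx1, hx2⟩
        rcases hx1 with rfl | hx1
        · exact absurd (Or.inl rfl) hx2
        · have hxt : x ∉ t := fun h => hx2 (Or.inr h)
          have : x ∈ s \ t := Finset.mem_sdiff.mpr ⟨hx1, hxt⟩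
          rw [hw] at this; exact Finset.mem_singleton.mp this
      · rintro rfl
        exact ⟨Or.inr hwst.1, by
          rintro (rfl | h)
          · exact hwu rfl
          · exact hwst.2 h⟩
    have hsub' : insert u t ⊆ insert u s := Finset.insert_subset_insert u hts
    rw [ent, ent, if_pos hsub', if_pos hts, hsd2, hw, Finset.sum_singleton,
      Finset.sum_singleton]
    -- compute the filter card of insert u s
    have hfil : ((insert u s).filter (fun x => x < w)).card
        = (s.filter (fun x => x < w)).card + (if u < w then 1 else 0) := by
      rw [Finset.filter_insert]
      by_cases h : u < w
      · rw [if_pos h, if_pos h, Finset.card_insert_of_notMem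
          (fun hc => hus (Finset.mem_of_mem_filter u hc))]
      · rw [if_neg h, if_neg h, add_zero]
    -- ε u s vs ε u t
    have hfil2 : (s.filter (fun x => x < u)).card
        = (t.filter (fun x => x < u)).card + (if w < u then 1 else 0) := by
      conv_lhs => rw [hseq]
      rw [Finset.filter_insert]
      by_cases h : w < u
      · rw [if_pos h, if_pos h, Finset.card_insert_of_notMem
          (fun hc => hwst.2 (Finset.mem_of_mem_filter w hc))]
      · rw [if_neg h, if_neg h, add_zero]
    simp only [hfil, hfil2]
    have sq : ∀ m : ℕ, (-1 : k) ^ m * (-1 : k) ^ m = 1 := fun m => by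
      rw [← mul_pow]; norm_num
    rcases lt_or_gt_of_ne hwu with h1 | h1
    · have h2 : ¬ u < w := not_lt_of_gt h1
      rw [if_pos h1, if_neg h2, add_zero]
      linear_combination (-(-1 : k) ^ (s.filter (fun x => x < w)).card) *
        sq (t.filter (fun x => x < u)).card
    · have h2 : ¬ w < u := not_lt_of_gt h1
      rw [if_neg h2, if_pos h1, add_zero]
      linear_combination ((-1 : k) ^ (s.filter (fun x => x < w)).card) *
        sq (t.filter (fun x => x < u)).card
  · have hts' : ¬ insert u t ⊆ insert u s := by
      intro hc
      apply hts
      intro x hx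
      have := hc (Finset.mem_insert_of_mem hx)
      rcases Finset.mem_insert.mp this with rfl | h
      · exact absurd hx hut
      · exact h
    rw [ent_of_not_subset k hts, ent_of_not_subset k hts', mul_zero, neg_zero]

end SCproof

namespace SCproof
variable {V : Type*} [Fintype V] (k : Type*) [Field k]

lemma ent_cancel (K : SComplex V) (j : ℕ) (s : Finset V) (hs : s ∈ K.faces)
    (hcard : s.card = j + 2) (t : Finset V) (ht : t.card = j) :
    ∑ r : {r : Finset V // r ∈ K.faces ∧ r.card = j + 1},
      ent k s r.1 * ent k r.1 t = 0 := by
  by_cases hts : t ⊆ s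
  · have hsd2 : (s \ t).card = 2 := by rw [Finset.card_sdiff_of_subset hts]; omega
    obtain ⟨a, b, hab, hst2⟩ := Finset.card_eq_two.mp hsd2
    have ha : a ∈ s ∧ a ∉ t := by
      have : a ∈ s \ t := hst2 ▸ Finset.mem_insert_self a {b}
      exact Finset.mem_sdiff.mp this
    have hb : b ∈ s ∧ b ∉ t := by
      have : b ∈ s \ t := hst2 ▸ Finset.mem_insert_of_mem (Finset.mem_singleton_self b)
      exact Finset.mem_sdiff.mp this
    have hr1c : (s.erase a).card = j + 1 := by
      rw [Finset.card_erase_of_mem ha.1, hcard]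
      omega
    have hr2c : (s.erase b).card = j + 1 := by
      rw [Finset.card_erase_of_mem hb.1, hcard]
      omega
    set r1 : {r : Finset V // r ∈ K.faces ∧ r.card = j + 1} :=
      ⟨s.erase a, K.down_closed hs (Finset.erase_subset a s), hr1c⟩ with hr1
    set r2 : {r : Finset V // r ∈ K.faces ∧ r.card = j + 1} :=
      ⟨s.erase b, K.down_closed hs (Finset.erase_subset b s), hr2c⟩ with hr2
    have hne : r1 ≠ r2 := by
      intro h
      have : s.erase a = s.erase b := congrArg Subtype.val h
      have hbmem : b ∈ s.erase a := Finset.mem_erase.mpr ⟨hab.symm, hb.1⟩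
      rw [this] at hbmem
      exact (Finset.mem_erase.mp hbmem).1 rfl
    have hvan : ∀ r ∈ (Finset.univ : Finset {r : Finset V // r ∈ K.faces ∧ r.card = j + 1}),
        r ∉ ({r1, r2} : Finset _) → ent k s r.1 * ent k r.1 t = 0 := by
      intro r _ hr
      by_cases h1 : r.1 ⊆ s
      · by_cases h2 : t ⊆ r.1
        · exfalso
          have hc1 : (s \ r.1).card = 1 := by rw [Finset.card_sdiff_of_subset h1, hcard, r.2.2]; omega
          obtain ⟨c, hc⟩ := Finset.card_eq_one.mp hc1
          have hcmem : c ∈ s ∧ c ∉ r.1 := by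
            have : c ∈ s \ r.1 := hc ▸ Finset.mem_singleton_self c
            exact Finset.mem_sdiff.mp this
          have hct : c ∉ t := fun h => hcmem.2 (h2 h)
          have hcab : c = a ∨ c = b := by
            have : c ∈ s \ t := Finset.mem_sdiff.mpr ⟨hcmem.1, hct⟩
            rw [hst2] at this
            simpa using this
          have hreq : r.1 = s \ {c} := by
            have : s \ (s \ r.1) = r.1 := by
              rw [Finset.sdiff_sdiff_self_left]
              exact Finset.inter_eq_right.mpr h1
            rw [← this, hc]
          apply hr
          rcases hcab with rfl | rfl
          · have : r = r1 := Subtype.ext (by rw [hreq, hr1, ← Finset.erase_eq])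
            simp [this]
          · have : r = r2 := Subtype.ext (by rw [hreq, hr2, ← Finset.erase_eq])
            simp [this]
        · rw [ent_of_not_subset k h2, mul_zero]
      · rw [ent_of_not_subset k h1, zero_mul]
    rw [← Finset.sum_subset (Finset.subset_univ ({r1, r2} : Finset _)) hvan,
      Finset.sum_pair hne]
    -- now explicit computation
    letI : LinearOrder V := IsWellOrder.linearOrder WellOrderingRel
    have hta : t ⊆ s.erase a := Finset.subset_erase.mpr ⟨hts, ha.2⟩
    have htb : t ⊆ s.erase b := Finset.subset_erase.mpr ⟨hts, hb.2⟩
    have hda : s.erase a \ t = {b} := by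
      ext x
      simp only [Finset.mem_sdiff, Finset.mem_erase, Finset.mem_singleton]
      constructor
      · rintro ⟨⟨hxa, hxs⟩, hxt⟩
        have : x ∈ s \ t := Finset.mem_sdiff.mpr ⟨hxs, hxt⟩
        rw [hst2] at this
        rcases Finset.mem_insert.mp this with rfl | h
        · exact absurd rfl hxa
        · exact Finset.mem_singleton.mp h
      · rintro rfl
        exact ⟨⟨hab.symm, hb.1⟩, hb.2⟩
    have hdb : s.erase b \ t = {a} := by
      ext x
      simp only [Finset.mem_sdiff, Finset.mem_erase, Finset.mem_singleton]
      constructor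
      · rintro ⟨⟨hxb, hxs⟩, hxt⟩
        have : x ∈ s \ t := Finset.mem_sdiff.mpr ⟨hxs, hxt⟩
        rw [hst2] at this
        rcases Finset.mem_insert.mp this with rfl | h
        · rfl
        · exact absurd (Finset.mem_singleton.mp h) hxb
      · rintro rfl
        exact ⟨⟨hab, ha.1⟩, ha.2⟩
    have e1 : ent k s (s.erase a) = (-1 : k) ^ (s.filter (fun w => w < a)).card := by
      rw [ent, if_pos (Finset.erase_subset a s), Finset.sdiff_erase_self ha.1,
        Finset.sum_singleton]
    have e2 : ent k s (s.erase b) = (-1 : k) ^ (s.filter (fun w => w < b)).card := by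
      rw [ent, if_pos (Finset.erase_subset b s), Finset.sdiff_erase_self hb.1,
        Finset.sum_singleton]
    have e3 : ent k (s.erase a) t = (-1 : k) ^ ((s.erase a).filter (fun w => w < b)).card := by
      rw [ent, if_pos hta, hda, Finset.sum_singleton]
    have e4 : ent k (s.erase b) t = (-1 : k) ^ ((s.erase b).filter (fun w => w < a)).card := by
      rw [ent, if_pos htb, hdb, Finset.sum_singleton]
    have rel_ab : ((s.erase a).filter (fun x => x < b)).card + (if a < b then 1 else 0)
        = (s.filter (fun x => x < b)).card := by
      rw [Finset.filter_erase]
      by_cases h : a < b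
      · rw [if_pos h]
        exact Finset.card_erase_add_one (Finset.mem_filter.mpr ⟨ha.1, h⟩)
      · rw [if_neg h, add_zero, Finset.erase_eq_of_notMem
            (s := s.filter (fun x => x < b)) (a := a)
            (fun hc => h (Finset.mem_filter.mp hc).2)]
    have rel_ba : ((s.erase b).filter (fun x => x < a)).card + (if b < a then 1 else 0)
        = (s.filter (fun x => x < a)).card := by
      rw [Finset.filter_erase]
      by_cases h : b < a
      · rw [if_pos h]
        exact Finset.card_erase_add_one (Finset.mem_filter.mpr ⟨hb.1, h⟩)
      · rw [if_neg h, add_zero, Finset.erase_eq_of_notMem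
            (s := s.filter (fun x => x < a)) (a := b)
            (fun hc => h (Finset.mem_filter.mp hc).2)]
    rw [e1, e2, e3, e4, ← rel_ab, ← rel_ba]
    rcases lt_or_gt_of_ne hab with h1 | h1
    · rw [if_pos h1, if_neg (not_lt_of_gt h1)]
      ring
    · rw [if_neg (not_lt_of_gt h1), if_pos h1]
      ring
  · apply Finset.sum_eq_zero
    intro r _
    by_cases h2 : t ⊆ r.1
    · by_cases h1 : r.1 ⊆ s
      · exact absurd (h2.trans h1) hts
      · rw [ent_of_not_subset k h1, zero_mul]
    · rw [ent_of_not_subset k h2, mul_zero]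

lemma bdry_bdry (K : SComplex V) (j : ℕ) :
    (bdry k K j).comp (bdry k K (j+1)) = 0 := by
  apply LinearMap.ext
  intro x
  funext t
  have h1 : ((bdry k K j).comp (bdry k K (j+1))) x t
      = ∑ s : {s : Finset V // s ∈ K.faces ∧ s.card = j + 2},
          x s * ∑ r : {r : Finset V // r ∈ K.faces ∧ r.card = j + 1},
            ent k s.1 r.1 * ent k r.1 t.1 := by
    rw [LinearMap.comp_apply, bdry_apply]
    simp_rw [bdry_apply, Finset.sum_mul, mul_assoc]
    rw [Finset.sum_comm]
    simp_rw [← Finset.mul_sum]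
  rw [h1]
  have : ∀ s : {s : Finset V // s ∈ K.faces ∧ s.card = j + 2},
      (∑ r : {r : Finset V // r ∈ K.faces ∧ r.card = j + 1},
        ent k s.1 r.1 * ent k r.1 t.1) = 0 := fun s =>
    ent_cancel k K j s.1 s.2.1 s.2.2 t.1 t.2.2
  simp [this]
end SCproof

namespace SCproof
variable {V : Type*} [Fintype V] (k : Type*) [Field k]

noncomputable def Fj (K : SComplex V) (j : ℕ) : ℕ :=
  Fintype.card {s : Finset V // s ∈ K.faces ∧ s.card = j}

noncomputable def rj (K : SComplex V) (j : ℕ) : ℕ :=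
  Module.finrank k ↥(LinearMap.range (bdry k K j))

noncomputable def Ftot (K : SComplex V) : ℕ :=
  ∑ j ∈ Finset.range (Fintype.card V + 1), Fj K j

noncomputable def Rtot (K : SComplex V) : ℕ :=
  ∑ j ∈ Finset.range (Fintype.card V + 1), rj k K j

lemma chains_finrank (K : SComplex V) (j : ℕ) :
    Module.finrank k (Chains k K j) = Fj K j :=
  Module.finrank_fintype_fun_eq_card k

lemma isEmpty_high (K : SComplex V) {j : ℕ} (hj : Fintype.card V < j) :
    IsEmpty {s : Finset V // s ∈ K.faces ∧ s.card = j} := by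
  refine ⟨fun s => ?_⟩
  have h1 : s.1.card ≤ Fintype.card V := Finset.card_le_univ s.1
  omega

lemma rj_high (K : SComplex V) {j : ℕ} (hj : Fintype.card V ≤ j) : rj k K j = 0 := by
  have he : IsEmpty {s : Finset V // s ∈ K.faces ∧ s.card = j + 1} :=
    isEmpty_high K (by omega)
  have h0 : Module.finrank k (Chains k K (j+1)) = 0 := by
    rw [chains_finrank]
    exact Fintype.card_eq_zero
  have := LinearMap.finrank_range_le (bdry k K j)
  rw [h0] at this
  exact Nat.le_zero.mp this

lemma bdries_le_cycles (K : SComplex V) (j : ℕ) : bdries k K j ≤ cycles k K j := by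
  cases j with
  | zero => exact le_top
  | succ j =>
      show bdries k K (j+1) ≤ LinearMap.ker (bdry k K j)
      exact LinearMap.range_le_ker_iff.mpr (bdry_bdry k K j)

lemma betti_eq (K : SComplex V) (j : ℕ) :
    bettiNum k K j + rj k K j = Module.finrank k ↥(cycles k K j) := by
  have h := Submodule.finrank_quotient_add_finrank
    (Submodule.comap (cycles k K j).subtype (bdries k K j))
  have h2 : Module.finrank k ↥(Submodule.comap (cycles k K j).subtype (bdries k K j))
      = rj k K j :=
    (Submodule.comapSubtypeEquivOfLe (bdries_le_cycles k K j)).finrank_eq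
  rw [h2] at h
  exact h

lemma cyc_zero (K : SComplex V) :
    Module.finrank k ↥(cycles k K 0) = Fj K 0 := by
  show Module.finrank k ↥(⊤ : Submodule k (Chains k K 0)) = Fj K 0
  rw [finrank_top]
  exact chains_finrank k K 0

lemma cyc_succ (K : SComplex V) (j : ℕ) :
    Module.finrank k ↥(cycles k K (j+1)) + rj k K j = Fj K (j+1) := by
  have h := LinearMap.finrank_range_add_finrank_ker (bdry k K j)
  rw [chains_finrank] at h
  show Module.finrank k ↥(LinearMap.ker (bdry k K j)) + rj k K j = Fj K (j+1)
  have hr : rj k K j = Module.finrank k ↥(LinearMap.range (bdry k K j)) := rfl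
  rw [hr]
  omega

lemma total_eq (K : SComplex V) :
    totalBetti k K + 2 * Rtot k K = Ftot K := by
  set n := Fintype.card V with hn
  have h1 : ∑ j ∈ Finset.range (n+1), (bettiNum k K j + rj k K j)
      = ∑ j ∈ Finset.range (n+1), Module.finrank k ↥(cycles k K j) :=
    Finset.sum_congr rfl (fun j _ => betti_eq k K j)
  rw [Finset.sum_add_distrib] at h1
  have h2 : ∑ j ∈ Finset.range (n+1), Module.finrank k ↥(cycles k K j)
      = Module.finrank k ↥(cycles k K 0)
        + ∑ j ∈ Finset.range n, Module.finrank k ↥(cycles k K (j+1)) := by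
    rw [Finset.sum_range_succ']
    ring
  have h3 : ∑ j ∈ Finset.range n, (Module.finrank k ↥(cycles k K (j+1)) + rj k K j)
      = ∑ j ∈ Finset.range n, Fj K (j+1) :=
    Finset.sum_congr rfl (fun j _ => cyc_succ k K j)
  rw [Finset.sum_add_distrib] at h3
  have h4 : Ftot K = Fj K 0 + ∑ j ∈ Finset.range n, Fj K (j+1) := by
    rw [Ftot, Finset.sum_range_succ']
    ring
  have h5 : Rtot k K = ∑ j ∈ Finset.range n, rj k K j + rj k K n := by
    rw [Rtot, Finset.sum_range_succ]
  have h6 : rj k K n = 0 := rj_high k K le_rfl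
  have h7 : Module.finrank k ↥(cycles k K 0) = Fj K 0 := cyc_zero k K
  have h8 : totalBetti k K = ∑ j ∈ Finset.range (n+1), bettiNum k K j := rfl
  have h9 : Rtot k K = ∑ j ∈ Finset.range (n+1), rj k K j := rfl
  omega

end SCproof

namespace SCproof
open Module LinearMap

section LinAlg
variable {k : Type*} [Field k]
variable {X Y X₁ X₂ Y₂ : Type*}
  [AddCommGroup X] [Module k X] [AddCommGroup Y] [Module k Y]
  [AddCommGroup X₁] [Module k X₁] [AddCommGroup X₂] [Module k X₂]
  [AddCommGroup Y₂] [Module k Y₂]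

lemma rank_comp_le_left' (f : X →ₗ[k] Y) (g : Y →ₗ[k] Y₂) [FiniteDimensional k Y] :
    finrank k ↥(range (g.comp f)) ≤ finrank k ↥(range g) :=
  Submodule.finrank_mono (range_comp_le_range f g)

lemma rank_comp_le_right' (f : X →ₗ[k] Y) (g : Y →ₗ[k] Y₂) [FiniteDimensional k X] :
    finrank k ↥(range (g.comp f)) ≤ finrank k ↥(range f) := by
  rw [LinearMap.range_comp]
  exact Submodule.finrank_map_le g _

lemma rank_split [FiniteDimensional k Y] [FiniteDimensional k Y₂]
    (M : X →ₗ[k] Y) (i1 : X₁ →ₗ[k] X) (i2 : X₂ →ₗ[k] X)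
    (p2 : Y →ₗ[k] Y₂) (h0 : p2.comp (M.comp i1) = 0) :
    finrank k ↥(range (M.comp i1)) + finrank k ↥(range (p2.comp (M.comp i2)))
      ≤ finrank k ↥(range M) := by
  set W := range M with hW
  set q : ↥W →ₗ[k] Y₂ := p2.comp W.subtype with hq
  have hrn := LinearMap.finrank_range_add_finrank_ker q
  have hle1 : range (M.comp i1) ≤ W := range_comp_le_range i1 M
  have hker : Submodule.comap W.subtype (range (M.comp i1)) ≤ LinearMap.ker q := by
    intro x hx
    have hx' : (W.subtype x) ∈ range (M.comp i1) := hx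
    obtain ⟨z, hz⟩ := hx'
    show p2 (W.subtype x) = 0
    rw [← hz]
    have := LinearMap.congr_fun h0 z
    simpa using this
  have e1 : finrank k ↥(Submodule.comap W.subtype (range (M.comp i1)))
      = finrank k ↥(range (M.comp i1)) :=
    (Submodule.comapSubtypeEquivOfLe hle1).finrank_eq
  have le1 : finrank k ↥(range (M.comp i1)) ≤ finrank k ↥(LinearMap.ker q) := by
    rw [← e1]
    exact Submodule.finrank_mono hker
  have hle2 : range (p2.comp (M.comp i2)) ≤ range q := by
    rintro y ⟨z, rfl⟩
    exact ⟨⟨M (i2 z), ⟨i2 z, rfl⟩⟩, rfl⟩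
  have le2 : finrank k ↥(range (p2.comp (M.comp i2))) ≤ finrank k ↥(range q) :=
    Submodule.finrank_mono hle2
  omega

lemma rank_ge_card (M : X →ₗ[k] Y) {Z : Type*} [AddCommGroup Z] [Module k Z]
    [FiniteDimensional k Z] [FiniteDimensional k X]
    (i : Z →ₗ[k] X) (p : Y →ₗ[k] Z)
    (hinj : Function.Injective (p.comp (M.comp i))) :
    finrank k Z ≤ finrank k ↥(range M) := by
  have h1 : finrank k ↥(range (p.comp (M.comp i))) = finrank k Z :=
    LinearMap.finrank_range_of_inj hinj
  have h2 : finrank k ↥(range (p.comp (M.comp i)))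
      ≤ finrank k ↥(range (M.comp i)) := rank_comp_le_right' (M.comp i) p
  have h3 : finrank k ↥(range (M.comp i)) ≤ finrank k ↥(range M) := by
    exact Submodule.finrank_mono (range_comp_le_range i M)
  omega

end LinAlg

section Ext0
variable (k : Type*) [Field k] {A B : Type*} [Fintype A]

noncomputable def ext0 (f : A → B) : (A → k) →ₗ[k] (B → k) where
  toFun x := fun b => ∑ a, if f a = b then x a else 0
  map_add' x y := by
    funext b
    show (∑ a, if f a = b then (x + y) a else 0)
      = (∑ a, if f a = b then x a else 0) + (∑ a, if f a = b then y a else 0)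
    rw [← Finset.sum_add_distrib]
    apply Finset.sum_congr rfl
    intro a _
    by_cases h : f a = b <;> simp [h]
  map_smul' c x := by
    funext b
    show (∑ a, if f a = b then (c • x) a else 0)
      = c * (∑ a, if f a = b then x a else 0)
    rw [Finset.mul_sum]
    apply Finset.sum_congr rfl
    intro a _
    by_cases h : f a = b <;> simp [h]

end Ext0
end SCproof

namespace SCproof
open Module LinearMap

section KeyDeg
variable {V : Type*} [Fintype V] (k : Type*) [Field k]

abbrev FS (K : SComplex V) (j : ℕ) := {s : Finset V // s ∈ K.faces ∧ s.card = j}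

lemma ext0_apply {A B : Type*} [Fintype A] (f : A → B) (x : A → k) (b : B) :
    ext0 k f x b = ∑ a, if f a = b then x a else 0 := rfl

lemma bdry_ext0_apply (K : SComplex V) (j : ℕ) {A : Type*} [Fintype A]
    (f : A → FS K (j+1)) (x : A → k) (t : FS K j) :
    bdry k K j (ext0 k f x) t = ∑ a, x a * ent k (f a).1 t.1 := by
  rw [bdry_apply]
  simp_rw [ext0_apply, Finset.sum_mul, ite_mul, zero_mul]
  rw [Finset.sum_comm]
  apply Finset.sum_congr rfl
  intro a _
  rw [Finset.sum_ite_eq]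
  simp

noncomputable def diagMap {A : Type*} (d : A → k) : (A → k) →ₗ[k] (A → k) where
  toFun x := fun t => d t * x t
  map_add' := by intro x y; funext t; show d t * (x t + y t) = d t * x t + d t * y t; ring
  map_smul' := by
    intro c x; funext t
    show d t * (c * x t) = c * (d t * x t)
    ring

variable (K : SComplex V) (u : V)

lemma mem_delete_faces {s : Finset V} : s ∈ (delete K u).faces ↔ s ∈ K.faces ∧ u ∉ s :=
  Iff.rfl

lemma mem_link_faces (hu : {u} ∈ K.faces) {t : Finset V} :
    t ∈ (link K u).faces ↔ u ∉ t ∧ insert u t ∈ K.faces := by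
  constructor
  · rintro (h | h)
    · exact h
    · have ht : t = ∅ := h
      subst ht
      exact ⟨Finset.notMem_empty u, by simpa using hu⟩
  · exact fun h => Or.inl h

noncomputable def delIncl (m : ℕ) : FS (delete K u) m → FS K m := fun a => ⟨a.1, a.2.1.1, a.2.2⟩

noncomputable def linkIncl (hu : {u} ∈ K.faces) (m : ℕ) : FS (link K u) m → FS K (m+1) := fun a =>
  ⟨insert u a.1, ((mem_link_faces K u hu).mp a.2.1).2, by
    rw [Finset.card_insert_of_notMem ((mem_link_faces K u hu).mp a.2.1).1, a.2.2]⟩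

lemma c1 (m : ℕ) :
    (funLeft k k (delIncl K u m)).comp
      ((bdry k K m).comp (ext0 k (delIncl K u (m+1)))) = bdry k (delete K u) m := by
  apply LinearMap.ext
  intro x
  funext t
  show bdry k K m (ext0 k (delIncl K u (m+1)) x) (delIncl K u m t)
    = bdry k (delete K u) m x t
  rw [bdry_ext0_apply, bdry_apply]
  rfl

lemma rj_del_le (m : ℕ) : rj k (delete K u) m ≤ rj k K m := by
  have h := c1 k K u m
  have h1 : rj k (delete K u) m
      = finrank k ↥(range ((funLeft k k (delIncl K u m)).comp
          ((bdry k K m).comp (ext0 k (delIncl K u (m+1)))))) := by rw [h]; rfl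
  rw [h1]
  calc finrank k ↥(range ((funLeft k k (delIncl K u m)).comp
          ((bdry k K m).comp (ext0 k (delIncl K u (m+1))))))
      ≤ finrank k ↥(range ((bdry k K m).comp (ext0 k (delIncl K u (m+1))))) :=
        rank_comp_le_right' _ _
    _ ≤ finrank k ↥(range (bdry k K m)) := rank_comp_le_left' _ _

lemma rj_key (hu : {u} ∈ K.faces) (m : ℕ) :
    rj k (delete K u) (m+1) + rj k (link K u) m ≤ rj k K (m+1) := by
  classical
  set M := bdry k K (m+1) with hM
  set i1 := ext0 k (delIncl K u (m+2)) with hi1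
  set i2 := ext0 k (linkIncl K u hu (m+1)) with hi2
  set p2 : Chains k K (m+1) →ₗ[k] (FS (link K u) m → k) :=
    funLeft k k (linkIncl K u hu m) with hp2
  -- p2 ∘ M ∘ i1 = 0
  have hzero : p2.comp (M.comp i1) = 0 := by
    apply LinearMap.ext
    intro x
    funext t
    show bdry k K (m+1) (ext0 k (delIncl K u (m+2)) x) (linkIncl K u hu m t) = 0
    rw [bdry_ext0_apply]
    apply Finset.sum_eq_zero
    intro a _
    have hsub : ¬ (linkIncl K u hu m t).1 ⊆ (delIncl K u (m+2) a).1 := by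
      intro hc
      exact a.2.1.2 (hc (Finset.mem_insert_self u t.1))
    rw [ent_of_not_subset k hsub, mul_zero]
  -- del part
  have hdel : rj k (delete K u) (m+1) ≤ finrank k ↥(range (M.comp i1)) := by
    have h := c1 k K u (m+1)
    have h1 : rj k (delete K u) (m+1)
        = finrank k ↥(range ((funLeft k k (delIncl K u (m+1))).comp (M.comp i1))) := by
      rw [hM, hi1, h]; rfl
    rw [h1]
    exact rank_comp_le_right' _ _
  -- link part
  obtain ⟨ε, hsq, hsign⟩ := ent_insert_sign (V := V) k
  let D1 : (FS (link K u) m → k) →ₗ[k] (FS (link K u) m → k) :=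
    diagMap k (fun t => ε u t.1)
  let D2 : (FS (link K u) (m+1) → k) →ₗ[k] (FS (link K u) (m+1) → k) :=
    diagMap k (fun t => ε u t.1)
  have hlinkrel : D1.comp ((p2.comp (M.comp i2)).comp D2) = -(bdry k (link K u) m) := by
    apply LinearMap.ext
    intro x
    funext t
    show ε u t.1 * (bdry k K (m+1) (ext0 k (linkIncl K u hu (m+1)) (D2 x))
      (linkIncl K u hu m t)) = (-(bdry k (link K u) m)) x t
    have hrhs : (-(bdry k (link K u) m)) x t
        = ∑ a : FS (link K u) (m+1), -(x a * ent k a.1 t.1) := by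
      show -(bdry k (link K u) m x t) = _
      rw [bdry_apply, ← Finset.sum_neg_distrib]
    rw [bdry_ext0_apply, Finset.mul_sum, hrhs]
    apply Finset.sum_congr rfl
    intro a _
    show ε u t.1 * ((ε u a.1 * x a) * ent k (insert u a.1) (insert u t.1))
      = -(x a * ent k a.1 t.1)
    have ha := (mem_link_faces K u hu).mp a.2.1
    have ht := (mem_link_faces K u hu).mp t.2.1
    have hc : t.1.card + 1 = a.1.card := by rw [a.2.2, t.2.2]
    rw [hsign u a.1 t.1 ha.1 ht.1 hc]
    have h1 := hsq u a.1
    have h2 := hsq u t.1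
    linear_combination (-(x a * ent k a.1 t.1) * (ε u t.1 * ε u t.1)) * h1
      + (-(x a * ent k a.1 t.1)) * h2
  have hlink : rj k (link K u) m ≤ finrank k ↥(range (p2.comp (M.comp i2))) := by
    have e1 : rj k (link K u) m = finrank k ↥(range (-(bdry k (link K u) m))) := by
      rw [LinearMap.range_neg]; rfl
    rw [e1, ← hlinkrel]
    calc finrank k ↥(range (D1.comp ((p2.comp (M.comp i2)).comp D2)))
        ≤ finrank k ↥(range ((p2.comp (M.comp i2)).comp D2)) := rank_comp_le_right' _ _
      _ ≤ finrank k ↥(range (p2.comp (M.comp i2))) := rank_comp_le_left' _ _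
  have hsplit := rank_split M i1 i2 p2 hzero
  have hfin : rj k K (m+1) = finrank k ↥(range M) := rfl
  omega
end KeyDeg
end SCproof

namespace SCproof
open Module LinearMap

section Split
variable {V : Type*} [Fintype V] (k : Type*) [Field k]
variable (K : SComplex V) (u : V)

noncomputable def faceSplitEquiv (hu : {u} ∈ K.faces) (m : ℕ) :
    FS K (m+1) ≃ FS (delete K u) (m+1) ⊕ FS (link K u) m where
  toFun s :=
    if h : u ∈ s.1 then
      Sum.inr ⟨s.1.erase u, (mem_link_faces K u hu).mpr
        ⟨Finset.notMem_erase u s.1, by rw [Finset.insert_erase h]; exact s.2.1⟩, by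
          rw [Finset.card_erase_of_mem h, s.2.2]; omega⟩
    else Sum.inl ⟨s.1, ⟨s.2.1, h⟩, s.2.2⟩
  invFun x := Sum.elim (delIncl K u (m+1)) (linkIncl K u hu m) x
  left_inv s := by
    dsimp only
    by_cases h : u ∈ s.1
    · rw [dif_pos h]
      apply Subtype.ext
      show insert u (s.1.erase u) = s.1
      exact Finset.insert_erase h
    · rw [dif_neg h]
      rfl
  right_inv x := by
    rcases x with d | l
    · have h : u ∉ (delIncl K u (m+1) d).1 := d.2.1.2
      dsimp only [Sum.elim_inl]
      rw [dif_neg h]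
      congr 1
    · have h : u ∈ (linkIncl K u hu m l).1 := Finset.mem_insert_self u l.1
      dsimp only [Sum.elim_inr]
      rw [dif_pos h]
      congr 1
      apply Subtype.ext
      show (insert u l.1).erase u = l.1
      exact Finset.erase_insert ((mem_link_faces K u hu).mp l.2.1).1
  
lemma Fj_split (hu : {u} ∈ K.faces) (m : ℕ) :
    Fj K (m+1) = Fj (delete K u) (m+1) + Fj (link K u) m := by
  rw [Fj, Fj, Fj, ← Fintype.card_sum]
  exact Fintype.card_congr (faceSplitEquiv K u hu m)

lemma Fj_zero_split : Fj K 0 = Fj (delete K u) 0 := by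
  apply Fintype.card_congr
  apply Equiv.subtypeEquivRight
  intro s
  constructor
  · rintro ⟨h1, h2⟩
    have : s = ∅ := Finset.card_eq_zero.mp h2
    subst this
    exact ⟨⟨h1, Finset.notMem_empty u⟩, h2⟩
  · rintro ⟨h1, h2⟩
    exact ⟨h1.1, h2⟩

lemma Fj_link_high : Fj (link K u) (Fintype.card V) = 0 := by
  rw [Fj]
  rw [Fintype.card_eq_zero_iff]
  refine ⟨fun t => ?_⟩
  have hpos : 0 < Fintype.card V := Fintype.card_pos_iff.mpr ⟨u⟩
  have huniv : t.1 = Finset.univ := (Finset.card_eq_iff_eq_univ _).mp t.2.2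
  rcases t.2.1 with h | h
  · exact h.1 (huniv ▸ Finset.mem_univ u)
  · have : t.1 = ∅ := h
    rw [this] at huniv
    have := Finset.card_univ (α := V)
    rw [← huniv] at this
    simp at this
    omega

lemma Ftot_split (hu : {u} ∈ K.faces) :
    Ftot K = Ftot (delete K u) + Ftot (link K u) := by
  set n := Fintype.card V with hn
  have h1 : Ftot K = Fj K 0 + ∑ j ∈ Finset.range n, Fj K (j+1) := by
    rw [Ftot, Finset.sum_range_succ']; ring
  have h2 : Ftot (delete K u) = Fj (delete K u) 0
      + ∑ j ∈ Finset.range n, Fj (delete K u) (j+1) := by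
    rw [Ftot, Finset.sum_range_succ']; ring
  have h3 : Ftot (link K u) = ∑ j ∈ Finset.range n, Fj (link K u) j
      + Fj (link K u) n := by
    rw [Ftot, Finset.sum_range_succ]
  have h4 : ∑ j ∈ Finset.range n, Fj K (j+1)
      = ∑ j ∈ Finset.range n, Fj (delete K u) (j+1)
        + ∑ j ∈ Finset.range n, Fj (link K u) j := by
    rw [← Finset.sum_add_distrib]
    exact Finset.sum_congr rfl (fun j _ => Fj_split K u hu j)
  have h5 := Fj_link_high K u
  rw [← hn] at h5
  have h6 := Fj_zero_split K u
  omega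

lemma Rtot_split (hu : {u} ∈ K.faces) :
    Rtot k (delete K u) + Rtot k (link K u) ≤ Rtot k K := by
  set n := Fintype.card V with hn
  have h1 : Rtot k K = rj k K 0 + ∑ j ∈ Finset.range n, rj k K (j+1) := by
    rw [Rtot, Finset.sum_range_succ']; ring
  have h2 : Rtot k (delete K u) = rj k (delete K u) 0
      + ∑ j ∈ Finset.range n, rj k (delete K u) (j+1) := by
    rw [Rtot, Finset.sum_range_succ']; ring
  have h3 : Rtot k (link K u) = ∑ j ∈ Finset.range n, rj k (link K u) j
      + rj k (link K u) n := by
    rw [Rtot, Finset.sum_range_succ]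
  have h4 : ∑ j ∈ Finset.range n, (rj k (delete K u) (j+1) + rj k (link K u) j)
      ≤ ∑ j ∈ Finset.range n, rj k K (j+1) :=
    Finset.sum_le_sum (fun j _ => rj_key k K u hu j)
  rw [Finset.sum_add_distrib] at h4
  have h5 : rj k (link K u) n = 0 := rj_high k _ le_rfl
  have h6 := rj_del_le k K u 0
  omega

lemma key_ineq (hu : {u} ∈ K.faces) :
    totalBetti k K ≤ totalBetti k (delete K u) + totalBetti k (link K u) := by
  have e1 := total_eq k K
  have e2 := total_eq k (delete K u)
  have e3 := total_eq k (link K u)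
  have e4 := Ftot_split K u hu
  have e5 := Rtot_split k K u hu
  omega

end Split
end SCproof

namespace SCproof
open Module LinearMap

section Cone
variable {V : Type*} [Fintype V] (k : Type*) [Field k]
variable (K : SComplex V) (v : V)

noncomputable def mj (j : ℕ) : ℕ :=
  Fintype.card {s : Finset V // (s ∈ K.faces ∧ s.card = j) ∧ v ∈ s}

lemma mj_zero : mj K v 0 = 0 := by
  rw [mj, Fintype.card_eq_zero_iff]
  refine ⟨fun s => ?_⟩
  have : s.1 = ∅ := Finset.card_eq_zero.mp s.2.1.2
  exact Finset.notMem_empty v (this ▸ s.2.2)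

lemma mj_high : mj K v (Fintype.card V + 1) = 0 := by
  rw [mj, Fintype.card_eq_zero_iff]
  refine ⟨fun s => ?_⟩
  have h1 := Finset.card_le_univ s.1
  have h2 : s.1.card = Fintype.card V + 1 := s.2.1.2
  have h3 : (Finset.univ : Finset V).card = Fintype.card V := Finset.card_univ
  omega

lemma Fj_cone (hv : ∀ s ∈ K.faces, insert v s ∈ K.faces) (j : ℕ) :
    Fj K j = mj K v j + mj K v (j+1) := by
  have h1 : Fj K j = Fintype.card {x : FS K j // v ∈ x.1}
      + Fintype.card {x : FS K j // v ∉ x.1} := by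
    rw [Fj, ← Fintype.card_sum]
    exact Fintype.card_congr (Equiv.sumCompl (fun x : FS K j => v ∈ x.1)).symm
  have h2 : Fintype.card {x : FS K j // v ∈ x.1} = mj K v j :=
    Fintype.card_congr (Equiv.subtypeSubtypeEquivSubtypeInter
      (fun s : Finset V => s ∈ K.faces ∧ s.card = j) (fun s => v ∈ s))
  have h3 : Fintype.card {x : FS K j // v ∉ x.1} = mj K v (j+1) := by
    apply Fintype.card_congr
    refine (Equiv.subtypeSubtypeEquivSubtypeInter
      (fun s : Finset V => s ∈ K.faces ∧ s.card = j) (fun s => v ∉ s)).trans ?_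
    refine ⟨fun s => ⟨insert v s.1, ⟨⟨hv s.1 s.2.1.1, by
        rw [Finset.card_insert_of_notMem s.2.2, s.2.1.2]⟩, Finset.mem_insert_self v s.1⟩⟩,
      fun t => ⟨t.1.erase v, ⟨⟨K.down_closed t.2.1.1 (Finset.erase_subset v t.1), by
        rw [Finset.card_erase_of_mem t.2.2, t.2.1.2]; omega⟩, Finset.notMem_erase v t.1⟩⟩,
      fun s => ?_, fun t => ?_⟩
    · apply Subtype.ext
      show (insert v s.1).erase v = s.1
      exact Finset.erase_insert s.2.2
    · apply Subtype.ext
      show insert v (t.1.erase v) = t.1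
      exact Finset.insert_erase t.2.2
  omega

lemma rj_cone (j : ℕ) : mj K v (j+1) ≤ rj k K j := by
  classical
  set A := {s : Finset V // (s ∈ K.faces ∧ s.card = j + 1) ∧ v ∈ s} with hA
  set M := bdry k K j with hM
  set i : (A → k) →ₗ[k] Chains k K (j+1) := ext0 k (fun a : A => (⟨a.1, a.2.1⟩ : FS K (j+1))) with hi
  set p : Chains k K j →ₗ[k] (A → k) :=
    funLeft k k (fun a : A => (⟨a.1.erase v, K.down_closed a.2.1.1 (Finset.erase_subset v a.1), by
      rw [Finset.card_erase_of_mem a.2.2, a.2.1.2]; omega⟩ : FS K j)) with hp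
  have happ : ∀ (x : A → k) (a : A),
      (p.comp (M.comp i)) x a = x a * ent k a.1 (a.1.erase v) := by
    intro x a
    show bdry k K j (ext0 k _ x) _ = _
    rw [bdry_ext0_apply]
    apply Finset.sum_eq_single a
    · intro a' _ hne
      have hz : ¬ a.1.erase v ⊆ a'.1 := by
        intro hc
        have hsub : a.1 ⊆ a'.1 := by
          intro x hx
          by_cases hxv : x = v
          · exact hxv ▸ a'.2.2
          · exact hc (Finset.mem_erase.mpr ⟨hxv, hx⟩)
        have : a.1 = a'.1 := Finset.eq_of_subset_of_card_le hsub
          (by rw [a.2.1.2, a'.2.1.2])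
        exact hne (Subtype.ext this.symm)
      rw [ent_of_not_subset k hz, mul_zero]
    · intro h
      exact absurd (Finset.mem_univ a) h
  have hinj : Function.Injective (p.comp (M.comp i)) := by
    intro x y hxy
    funext a
    have h1 := happ x a
    have h2 := happ y a
    rw [hxy] at h1
    have hd : ent k a.1 (a.1.erase v) ≠ 0 := ent_erase_ne_zero k a.2.2
    have := h1.symm.trans h2
    exact mul_right_cancel₀ hd this
  have := rank_ge_card M i p hinj
  rw [Module.finrank_fintype_fun_eq_card] at this
  exact this

lemma cone_totalBetti (hv : ∀ s ∈ K.faces, insert v s ∈ K.faces) :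
    totalBetti k K = 0 := by
  set n := Fintype.card V with hn
  have e1 := total_eq k K
  have h1 : Ftot K = ∑ j ∈ Finset.range (n+1), (mj K v j + mj K v (j+1)) :=
    Finset.sum_congr rfl (fun j _ => Fj_cone K v hv j)
  rw [Finset.sum_add_distrib] at h1
  have h2 : ∑ j ∈ Finset.range (n+1), mj K v j
      = mj K v 0 + ∑ j ∈ Finset.range n, mj K v (j+1) := by
    rw [Finset.sum_range_succ']; ring
  have h3 : ∑ j ∈ Finset.range (n+1), mj K v (j+1)
      = ∑ j ∈ Finset.range n, mj K v (j+1) + mj K v (n+1) := by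
    rw [Finset.sum_range_succ]
  have h4 : ∑ j ∈ Finset.range (n+1), mj K v (j+1)
      ≤ ∑ j ∈ Finset.range (n+1), rj k K j :=
    Finset.sum_le_sum (fun j _ => rj_cone k K v j)
  have h5 : mj K v 0 = 0 := mj_zero K v
  have h6 : mj K v (n+1) = 0 := by rw [hn]; exact mj_high K v
  have h7 : Rtot k K = ∑ j ∈ Finset.range (n+1), rj k K j := rfl
  omega

end Cone
end SCproof

namespace SCproof
open Module LinearMap

section Graph
variable {V : Type*} [Fintype V] (k : Type*) [Field k]

lemma scomplex_ext {K L : SComplex V} (h : K.faces = L.faces) : K = L := by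
  cases K; cases L; simp_all

variable (G : SimpleGraph V)

noncomputable def restr (S : Finset V) : SComplex V where
  faces := {s | s ⊆ S ∧ ∀ ⦃a⦄, a ∈ s → ∀ ⦃b⦄, b ∈ s → ¬ G.Adj a b}
  empty_mem := ⟨Finset.empty_subset S, by intro a ha; exact absurd ha (Finset.notMem_empty a)⟩
  down_closed := fun s t hs hts =>
    ⟨hts.trans hs.1, fun a ha b hb => hs.2 (hts ha) (hts hb)⟩

lemma mem_restr {S s : Finset V} :
    s ∈ (restr G S).faces ↔ s ⊆ S ∧ ∀ ⦃a⦄, a ∈ s → ∀ ⦃b⦄, b ∈ s → ¬ G.Adj a b := Iff.rfl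

lemma restr_univ : restr G Finset.univ = indComplex G := by
  apply scomplex_ext
  ext s
  simp only [mem_restr, indComplex]
  constructor
  · rintro ⟨_, h⟩; exact h
  · intro h; exact ⟨Finset.subset_univ s, h⟩

lemma delete_restr (S : Finset V) (u : V) :
    delete (restr G S) u = restr G (S.erase u) := by
  apply scomplex_ext
  ext s
  show (s ∈ (restr G S).faces ∧ u ∉ s) ↔ _
  rw [mem_restr, mem_restr]
  constructor
  · rintro ⟨⟨h1, h2⟩, h3⟩
    exact ⟨Finset.subset_erase.mpr ⟨h1, h3⟩, h2⟩
  · rintro ⟨h1, h2⟩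
    have := Finset.subset_erase.mp h1
    exact ⟨⟨this.1, h2⟩, this.2⟩

lemma singleton_mem_restr {S : Finset V} {u : V} (hu : u ∈ S) :
    {u} ∈ (restr G S).faces := by
  rw [mem_restr]
  refine ⟨Finset.singleton_subset_iff.mpr hu, ?_⟩
  intro a ha b hb
  rw [Finset.mem_singleton] at ha hb
  subst ha; subst hb
  exact G.loopless.irrefl _

lemma link_restr (S : Finset V) (u : V) (hu : u ∈ S) :
    link (restr G S) u = restr G ((S.erase u).filter (fun x => ¬ G.Adj u x)) := by
  apply scomplex_ext
  ext t
  rw [mem_restr]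
  constructor
  · rintro (⟨h1, h2⟩ | h)
    · rw [mem_restr] at h2
      refine ⟨?_, ?_⟩
      · intro x hx
        rw [Finset.mem_filter, Finset.mem_erase]
        refine ⟨⟨fun hxu => h1 (hxu ▸ hx), h2.1 (Finset.mem_insert_of_mem hx)⟩, ?_⟩
        exact h2.2 (Finset.mem_insert_self u t) (Finset.mem_insert_of_mem hx)
      · intro a ha b hb
        exact h2.2 (Finset.mem_insert_of_mem ha) (Finset.mem_insert_of_mem hb)
    · have ht : t = ∅ := h
      subst ht
      exact ⟨Finset.empty_subset _, fun a ha => absurd ha (Finset.notMem_empty a)⟩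
  · rintro ⟨h1, h2⟩
    left
    have hut : u ∉ t := by
      intro hc
      have := h1 hc
      rw [Finset.mem_filter, Finset.mem_erase] at this
      exact this.1.1 rfl
    refine ⟨hut, ?_⟩
    rw [mem_restr]
    constructor
    · intro x hx
      rcases Finset.mem_insert.mp hx with rfl | hx
      · exact hu
      · have := h1 hx
        rw [Finset.mem_filter, Finset.mem_erase] at this
        exact this.1.2
    · intro a ha b hb
      rcases Finset.mem_insert.mp ha with rfl | ha'
      · rcases Finset.mem_insert.mp hb with rfl | hb'
        · exact G.loopless.irrefl _
        · have := h1 hb'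
          rw [Finset.mem_filter] at this
          exact this.2
      · rcases Finset.mem_insert.mp hb with rfl | hb'
        · have := h1 ha'
          rw [Finset.mem_filter] at this
          exact fun hadj => this.2 hadj.symm
        · exact h2 ha' hb'

lemma restr_cone {S : Finset V} {v : V} (hv : v ∈ S) (hiso : ∀ w ∈ S, ¬ G.Adj v w) :
    ∀ s ∈ (restr G S).faces, insert v s ∈ (restr G S).faces := by
  intro s hs
  rw [mem_restr] at hs ⊢
  refine ⟨Finset.insert_subset hv hs.1, ?_⟩
  intro a ha b hb
  rcases Finset.mem_insert.mp ha with rfl | ha'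
  · rcases Finset.mem_insert.mp hb with rfl | hb'
    · exact G.loopless.irrefl _
    · exact hiso b (hs.1 hb')
  · rcases Finset.mem_insert.mp hb with rfl | hb'
    · exact fun hadj => hiso a (hs.1 ha') hadj.symm
    · exact hs.2 ha' hb'

lemma totalBetti_le_Ftot (K : SComplex V) : totalBetti k K ≤ Ftot K := by
  have := total_eq k K
  omega

lemma Ftot_restr_empty : Ftot (restr G ∅) = 1 := by
  have h0 : Fj (restr G ∅) 0 = 1 := by
    rw [Fj, Fintype.card_eq_one_iff]
    refine ⟨⟨∅, (restr G ∅).empty_mem, Finset.card_empty⟩, fun y => ?_⟩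
    apply Subtype.ext
    show y.1 = ∅
    exact Finset.card_eq_zero.mp y.2.2
  have hs : ∀ j, Fj (restr G ∅) (j+1) = 0 := by
    intro j
    rw [Fj, Fintype.card_eq_zero_iff]
    refine ⟨fun s => ?_⟩
    have h1 : s.1 ⊆ ∅ := s.2.1.1
    have h2 := s.2.2
    rw [Finset.subset_empty.mp h1] at h2
    simp at h2
  rw [Ftot, Finset.sum_range_succ']
  simp [hs, h0]

end Graph
end SCproof

namespace SCproof

lemma nat_pow5 (d : ℕ) : d ^ 5 ≤ 4 ^ (d + 1) := by
  induction d with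
  | zero => norm_num
  | succ d ih =>
      by_cases hd : d ≤ 4
      · interval_cases d <;> norm_num
      · push_neg at hd
        have h5 : 5 ≤ d := hd
        have key : (d + 1) ^ 5 ≤ 4 * d ^ 5 := by
          have h6 : 5 * (d + 1) ≤ 6 * d := by omega
          have h7 : (5 * (d + 1)) ^ 5 ≤ (6 * d) ^ 5 := Nat.pow_le_pow_left h6 5
          rw [mul_pow, mul_pow] at h7
          norm_num at h7
          omega
        calc (d + 1) ^ 5 ≤ 4 * d ^ 5 := key
          _ ≤ 4 * 4 ^ (d + 1) := by omega
          _ = 4 ^ (d + 2) := by ring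

noncomputable def θ : ℝ := (4 : ℝ) ^ ((1 : ℝ) / 5)

lemma theta_pos : 0 < θ := Real.rpow_pos_of_pos (by norm_num) _

lemma theta_pow5 : θ ^ (5 : ℕ) = 4 := by
  rw [θ, ← Real.rpow_natCast ((4:ℝ) ^ ((1:ℝ)/5)) 5, ← Real.rpow_mul (by norm_num : (0:ℝ) ≤ 4)]
  norm_num

lemma theta_ge_one : 1 ≤ θ := by
  by_contra h
  push_neg at h
  have h1 : θ ^ (5 : ℕ) < 1 := pow_lt_one₀ (le_of_lt theta_pos) h (by norm_num)
  rw [theta_pow5] at h1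
  norm_num at h1

lemma d_le_theta_pow (d : ℕ) : (d : ℝ) ≤ θ ^ (d + 1) := by
  have h1 : ((d : ℝ)) ^ (5 : ℕ) ≤ (θ ^ (d + 1)) ^ (5 : ℕ) := by
    have h2 : ((d : ℝ)) ^ (5:ℕ) ≤ ((4 : ℝ)) ^ (d + 1) := by
      have := nat_pow5 d
      have hc : ((d ^ 5 : ℕ) : ℝ) ≤ ((4 ^ (d+1) : ℕ) : ℝ) := Nat.cast_le.mpr this
      push_cast at hc
      exact hc
    calc ((d : ℝ)) ^ (5:ℕ) ≤ (4 : ℝ) ^ (d + 1) := h2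
      _ = (θ ^ (5:ℕ)) ^ (d+1) := by rw [theta_pow5]
      _ = (θ ^ (d + 1)) ^ (5:ℕ) := by rw [← pow_mul, ← pow_mul, Nat.mul_comm]
  exact le_of_pow_le_pow_left₀ (by norm_num) (pow_nonneg (le_of_lt theta_pos) _) h1

lemma theta_pow_mono {a b : ℕ} (h : a ≤ b) : θ ^ a ≤ θ ^ b :=
  pow_le_pow_right₀ theta_ge_one h

end SCproof

namespace SCproof

variable {V : Type*} [Fintype V] (k : Type*) [Field k] (G : SimpleGraph V)

lemma base_empty : (totalBetti k (restr G ∅) : ℝ) ≤ θ ^ (∅ : Finset V).card := by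
  have h1 := totalBetti_le_Ftot k (restr G ∅)
  rw [Ftot_restr_empty] at h1
  calc (totalBetti k (restr G ∅) : ℝ) ≤ 1 := by exact_mod_cast h1
    _ ≤ θ ^ (∅ : Finset V).card := by simp

lemma main_ind : ∀ (N : ℕ) (S : Finset V), S.card ≤ N →
    (totalBetti k (restr G S) : ℝ) ≤ θ ^ S.card := by
  intro N
  induction N with
  | zero =>
      intro S hS
      have hSe : S = ∅ := Finset.card_eq_zero.mp (Nat.le_zero.mp hS)
      subst hSe
      exact base_empty k G
  | succ N IH =>
      intro S hS
      by_cases hSe : S = ∅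
      · subst hSe
        exact base_empty k G
      by_cases hiso : ∃ v ∈ S, ∀ w ∈ S, ¬ G.Adj v w
      · obtain ⟨v, hv, hvw⟩ := hiso
        rw [cone_totalBetti k (restr G S) v (restr_cone G hv hvw)]
        have : (0:ℝ) ≤ θ ^ S.card := pow_nonneg (le_of_lt theta_pos) _
        simpa using this
      push_neg at hiso
      obtain ⟨v, hvS, hmin⟩ := Finset.exists_min_image S
        (fun x => (S.filter (G.Adj x)).card) (Finset.nonempty_iff_ne_empty.mpr hSe)
      set Nv := S.filter (G.Adj v) with hNv
      set d := Nv.card with hd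
      have hd1 : 1 ≤ d := by
        obtain ⟨w, hw, hadj⟩ := hiso v hvS
        exact Finset.card_pos.mpr ⟨w, Finset.mem_filter.mpr ⟨hw, hadj⟩⟩
      have hvNv : v ∉ Nv := fun h => G.loopless.irrefl v (Finset.mem_filter.mp h).2
      have hNvS : Nv ⊆ S := Finset.filter_subset _ _
      have hdS : d + 1 ≤ S.card := by
        have h1 : Nv ⊆ S.erase v := by
          intro x hx
          refine Finset.mem_erase.mpr ⟨?_, hNvS hx⟩
          intro hc
          exact G.loopless.irrefl v (hc ▸ (Finset.mem_filter.mp hx).2)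
        have h2 := Finset.card_le_card h1
        have h3 := Finset.card_erase_add_one hvS
        omega
      have inner : ∀ (m : ℕ) (A : Finset V), A.card ≤ m → A ⊆ Nv →
          (totalBetti k (restr G (S \ (Nv \ A))) : ℝ)
            ≤ (A.card : ℝ) * θ ^ (S.card - d - 1) := by
        intro m
        induction m with
        | zero =>
            intro A hA0 hAN
            have hAe : A = ∅ := Finset.card_eq_zero.mp (Nat.le_zero.mp hA0)
            subst hAe
            rw [Finset.sdiff_empty]
            have hvmem : v ∈ S \ Nv := Finset.mem_sdiff.mpr ⟨hvS, hvNv⟩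
            have hiso' : ∀ w ∈ S \ Nv, ¬ G.Adj v w := fun w hw hadj =>
              (Finset.mem_sdiff.mp hw).2
                (Finset.mem_filter.mpr ⟨(Finset.mem_sdiff.mp hw).1, hadj⟩)
            rw [cone_totalBetti k _ v (restr_cone G hvmem hiso')]
            simp
        | succ m IHm =>
            intro A hAm hAN
            by_cases hAe : A = ∅
            · exact IHm A (by simp [hAe]) hAN
            obtain ⟨u, hu⟩ := Finset.nonempty_iff_ne_empty.mpr hAe
            have huNv : u ∈ Nv := hAN hu
            have huS : u ∈ S := hNvS huNv
            set SA := S \ (Nv \ A) with hSA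
            have huSA : u ∈ SA := Finset.mem_sdiff.mpr
              ⟨huS, fun hc => (Finset.mem_sdiff.mp hc).2 hu⟩
            have hk := key_ineq k (restr G SA) u (singleton_mem_restr G huSA)
            rw [delete_restr, link_restr G SA u huSA] at hk
            set T := (SA.erase u).filter (fun x => ¬ G.Adj u x) with hT
            have hSAe : SA.erase u = S \ (Nv \ A.erase u) := by
              ext x
              simp only [Finset.mem_erase, Finset.mem_sdiff, hSA]
              constructor
              · rintro ⟨hxu, hxS, hxN⟩
                refine ⟨hxS, ?_⟩
                rintro ⟨h1, h2⟩
                exact hxN ⟨h1, fun hxA => h2 ⟨hxu, hxA⟩⟩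
              · rintro ⟨hxS, hxN⟩
                have hxu : x ≠ u := by
                  rintro rfl
                  exact hxN ⟨huNv, fun hc => hc.1 rfl⟩
                refine ⟨hxu, hxS, ?_⟩
                rintro ⟨h1, h2⟩
                exact hxN ⟨h1, fun hc => h2 hc.2⟩
            -- cardinality facts
            have a1 : (Nv \ A).card + A.card = d := Finset.card_sdiff_add_card_eq_card hAN
            have a2 : SA.card + (Nv \ A).card = S.card :=
              Finset.card_sdiff_add_card_eq_card (Finset.sdiff_subset.trans hNvS)
            have a3 : (SA.erase u).card + 1 = SA.card := Finset.card_erase_add_one huSA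
            have a4 : ((SA.erase u).filter (fun x => G.Adj u x)).card + T.card
                = (SA.erase u).card := by
              rw [hT]
              exact Finset.card_filter_add_card_filter_not _
            have a5 : d ≤ (S.filter (G.Adj u)).card := hmin u huS
            have a6 : (S.filter (G.Adj u)).card
                ≤ ((SA.erase u).filter (fun x => G.Adj u x)).card + (Nv \ A).card := by
              have hsub : S.filter (G.Adj u)
                  ⊆ ((SA.erase u).filter (fun x => G.Adj u x)) ∪ (Nv \ A) := by
                intro x hx
                have hx' := Finset.mem_filter.mp hx
                by_cases hxN : x ∈ Nv \ A
                · exact Finset.mem_union_right _ hxN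
                · refine Finset.mem_union_left _ ?_
                  refine Finset.mem_filter.mpr ⟨?_, hx'.2⟩
                  refine Finset.mem_erase.mpr ⟨?_, Finset.mem_sdiff.mpr ⟨hx'.1, hxN⟩⟩
                  rintro rfl
                  exact G.loopless.irrefl x hx'.2
              calc (S.filter (G.Adj u)).card
                  ≤ (((SA.erase u).filter (fun x => G.Adj u x)) ∪ (Nv \ A)).card :=
                    Finset.card_le_card hsub
                _ ≤ _ := Finset.card_union_le _ _
            have hTcard : T.card + d + 1 ≤ S.card := by omega
            have hAcard1 : 1 ≤ A.card := Finset.card_pos.mpr ⟨u, hu⟩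
            -- term 1
            have hterm1 : (totalBetti k (restr G (SA.erase u)) : ℝ)
                ≤ ((A.card - 1 : ℕ) : ℝ) * θ ^ (S.card - d - 1) := by
              rw [hSAe]
              have hc1 : (A.erase u).card ≤ m := by
                have := Finset.card_erase_add_one hu
                omega
              have := IHm (A.erase u) hc1 ((Finset.erase_subset u A).trans hAN)
              rw [Finset.card_erase_of_mem hu] at this
              exact this
            -- term 2
            have hterm2 : (totalBetti k (restr G T) : ℝ) ≤ θ ^ (S.card - d - 1) := by
              have hTN : T.card ≤ N := by omega
              calc (totalBetti k (restr G T) : ℝ) ≤ θ ^ T.card := IH T hTN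
                _ ≤ θ ^ (S.card - d - 1) := theta_pow_mono (by omega)
            have hcast : ((A.card - 1 : ℕ) : ℝ) = (A.card : ℝ) - 1 := by
              have := hAcard1
              push_cast [this]
              ring
            calc (totalBetti k (restr G SA) : ℝ)
                ≤ (totalBetti k (restr G (SA.erase u)) : ℝ)
                  + (totalBetti k (restr G T) : ℝ) := by exact_mod_cast hk
              _ ≤ ((A.card - 1 : ℕ) : ℝ) * θ ^ (S.card - d - 1)
                  + θ ^ (S.card - d - 1) := add_le_add hterm1 hterm2
              _ = (A.card : ℝ) * θ ^ (S.card - d - 1) := by rw [hcast]; ring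
      have happ := inner d Nv le_rfl (subset_refl Nv)
      rw [Finset.sdiff_self, Finset.sdiff_empty] at happ
      have hfinal : (d : ℝ) * θ ^ (S.card - d - 1) ≤ θ ^ S.card := by
        calc (d : ℝ) * θ ^ (S.card - d - 1)
            ≤ θ ^ (d + 1) * θ ^ (S.card - d - 1) :=
              mul_le_mul_of_nonneg_right (d_le_theta_pow d)
                (pow_nonneg (le_of_lt theta_pos) _)
          _ = θ ^ (d + 1 + (S.card - d - 1)) := (pow_add θ _ _).symm
          _ = θ ^ S.card := by congr 1; omega
      calc (totalBetti k (restr G S) : ℝ)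
          ≤ (d : ℝ) * θ ^ (S.card - d - 1) := by rw [hd]; exact happ
        _ ≤ θ ^ S.card := hfinal

end SCproof


/-- For any finite simple graph `G` with `n` vertices, the total Betti
number (over the field `k`) of its independence complex is at most `(4 ^ (1/5)) ^ n`. -/
theorem totalBetti_indComplex_le (k : Type*) [Field k] (V : Type*) [Fintype V]
    (G : SimpleGraph V) (n : ℕ) (hn : Fintype.card V = n) :
    (totalBetti k (indComplex G) : ℝ) ≤ ((4 : ℝ) ^ ((1 : ℝ) / 5)) ^ n := by
  have h := SCproof.main_ind k G (Finset.univ : Finset V).card Finset.univ le_rfl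
  rw [SCproof.restr_univ] at h
  rw [Finset.card_univ, hn] at h
  exact h
end

section
/- Let k be a field and let Γ be the unique real number in [1,2] satisfying Γ^{-4} + Γ^{-5} + Γ^{-6} = 1. For any finite simple triangle-free graph G with n vertices, β(G) ≤ (Γ + 1)^n, where β(G) = Σ_{W ⊆ V(G)} b(Ind(G[W])). -/
open Finset

attribute [local instance] Classical.propDecidable

open SComplex

/-! ### Auxiliary development -/

section AuxDev

open SComplex

variable {k : Type*} [Field k] {T : Type*} [Fintype T]

/-- The index type of faces of cardinality `j`. -/
abbrev SComplex.Fc (K : SComplex T) (j : ℕ) : Type _ :=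
  {s : Finset T // s ∈ K.faces ∧ s.card = j}

lemma bdry_apply (K : SComplex T) (j : ℕ) (x : Chains k K (j+1)) (t : K.Fc j) :
    bdry k K j x t = ∑ s : K.Fc (j+1), x s * bdryElt k K j s t := by
  simp only [bdry, LinearMap.sum_apply, LinearMap.comp_apply, LinearMap.proj_apply,
    LinearMap.toSpanSingleton_apply, Finset.sum_apply, Pi.smul_apply, smul_eq_mul]

/-- Extension by zero along an injection, as a linear map. -/
noncomputable def extZeroL {α β : Type*} (ι : α → β) : (α → k) →ₗ[k] (β → k) where
  toFun x := Function.extend ι x 0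
  map_add' x y := by
    funext b
    simp only [Function.extend_def, Pi.add_apply]
    split_ifs <;> simp
  map_smul' c x := by
    funext b
    simp only [Function.extend_def, Pi.smul_apply, RingHom.id_apply]
    split_ifs <;> simp

lemma extZeroL_apply_of_injective {α β : Type*} (ι : α → β) (hι : Function.Injective ι)
    (x : α → k) (a : α) : extZeroL ι x (ι a) = x a := by
  simp [extZeroL, hι.extend_apply]

lemma extZeroL_apply_of_not_mem {α β : Type*} (ι : α → β) (x : α → k) (b : β)
    (hb : ¬ ∃ a, ι a = b) : extZeroL ι x b = 0 := by
  simp only [extZeroL, LinearMap.coe_mk, AddHom.coe_mk]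
  rw [Function.extend_apply' _ _ _ hb]
  rfl

/-- Summation against an extension-by-zero support. -/
lemma sum_extend {α β : Type*} [Fintype α] [Fintype β] (ι : α → β)
    (hι : Function.Injective ι) (F : β → k) (hF : ∀ b, (¬ ∃ a, ι a = b) → F b = 0) :
    ∑ b : β, F b = ∑ a : α, F (ι a) := by
  classical
  rw [← Finset.sum_image (f := F) (g := ι) (by intro a _ b _ h; exact hι h)]
  refine (Finset.sum_subset (Finset.subset_univ _) ?_).symm
  intro b _ hb
  refine hF b ?_
  rintro ⟨a, rfl⟩
  exact hb (Finset.mem_image_of_mem ι (Finset.mem_univ a))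


section OrderHelpers

variable {gam : Type*} [LinearOrder gam]

lemma filter_insert_lt_self [DecidableEq gam] (t : Finset gam) (u : gam) :
    (insert u t).filter (fun w => w < u) = t.filter (fun w => w < u) := by
  ext w
  simp only [Finset.mem_filter, Finset.mem_insert]
  constructor
  · rintro ⟨(rfl | hw), hlt⟩
    · exact absurd hlt (lt_irrefl _)
    · exact ⟨hw, hlt⟩
  · rintro ⟨hw, hlt⟩; exact ⟨Or.inr hw, hlt⟩

lemma card_filter_insert_lt [DecidableEq gam] (t : Finset gam) (u v : gam)
    (hv : v ∉ t) (hne : v ≠ u) :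
    ((insert v t).filter (fun w => w < u)).card
      = (t.filter (fun w => w < u)).card + (if v < u then 1 else 0) := by
  rw [Finset.filter_insert]
  split_ifs with h
  · rw [Finset.card_insert_of_notMem (fun hmem => hv (Finset.mem_of_mem_filter _ hmem))]
  · simp

end OrderHelpers

section DDZero

variable {k : Type*} [Field k] {T : Type*} [Fintype T]

lemma bdryElt_def (K : SComplex T) (j : ℕ) (s : K.Fc (j+1)) (t : K.Fc j) :
    bdryElt k K j s t =
      (letI : LinearOrder T := IsWellOrder.linearOrder WellOrderingRel
      if t.1 ⊆ s.1 then
        ∑ v ∈ s.1 \ t.1, (-1 : k) ^ (s.1.filter (fun w => w < v)).card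
      else 0) := rfl

lemma bdryElt_eq_zero_of_not_subset (K : SComplex T) (j : ℕ) (s : K.Fc (j+1)) (t : K.Fc j)
    (h : ¬ t.1 ⊆ s.1) : bdryElt k K j s t = 0 := by
  rw [bdryElt_def]
  exact if_neg h

lemma key_dd (K : SComplex T) (j : ℕ) (s2 : K.Fc (j+1+1)) (t : K.Fc j) :
    ∑ s1 : K.Fc (j+1), bdryElt k K (j+1) s2 s1 * bdryElt k K j s1 t = 0 := by
  letI : LinearOrder T := IsWellOrder.linearOrder WellOrderingRel
  by_cases hts : t.1 ⊆ s2.1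
  · -- s2 \ t has exactly two elements u, v
    have hcard : (s2.1 \ t.1).card = 2 := by
      rw [Finset.card_sdiff_of_subset hts, s2.2.2, t.2.2]
      omega
    obtain ⟨u, v, huv, hset⟩ := Finset.card_eq_two.mp hcard
    have hu2 : u ∈ s2.1 := by
      have : u ∈ s2.1 \ t.1 := hset ▸ Finset.mem_insert_self u {v}
      exact (Finset.mem_sdiff.mp this).1
    have hunt : u ∉ t.1 := by
      have : u ∈ s2.1 \ t.1 := hset ▸ Finset.mem_insert_self u {v}
      exact (Finset.mem_sdiff.mp this).2
    have hv2 : v ∈ s2.1 := by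
      have : v ∈ s2.1 \ t.1 := hset ▸ (Finset.mem_insert_of_mem (Finset.mem_singleton_self v))
      exact (Finset.mem_sdiff.mp this).1
    have hvnt : v ∉ t.1 := by
      have : v ∈ s2.1 \ t.1 := hset ▸ (Finset.mem_insert_of_mem (Finset.mem_singleton_self v))
      exact (Finset.mem_sdiff.mp this).2
    have hsu_sub : insert u t.1 ⊆ s2.1 := Finset.insert_subset hu2 hts
    have hsv_sub : insert v t.1 ⊆ s2.1 := Finset.insert_subset hv2 hts
    set su : K.Fc (j+1) := ⟨insert u t.1, K.down_closed s2.2.1 hsu_sub,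
      by rw [Finset.card_insert_of_notMem hunt, t.2.2]⟩ with hsu_def
    set sv : K.Fc (j+1) := ⟨insert v t.1, K.down_closed s2.2.1 hsv_sub,
      by rw [Finset.card_insert_of_notMem hvnt, t.2.2]⟩ with hsv_def
    have hsune : su ≠ sv := by
      intro h
      apply huv
      have : u ∈ insert v t.1 := by
        rw [← show su.1 = insert v t.1 from congrArg Subtype.val h]
        exact Finset.mem_insert_self u t.1
      rcases Finset.mem_insert.mp this with h' | h'
      · exact h'
      · exact absurd h' hunt
    have hzero : ∀ s1 : K.Fc (j+1), s1 ∉ ({su, sv} : Finset (K.Fc (j+1))) →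
        bdryElt k K (j+1) s2 s1 * bdryElt k K j s1 t = 0 := by
      intro s1 hs1
      by_cases h1 : s1.1 ⊆ s2.1
      · by_cases h2 : t.1 ⊆ s1.1
        · exfalso
          have hsub : s1.1 \ t.1 ⊆ ({u, v} : Finset T) := by
            rw [← hset]
            exact Finset.sdiff_subset_sdiff h1 (le_refl _)
          have hc1 : (s1.1 \ t.1).card = 1 := by
            rw [Finset.card_sdiff_of_subset h2, s1.2.2, t.2.2]; omega
          obtain ⟨w, hw⟩ := Finset.card_eq_one.mp hc1
          have hwmem : w ∈ ({u, v} : Finset T) := hsub (hw ▸ Finset.mem_singleton_self w)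
          have hs1eq : s1.1 = insert w t.1 := by
            ext z
            constructor
            · intro hz
              by_cases hzt : z ∈ t.1
              · exact Finset.mem_insert_of_mem hzt
              · have : z ∈ s1.1 \ t.1 := Finset.mem_sdiff.mpr ⟨hz, hzt⟩
                rw [hw] at this
                exact Finset.mem_insert.mpr (Or.inl (Finset.mem_singleton.mp this))
            · intro hz
              rcases Finset.mem_insert.mp hz with rfl | hz
              · have : z ∈ s1.1 \ t.1 := hw ▸ Finset.mem_singleton_self z
                exact (Finset.mem_sdiff.mp this).1
              · exact h2 hz
          rcases Finset.mem_insert.mp hwmem with rfl | hwv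
          · exact hs1 (Finset.mem_insert.mpr (Or.inl (Subtype.ext hs1eq)))
          · have : w = v := Finset.mem_singleton.mp hwv
            subst this
            exact hs1 (Finset.mem_insert.mpr (Or.inr (Finset.mem_singleton.mpr
              (Subtype.ext hs1eq))))
        · rw [bdryElt_eq_zero_of_not_subset K j s1 t h2, mul_zero]
      · rw [bdryElt_eq_zero_of_not_subset K (j+1) s2 s1 h1, zero_mul]
    have hsplit : ∑ s1 : K.Fc (j+1), bdryElt k K (j+1) s2 s1 * bdryElt k K j s1 t
        = ∑ s1 ∈ ({su, sv} : Finset (K.Fc (j+1))),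
            bdryElt k K (j+1) s2 s1 * bdryElt k K j s1 t := by
      refine (Finset.sum_subset (Finset.subset_univ _) ?_).symm
      intro s1 _ hs1
      exact hzero s1 hs1
    rw [hsplit, Finset.sum_pair hsune]
    -- now compute the four bdryElt values
    have hsdiff_su : s2.1 \ su.1 = {v} := by
      ext z
      simp only [Finset.mem_sdiff, Finset.mem_insert, Finset.mem_singleton, hsu_def]
      constructor
      · rintro ⟨hz2, hz⟩
        push_neg at hz
        have : z ∈ s2.1 \ t.1 := Finset.mem_sdiff.mpr ⟨hz2, hz.2⟩
        rw [hset] at this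
        rcases Finset.mem_insert.mp this with rfl | h'
        · exact absurd rfl hz.1
        · exact Finset.mem_singleton.mp h'
      · rintro rfl
        refine ⟨hv2, ?_⟩
        push_neg
        exact ⟨huv.symm, hvnt⟩
    have hsdiff_sv : s2.1 \ sv.1 = {u} := by
      ext z
      simp only [Finset.mem_sdiff, Finset.mem_insert, Finset.mem_singleton, hsv_def]
      constructor
      · rintro ⟨hz2, hz⟩
        push_neg at hz
        have : z ∈ s2.1 \ t.1 := Finset.mem_sdiff.mpr ⟨hz2, hz.2⟩
        rw [hset] at this
        rcases Finset.mem_insert.mp this with rfl | h'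
        · rfl
        · exact absurd (Finset.mem_singleton.mp h') hz.1
      · rintro rfl
        refine ⟨hu2, ?_⟩
        push_neg
        exact ⟨huv, hunt⟩
    have hsu_t : su.1 \ t.1 = {u} := by
      ext z
      simp only [hsu_def, Finset.mem_sdiff, Finset.mem_insert, Finset.mem_singleton]
      constructor
      · rintro ⟨rfl | hz, hzt⟩
        · rfl
        · exact absurd hz hzt
      · rintro rfl
        exact ⟨Or.inl rfl, hunt⟩
    have hsv_t : sv.1 \ t.1 = {v} := by
      ext z
      simp only [hsv_def, Finset.mem_sdiff, Finset.mem_insert, Finset.mem_singleton]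
      constructor
      · rintro ⟨rfl | hz, hzt⟩
        · rfl
        · exact absurd hz hzt
      · rintro rfl
        exact ⟨Or.inl rfl, hvnt⟩
    have hs2eq : s2.1 = insert u (insert v t.1) := by
      ext z
      simp only [Finset.mem_insert]
      constructor
      · intro hz
        by_cases hzt : z ∈ t.1
        · exact Or.inr (Or.inr hzt)
        · have : z ∈ s2.1 \ t.1 := Finset.mem_sdiff.mpr ⟨hz, hzt⟩
          rw [hset] at this
          rcases Finset.mem_insert.mp this with rfl | h'
          · exact Or.inl rfl
          · exact Or.inr (Or.inl (Finset.mem_singleton.mp h'))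
      · rintro (rfl | rfl | hz)
        · exact hu2
        · exact hv2
        · exact hts hz
    rw [bdryElt_def K (j+1) s2 su, bdryElt_def K (j+1) s2 sv,
      bdryElt_def K j su t, bdryElt_def K j sv t,
      if_pos hsu_sub, if_pos hsv_sub, if_pos (show t.1 ⊆ su.1 from Finset.subset_insert u t.1),
      if_pos (show t.1 ⊆ sv.1 from Finset.subset_insert v t.1),
      hsdiff_su, hsdiff_sv, hsu_t, hsv_t, Finset.sum_singleton, Finset.sum_singleton,
      Finset.sum_singleton, Finset.sum_singleton]
    have hposuu : ((su.1.filter (fun w => w < u)).card) = (t.1.filter (fun w => w < u)).card := by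
      rw [show su.1 = insert u t.1 from rfl, filter_insert_lt_self]
    have hposvv : ((sv.1.filter (fun w => w < v)).card) = (t.1.filter (fun w => w < v)).card := by
      rw [show sv.1 = insert v t.1 from rfl, filter_insert_lt_self]
    have hnotmem_u : u ∉ insert v t.1 := by
      simp only [Finset.mem_insert]
      rintro (rfl | h)
      · exact huv rfl
      · exact hunt h
    have hposs2v : ((s2.1.filter (fun w => w < v)).card)
        = (t.1.filter (fun w => w < v)).card + (if u < v then 1 else 0) := by
      rw [hs2eq, card_filter_insert_lt _ v u hnotmem_u huv,
        filter_insert_lt_self]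
    have hposs2u : ((s2.1.filter (fun w => w < u)).card)
        = (t.1.filter (fun w => w < u)).card + (if v < u then 1 else 0) := by
      rw [hs2eq, filter_insert_lt_self, card_filter_insert_lt _ u v hvnt huv.symm]
    rw [hposuu, hposvv, hposs2u, hposs2v]
    rcases lt_or_gt_of_ne huv with h | h
    · rw [if_pos h, if_neg (not_lt_of_gt h)]
      simp only [pow_add, pow_zero, pow_one, add_zero]
      ring
    · rw [if_neg (not_lt_of_gt h), if_pos h]
      simp only [pow_add, pow_zero, pow_one, add_zero]
      ring
  · -- t ⊄ s2 : every term vanishes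
    refine Finset.sum_eq_zero ?_
    intro s1 _
    by_cases h1 : s1.1 ⊆ s2.1
    · by_cases h2 : t.1 ⊆ s1.1
      · exact absurd (h2.trans h1) hts
      · rw [bdryElt_eq_zero_of_not_subset K j s1 t h2, mul_zero]
    · rw [bdryElt_eq_zero_of_not_subset K (j+1) s2 s1 h1, zero_mul]

end DDZero



section RankLayer

open Module LinearMap

variable {k : Type*} [Field k] {T : Type*} [Fintype T]

lemma bdry_bdry (K : SComplex T) (j : ℕ) (x : Chains k K (j+1+1)) :
    bdry k K j (bdry k K (j+1) x) = 0 := by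
  funext t
  rw [bdry_apply]
  have hrw : ∀ s1 : K.Fc (j+1),
      bdry k K (j+1) x s1 = ∑ s2 : K.Fc (j+1+1), x s2 * bdryElt k K (j+1) s2 s1 :=
    fun s1 => bdry_apply K (j+1) x s1
  calc (∑ s1 : K.Fc (j+1), bdry k K (j+1) x s1 * bdryElt k K j s1 t)
      = ∑ s1 : K.Fc (j+1), ∑ s2 : K.Fc (j+1+1),
          x s2 * (bdryElt k K (j+1) s2 s1 * bdryElt k K j s1 t) := by
        refine Finset.sum_congr rfl fun s1 _ => ?_
        rw [hrw s1, Finset.sum_mul]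
        exact Finset.sum_congr rfl fun s2 _ => by ring
    _ = ∑ s2 : K.Fc (j+1+1), x s2 * ∑ s1 : K.Fc (j+1),
          bdryElt k K (j+1) s2 s1 * bdryElt k K j s1 t := by
        rw [Finset.sum_comm]
        exact Finset.sum_congr rfl fun s2 _ => by rw [Finset.mul_sum]
    _ = 0 := by
        refine Finset.sum_eq_zero fun s2 _ => ?_
        rw [key_dd, mul_zero]

/-- Number of faces of cardinality `j`. -/
noncomputable def fcC (K : SComplex T) (j : ℕ) : ℕ := Fintype.card (K.Fc j)

/-- Rank of the `j`-th boundary operator. -/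
noncomputable def rkB (k : Type*) [Field k] (K : SComplex T) (j : ℕ) : ℕ :=
  Module.finrank k (LinearMap.range (bdry k K j))

lemma betti_add_rk (K : SComplex T) (j : ℕ) :
    bettiNum k K j + rkB k K j = Module.finrank k (cycles k K j) := by
  have hle : bdries k K j ≤ cycles k K j := by
    cases j with
    | zero => exact le_top
    | succ j =>
      rintro y ⟨x, rfl⟩
      exact LinearMap.mem_ker.mpr (bdry_bdry K j x)
  have h1 := Submodule.finrank_quotient_add_finrank
    (Submodule.comap (cycles k K j).subtype (bdries k K j))
  have h2 : Module.finrank k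
      (Submodule.comap (cycles k K j).subtype (bdries k K j)) = rkB k K j :=
    LinearEquiv.finrank_eq (Submodule.comapSubtypeEquivOfLe hle)
  rw [h2] at h1
  exact h1

lemma finrank_chains (K : SComplex T) (j : ℕ) :
    Module.finrank k (Chains k K j) = fcC K j :=
  Module.finrank_fintype_fun_eq_card k

lemma finrank_cycles_zero (K : SComplex T) :
    Module.finrank k (cycles k K 0) = fcC K 0 := by
  show Module.finrank k (⊤ : Submodule k (Chains k K 0)) = fcC K 0
  rw [finrank_top]
  exact finrank_chains K 0

lemma finrank_cycles_succ (K : SComplex T) (j : ℕ) :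
    Module.finrank k (cycles k K (j+1)) + rkB k K j = fcC K (j+1) := by
  have := LinearMap.finrank_range_add_finrank_ker (bdry k K j)
  rw [finrank_chains] at this
  show Module.finrank k (LinearMap.ker (bdry k K j)) + rkB k K j = fcC K (j+1)
  have h2 : rkB k K j = Module.finrank k (LinearMap.range (bdry k K j)) := rfl
  omega

lemma rkB_eq_zero_of_isEmpty (K : SComplex T) (j : ℕ) (h : IsEmpty (K.Fc (j+1))) :
    rkB k K j = 0 := by
  have hsub : Subsingleton (Chains k K (j+1)) := by
    constructor
    intro a b
    funext s
    exact absurd s.2 (by simpa using h.false s)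
  have : LinearMap.range (bdry k K j) = ⊥ := by
    rw [eq_bot_iff]
    rintro y ⟨x, rfl⟩
    rw [Subsingleton.elim x 0, map_zero]
    exact Submodule.zero_mem ⊥
  rw [rkB, this, finrank_bot]

lemma Fc_top_empty (K : SComplex T) : IsEmpty (K.Fc (Fintype.card T + 1)) := by
  constructor
  intro s
  have h1 : s.1.card ≤ Fintype.card T := (Finset.card_le_univ s.1).trans (le_of_eq Finset.card_univ)
  have h2 := s.2.2
  omega
  
lemma totalBetti_add_rk (K : SComplex T) :
    totalBetti k K + 2 * ∑ j ∈ Finset.range (Fintype.card T), rkB k K j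
      = ∑ j ∈ Finset.range (Fintype.card T + 1), fcC K j := by
  set N := Fintype.card T with hN
  have hA : ∑ j ∈ Finset.range (N+1), (bettiNum k K j + rkB k K j)
      = ∑ j ∈ Finset.range (N+1), Module.finrank k (cycles k K j) :=
    Finset.sum_congr rfl fun j _ => betti_add_rk K j
  rw [Finset.sum_add_distrib] at hA
  have hB : ∑ j ∈ Finset.range (N+1), Module.finrank k (cycles k K j)
      = (∑ j ∈ Finset.range N, Module.finrank k (cycles k K (j+1))) + fcC K 0 := by
    rw [Finset.sum_range_succ', finrank_cycles_zero]
  have hC : ∑ j ∈ Finset.range N, (Module.finrank k (cycles k K (j+1)) + rkB k K j)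
      = ∑ j ∈ Finset.range N, fcC K (j+1) :=
    Finset.sum_congr rfl fun j _ => finrank_cycles_succ K j
  rw [Finset.sum_add_distrib] at hC
  have hD : ∑ j ∈ Finset.range (N+1), fcC K j
      = (∑ j ∈ Finset.range N, fcC K (j+1)) + fcC K 0 := Finset.sum_range_succ' _ N
  have hE : ∑ j ∈ Finset.range (N+1), rkB k K j
      = (∑ j ∈ Finset.range N, rkB k K j) + rkB k K N := Finset.sum_range_succ _ N
  have hF : rkB k K N = 0 := rkB_eq_zero_of_isEmpty K N (by rw [hN]; exact Fc_top_empty K)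
  have htb : totalBetti k K = ∑ j ∈ Finset.range (N+1), bettiNum k K j := rfl
  omega

/-- Block-triangular rank inequality. -/
lemma rank_ge_blocks {M N M₁ M₂ N₁ N₂ : Type*}
    [AddCommGroup M] [Module k M] [AddCommGroup N] [Module k N]
    [AddCommGroup M₁] [Module k M₁] [AddCommGroup M₂] [Module k M₂]
    [AddCommGroup N₁] [Module k N₁] [AddCommGroup N₂] [Module k N₂]
    [FiniteDimensional k M] [FiniteDimensional k N]
    [FiniteDimensional k N₁] [FiniteDimensional k N₂]
    (f : M →ₗ[k] N) (g : N →ₗ[k] N₂) (h : N →ₗ[k] N₁)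
    (e₁ : M₁ →ₗ[k] M) (e₂ : M₂ →ₗ[k] M)
    (hz : g.comp (f.comp e₁) = 0) :
    Module.finrank k (LinearMap.range (h.comp (f.comp e₁)))
      + Module.finrank k (LinearMap.range (g.comp (f.comp e₂)))
      ≤ Module.finrank k (LinearMap.range f) := by
  set R := LinearMap.range f with hR
  have main : Module.finrank k (Submodule.map g R)
      + Module.finrank k (Submodule.comap R.subtype (LinearMap.ker g))
      = Module.finrank k R := by
    have h0 := LinearMap.finrank_range_add_finrank_ker (g.comp R.subtype)
    rwa [LinearMap.range_comp, Submodule.range_subtype, LinearMap.ker_comp] at h0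
  have hA : Module.finrank k (LinearMap.range (g.comp (f.comp e₂)))
      ≤ Module.finrank k (Submodule.map g R) := by
    rw [LinearMap.range_comp]
    exact Submodule.finrank_mono (Submodule.map_mono (LinearMap.range_comp_le_range _ _))
  have hB : Module.finrank k (LinearMap.range (h.comp (f.comp e₁)))
      ≤ Module.finrank k (Submodule.comap R.subtype (LinearMap.ker g)) := by
    calc Module.finrank k (LinearMap.range (h.comp (f.comp e₁)))
        ≤ Module.finrank k (LinearMap.range (f.comp e₁)) := by
          rw [LinearMap.range_comp]
          exact Submodule.finrank_map_le h _
      _ = Module.finrank k (Submodule.comap R.subtype (LinearMap.range (f.comp e₁))) :=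
          (LinearEquiv.finrank_eq
            (Submodule.comapSubtypeEquivOfLe (LinearMap.range_comp_le_range _ _))).symm
      _ ≤ Module.finrank k (Submodule.comap R.subtype (LinearMap.ker g)) :=
          Submodule.finrank_mono
            (Submodule.comap_mono (LinearMap.range_le_ker_iff.mpr hz))
  omega

end RankLayer


section BlockLayer

open Module LinearMap

variable {k : Type*} [Field k] {T : Type*} [Fintype T]

/-- General filter-insert cardinality lemma. -/
lemma card_filter_insert_pred {gam : Type*} [DecidableEq gam] (t : Finset gam) (u : gam)
    (hu : u ∉ t) (p : gam → Prop) [DecidablePred p] :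
    ((insert u t).filter p).card = (t.filter p).card + (if p u then 1 else 0) := by
  rw [Finset.filter_insert]
  split_ifs with h
  · rw [Finset.card_insert_of_notMem (fun hmem => hu (Finset.mem_of_mem_filter _ hmem))]
  · simp

namespace SComplex

/-- Face inclusion from the deletion. -/
def iotaD (K : SComplex T) (v : T) (j : ℕ) : (K.delete v).Fc j → K.Fc j :=
  fun s => ⟨s.1, s.2.1.1, s.2.2⟩

lemma iotaD_injective (K : SComplex T) (v : T) (j : ℕ) :
    Function.Injective (K.iotaD v j) := by
  intro a b h
  exact Subtype.ext (congrArg Subtype.val h : (K.iotaD v j a).1 = (K.iotaD v j b).1)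

lemma link_cases (K : SComplex T) (v : T) {j : ℕ} (σ : (K.link v).Fc j) :
    (v ∉ σ.1 ∧ insert v σ.1 ∈ K.faces) ∨ σ.1 = ∅ := by
  have h := σ.2.1
  rcases h with h | h
  · exact Or.inl h
  · exact Or.inr h

lemma link_vnotmem (K : SComplex T) (v : T) {j : ℕ} (σ : (K.link v).Fc j) : v ∉ σ.1 := by
  rcases K.link_cases v σ with h | h
  · exact h.1
  · rw [h]; exact Finset.notMem_empty v

lemma link_insert_mem (K : SComplex T) (v : T) (hv : {v} ∈ K.faces) {j : ℕ}
    (σ : (K.link v).Fc j) : insert v σ.1 ∈ K.faces := by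
  rcases K.link_cases v σ with h | h
  · exact h.2
  · rw [h]
    simpa using hv

lemma link_mem_base (K : SComplex T) (v : T) (hv : {v} ∈ K.faces) {j : ℕ}
    (σ : (K.link v).Fc j) : σ.1 ∈ K.faces :=
  K.down_closed (K.link_insert_mem v hv σ) (Finset.subset_insert v σ.1)

/-- Face map from the link: `σ ↦ σ ∪ {v}`. -/
noncomputable def iotaS (K : SComplex T) (v : T) (hv : {v} ∈ K.faces) (j : ℕ) :
    (K.link v).Fc j → K.Fc (j+1) :=
  fun σ => ⟨insert v σ.1, K.link_insert_mem v hv σ,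
    by rw [Finset.card_insert_of_notMem (K.link_vnotmem v σ), σ.2.2]⟩

lemma iotaS_injective (K : SComplex T) (v : T) (hv : {v} ∈ K.faces) (j : ℕ) :
    Function.Injective (K.iotaS v hv j) := by
  intro a b h
  have h1 : insert v a.1 = insert v b.1 := congrArg Subtype.val h
  have h2 : a.1 = b.1 := by
    rw [← Finset.erase_insert (K.link_vnotmem v a), ← Finset.erase_insert (K.link_vnotmem v b), h1]
  exact Subtype.ext h2

/-- Inclusion of link faces as faces of `K`. -/
noncomputable def iotaL (K : SComplex T) (v : T) (hv : {v} ∈ K.faces) (j : ℕ) :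
    (K.link v).Fc j → K.Fc j :=
  fun σ => ⟨σ.1, K.link_mem_base v hv σ, σ.2.2⟩

end SComplex

/-- The diagonal sign associated to the vertex `v`. -/
noncomputable def sgn (k : Type*) [Field k] {T : Type*} (v : T) (σ : Finset T) : k :=
  letI : LinearOrder T := IsWellOrder.linearOrder WellOrderingRel
  (-1 : k) ^ (σ.filter (fun w => v < w)).card

lemma sgn_mul_self (v : T) (σ : Finset T) : sgn k v σ * sgn k v σ = 1 := by
  rw [sgn, ← mul_pow]
  norm_num

/-- Diagonal scaling linear map. -/
noncomputable def diagL {α : Type*} (c : α → k) : (α → k) →ₗ[k] (α → k) where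
  toFun x := fun a => c a * x a
  map_add' x y := by funext a; simp [mul_add]
  map_smul' r x := by funext a; simp [smul_eq_mul]; ring

lemma diagL_apply {α : Type*} (c : α → k) (x : α → k) (a : α) :
    diagL c x a = c a * x a := rfl

end BlockLayer


section ClaimsLayer

open Module LinearMap SComplex

variable {k : Type*} [Field k] {T : Type*} [Fintype T]

lemma sgn_def (v : T) (σ : Finset T) :
    sgn k v σ =
      (letI : LinearOrder T := IsWellOrder.linearOrder WellOrderingRel
       (-1 : k) ^ (σ.filter (fun w => v < w)).card) := rfl

lemma bdryElt_iotaD (K : SComplex T) (v : T) (j : ℕ)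
    (s' : (K.delete v).Fc (j+1)) (t' : (K.delete v).Fc j) :
    bdryElt k K j (K.iotaD v (j+1) s') (K.iotaD v j t') = bdryElt k (K.delete v) j s' t' := rfl

lemma bdryElt_iotaD_iotaS_zero (K : SComplex T) (v : T) (hv : {v} ∈ K.faces) (j : ℕ)
    (s' : (K.delete v).Fc (j+1+1)) (τ : (K.link v).Fc j) :
    bdryElt k K (j+1) (K.iotaD v (j+1+1) s') (K.iotaS v hv j τ) = 0 := by
  apply bdryElt_eq_zero_of_not_subset
  intro hsub
  exact s'.2.1.2 (hsub (Finset.mem_insert_self v τ.1))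

lemma bdryElt_iotaS (K : SComplex T) (v : T) (hv : {v} ∈ K.faces) (j : ℕ)
    (σ : (K.link v).Fc (j+1)) (τ : (K.link v).Fc j) :
    sgn k v τ.1 * (sgn k v σ.1 *
        bdryElt k K (j+1) (K.iotaS v hv (j+1) σ) (K.iotaS v hv j τ))
      = bdryElt k (K.link v) j σ τ := by
  letI : LinearOrder T := IsWellOrder.linearOrder WellOrderingRel
  have hvs : v ∉ σ.1 := K.link_vnotmem v σ
  have hvt : v ∉ τ.1 := K.link_vnotmem v τ
  by_cases hsub : τ.1 ⊆ σ.1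
  · have hcard1 : (σ.1 \ τ.1).card = 1 := by
      rw [Finset.card_sdiff_of_subset hsub, σ.2.2, τ.2.2]
      omega
    obtain ⟨u, hu⟩ := Finset.card_eq_one.mp hcard1
    have humem : u ∈ σ.1 \ τ.1 := hu ▸ Finset.mem_singleton_self u
    have huσ : u ∈ σ.1 := (Finset.mem_sdiff.mp humem).1
    have huτ : u ∉ τ.1 := (Finset.mem_sdiff.mp humem).2
    have hune : u ≠ v := fun h => hvs (h ▸ huσ)
    have hσeq : σ.1 = insert u τ.1 := by
      ext z
      simp only [Finset.mem_insert]
      constructor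
      · intro hz
        by_cases hzt : z ∈ τ.1
        · exact Or.inr hzt
        · have : z ∈ σ.1 \ τ.1 := Finset.mem_sdiff.mpr ⟨hz, hzt⟩
          rw [hu] at this
          exact Or.inl (Finset.mem_singleton.mp this)
      · rintro (rfl | hz)
        · exact huσ
        · exact hsub hz
    have hsub' : insert v τ.1 ⊆ insert v σ.1 := Finset.insert_subset_insert v hsub
    have hdiff : insert v σ.1 \ insert v τ.1 = {u} := by
      ext z
      simp only [Finset.mem_sdiff, Finset.mem_insert, Finset.mem_singleton]
      constructor
      · rintro ⟨(rfl | hz), hz2⟩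
        · exact absurd (Or.inl rfl) hz2
        · push_neg at hz2
          have : z ∈ σ.1 \ τ.1 := Finset.mem_sdiff.mpr ⟨hz, hz2.2⟩
          rw [hu] at this
          exact Finset.mem_singleton.mp this
      · rintro rfl
        constructor
        · exact Or.inr huσ
        · rintro (rfl | hz)
          · exact hune rfl
          · exact huτ hz
    have hcoeS : (K.iotaS v hv (j+1) σ).1 = insert v σ.1 := rfl
    have hcoeT : (K.iotaS v hv j τ).1 = insert v τ.1 := rfl
    rw [bdryElt_def K (j+1) (K.iotaS v hv (j+1) σ) (K.iotaS v hv j τ),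
      bdryElt_def (K.link v) j σ τ, hcoeS, hcoeT, if_pos hsub', hdiff, Finset.sum_singleton,
      if_pos hsub, hu, Finset.sum_singleton]
    have hpos : (((insert v σ.1).filter (fun w => w < u)).card)
        = ((σ.1.filter (fun w => w < u)).card) + (if v < u then 1 else 0) := by
      rw [card_filter_insert_pred σ.1 v hvs (fun w => w < u)]
    have hsgnσ : (σ.1.filter (fun w => v < w)).card
        = (τ.1.filter (fun w => v < w)).card + (if v < u then 1 else 0) := by
      rw [hσeq, card_filter_insert_pred τ.1 u huτ (fun w => v < w)]
    rw [sgn_def, sgn_def, hpos, hsgnσ]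
    have key : ∀ (A P I : ℕ), (-1:k)^A * ((-1)^(A+I) * (-1)^(P+I)) = (-1)^P := by
      intro A P I
      have h2 : ∀ (n : ℕ), (-1:k)^n * (-1)^n = 1 := by
        intro n
        rw [← mul_pow]
        norm_num
      calc (-1:k)^A * ((-1)^(A+I) * (-1)^(P+I))
          = ((-1:k)^A * (-1)^A) * (((-1)^I * (-1)^I) * (-1)^P) := by
            rw [pow_add, pow_add]; ring
        _ = (-1:k)^P := by rw [h2, h2, one_mul, one_mul]
    exact key _ _ _
  · rw [bdryElt_eq_zero_of_not_subset _ _ σ τ hsub]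
    rw [bdryElt_eq_zero_of_not_subset]
    · rw [mul_zero, mul_zero]
    · intro h
      apply hsub
      intro z hz
      have := h (Finset.mem_insert_of_mem hz)
      rcases Finset.mem_insert.mp this with rfl | hz'
      · exact absurd hz hvt
      · exact hz'

lemma bdry_delete_eq (K : SComplex T) (v : T) (j : ℕ) :
    (LinearMap.funLeft k k (K.iotaD v j)).comp
        ((bdry k K j).comp (extZeroL (K.iotaD v (j+1))))
      = bdry k (K.delete v) j := by
  apply LinearMap.ext
  intro x
  funext t'
  simp only [LinearMap.comp_apply, LinearMap.funLeft_apply]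
  have hv0 : ∀ s, (¬ ∃ s', K.iotaD v (j+1) s' = s) →
      extZeroL (K.iotaD v (j+1)) x s * bdryElt k K j s (K.iotaD v j t') = 0 := by
    intro s hs
    rw [extZeroL_apply_of_not_mem _ _ _ hs, zero_mul]
  rw [bdry_apply, sum_extend _ (K.iotaD_injective v (j+1)) _ hv0, bdry_apply (K.delete v) j x t']
  refine Finset.sum_congr rfl fun s' _ => ?_
  rw [extZeroL_apply_of_injective _ (K.iotaD_injective v (j+1)), bdryElt_iotaD]

lemma bdry_link_eq (K : SComplex T) (v : T) (hv : {v} ∈ K.faces) (j : ℕ) :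
    ((diagL (fun τ : (K.link v).Fc j => sgn k v τ.1)).comp
        (LinearMap.funLeft k k (K.iotaS v hv j))).comp
      ((bdry k K (j+1)).comp ((extZeroL (K.iotaS v hv (j+1))).comp
        (diagL (fun σ : (K.link v).Fc (j+1) => sgn k v σ.1))))
      = bdry k (K.link v) j := by
  apply LinearMap.ext
  intro x
  funext τ
  simp only [LinearMap.comp_apply, LinearMap.funLeft_apply, diagL_apply]
  have hv0 : ∀ s, (¬ ∃ σ, K.iotaS v hv (j+1) σ = s) →
      extZeroL (K.iotaS v hv (j+1))
          (diagL (fun σ : (K.link v).Fc (j+1) => sgn k v σ.1) x) s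
        * bdryElt k K (j+1) s (K.iotaS v hv j τ) = 0 := by
    intro s hs
    rw [extZeroL_apply_of_not_mem _ _ _ hs, zero_mul]
  rw [bdry_apply, sum_extend _ (K.iotaS_injective v hv (j+1)) _ hv0, Finset.mul_sum,
    bdry_apply (K.link v) j x τ]
  refine Finset.sum_congr rfl fun σ _ => ?_
  rw [extZeroL_apply_of_injective _ (K.iotaS_injective v hv (j+1)), diagL_apply,
    ← bdryElt_iotaS K v hv j σ τ]
  ring

lemma bdry_zero_block (K : SComplex T) (v : T) (hv : {v} ∈ K.faces) (j : ℕ) :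
    ((diagL (fun τ : (K.link v).Fc j => sgn k v τ.1)).comp
        (LinearMap.funLeft k k (K.iotaS v hv j))).comp
      ((bdry k K (j+1)).comp (extZeroL (K.iotaD v (j+1+1)))) = 0 := by
  apply LinearMap.ext
  intro x
  funext τ
  simp only [LinearMap.comp_apply, LinearMap.funLeft_apply, diagL_apply,
    LinearMap.zero_apply, Pi.zero_apply]
  have hv0 : ∀ s, (¬ ∃ s', K.iotaD v (j+1+1) s' = s) →
      extZeroL (K.iotaD v (j+1+1)) x s * bdryElt k K (j+1) s (K.iotaS v hv j τ) = 0 := by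
    intro s hs
    rw [extZeroL_apply_of_not_mem _ _ _ hs, zero_mul]
  rw [bdry_apply, sum_extend _ (K.iotaD_injective v (j+1+1)) _ hv0]
  have h0 : ∀ s' : (K.delete v).Fc (j+1+1),
      extZeroL (K.iotaD v (j+1+1)) x (K.iotaD v (j+1+1) s')
        * bdryElt k K (j+1) (K.iotaD v (j+1+1) s') (K.iotaS v hv j τ) = 0 := by
    intro s'
    rw [bdryElt_iotaD_iotaS_zero, mul_zero]
  rw [Finset.sum_congr rfl fun s' _ => h0 s', Finset.sum_const_zero, mul_zero]

lemma rank_comp₂_le {M N M₁ N₁ : Type*}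
    [AddCommGroup M] [Module k M] [AddCommGroup N] [Module k N]
    [AddCommGroup M₁] [Module k M₁] [AddCommGroup N₁] [Module k N₁]
    [FiniteDimensional k M] [FiniteDimensional k N]
    (f : M →ₗ[k] N) (h : N →ₗ[k] N₁) (e : M₁ →ₗ[k] M) :
    Module.finrank k (LinearMap.range (h.comp (f.comp e)))
      ≤ Module.finrank k (LinearMap.range f) := by
  calc Module.finrank k (LinearMap.range (h.comp (f.comp e)))
      ≤ Module.finrank k (LinearMap.range (f.comp e)) := by
        rw [LinearMap.range_comp (f.comp e) h]
        exact Submodule.finrank_map_le h _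
    _ ≤ Module.finrank k (LinearMap.range f) :=
        Submodule.finrank_mono (LinearMap.range_comp_le_range _ _)

lemma rkB_delete_succ_add_link_le (K : SComplex T) (v : T) (hv : {v} ∈ K.faces) (j : ℕ) :
    rkB k (K.delete v) (j+1) + rkB k (K.link v) j ≤ rkB k K (j+1) := by
  have h := rank_ge_blocks (bdry k K (j+1))
    ((diagL (fun τ : (K.link v).Fc j => sgn k v τ.1)).comp
      (LinearMap.funLeft k k (K.iotaS v hv j)))
    (LinearMap.funLeft k k (K.iotaD v (j+1)))
    (extZeroL (K.iotaD v (j+1+1)))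
    ((extZeroL (K.iotaS v hv (j+1))).comp
      (diagL (fun σ : (K.link v).Fc (j+1) => sgn k v σ.1)))
    (bdry_zero_block K v hv j)
  rw [bdry_delete_eq K v (j+1), bdry_link_eq K v hv j] at h
  exact h

lemma rkB_delete_zero_le (K : SComplex T) (v : T) :
    rkB k (K.delete v) 0 ≤ rkB k K 0 := by
  have h := rank_comp₂_le (bdry k K 0) (LinearMap.funLeft k k (K.iotaD v 0))
    (extZeroL (K.iotaD v (0+1)))
  rw [bdry_delete_eq K v 0] at h
  exact h

lemma fcC_link_le_rkB (K : SComplex T) (v : T) (hv : {v} ∈ K.faces) (j : ℕ) :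
    fcC (K.link v) j ≤ rkB k K j := by
  set Φ := (LinearMap.funLeft k k (K.iotaL v hv j)).comp
    ((bdry k K j).comp (extZeroL (K.iotaS v hv j))) with hΦdef
  have hΦapp : ∀ (x : Chains k (K.link v) j) (τ : (K.link v).Fc j),
      Φ x τ = x τ * bdryElt k K j (K.iotaS v hv j τ) (K.iotaL v hv j τ) := by
    intro x τ
    simp only [hΦdef, LinearMap.comp_apply, LinearMap.funLeft_apply]
    have hv0 : ∀ s, (¬ ∃ σ, K.iotaS v hv j σ = s) →
        extZeroL (K.iotaS v hv j) x s * bdryElt k K j s (K.iotaL v hv j τ) = 0 := by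
      intro s hs
      rw [extZeroL_apply_of_not_mem _ _ _ hs, zero_mul]
    rw [bdry_apply, sum_extend _ (K.iotaS_injective v hv j) _ hv0]
    rw [Finset.sum_eq_single τ]
    · rw [extZeroL_apply_of_injective _ (K.iotaS_injective v hv j)]
    · intro σ _ hσne
      rw [extZeroL_apply_of_injective _ (K.iotaS_injective v hv j)]
      have hz : bdryElt k K j (K.iotaS v hv j σ) (K.iotaL v hv j τ) = 0 := by
        apply bdryElt_eq_zero_of_not_subset
        intro hsubs
        have hsub2 : τ.1 ⊆ σ.1 := by
          intro z hz
          have := hsubs hz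
          rcases Finset.mem_insert.mp this with hzv | hz'
          · exact absurd (hzv ▸ hz) (K.link_vnotmem v τ)
          · exact hz'
        have : τ.1 = σ.1 := Finset.eq_of_subset_of_card_le hsub2 (by rw [σ.2.2, τ.2.2])
        exact hσne (Subtype.ext this.symm)
      rw [hz, mul_zero]
    · intro h
      exact absurd (Finset.mem_univ τ) h
  have hunit : ∀ τ : (K.link v).Fc j,
      bdryElt k K j (K.iotaS v hv j τ) (K.iotaL v hv j τ) ≠ 0 := by
    intro τ
    letI : LinearOrder T := IsWellOrder.linearOrder WellOrderingRel
    have hvt : v ∉ τ.1 := K.link_vnotmem v τ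
    have hd : insert v τ.1 \ τ.1 = {v} := by
      ext z
      simp only [Finset.mem_sdiff, Finset.mem_insert, Finset.mem_singleton]
      constructor
      · rintro ⟨(rfl | hz), hz2⟩
        · rfl
        · exact absurd hz hz2
      · rintro rfl
        exact ⟨Or.inl rfl, hvt⟩
    have hcoe1 : (K.iotaS v hv j τ).1 = insert v τ.1 := rfl
    have hcoe2 : (K.iotaL v hv j τ).1 = τ.1 := rfl
    rw [bdryElt_def K j (K.iotaS v hv j τ) (K.iotaL v hv j τ), hcoe1, hcoe2,
      if_pos (Finset.subset_insert v τ.1), hd, Finset.sum_singleton]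
    exact pow_ne_zero _ (neg_ne_zero.mpr one_ne_zero)
  have hinj : Function.Injective Φ := by
    rw [← LinearMap.ker_eq_bot]
    rw [eq_bot_iff]
    intro x hx
    have hx0 : Φ x = 0 := hx
    have : x = 0 := by
      funext τ
      have h1 : Φ x τ = 0 := by rw [hx0]; rfl
      rw [hΦapp x τ] at h1
      rcases mul_eq_zero.mp h1 with h | h
      · exact h
      · exact absurd h (hunit τ)
    simp [this]
  have h1 : fcC (K.link v) j = Module.finrank k (LinearMap.range Φ) := by
    rw [LinearMap.finrank_range_of_inj hinj, finrank_chains]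
  rw [h1]
  exact rank_comp₂_le _ _ _

lemma fcC_zero_eq_one (K : SComplex T) : fcC K 0 = 1 :=
  Fintype.card_eq_one_iff.mpr ⟨⟨∅, K.empty_mem, Finset.card_empty⟩,
    fun b => Subtype.ext (Finset.card_eq_zero.mp b.2.2)⟩

lemma fcC_split (K : SComplex T) (v : T) (hv : {v} ∈ K.faces) (j : ℕ) :
    fcC K (j+1) = fcC (K.delete v) (j+1) + fcC (K.link v) j := by
  rw [fcC, fcC, fcC, ← Fintype.card_sum]
  apply Fintype.card_congr
  refine ⟨fun s => if h : v ∈ s.1 then Sum.inr ⟨s.1.erase v, ?_, ?_⟩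
      else Sum.inl ⟨s.1, ⟨s.2.1, h⟩, s.2.2⟩,
    fun x => Sum.elim (K.iotaD v (j+1)) (K.iotaS v hv j) x, ?_, ?_⟩
  · exact Or.inl ⟨Finset.notMem_erase v s.1, by rw [Finset.insert_erase h]; exact s.2.1⟩
  · rw [Finset.card_erase_of_mem h, s.2.2]
    omega
  · intro s
    by_cases h : v ∈ s.1
    · simp only [dif_pos h, Sum.elim_inr]
      exact Subtype.ext (Finset.insert_erase h)
    · simp only [dif_neg h, Sum.elim_inl]
      rfl
  · rintro (t | σ)
    · simp only [Sum.elim_inl]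
      have : v ∉ (K.iotaD v (j+1) t).1 := t.2.1.2
      refine (dif_neg this).trans ?_
      rfl
    · simp only [Sum.elim_inr]
      have : v ∈ (K.iotaS v hv j σ).1 := Finset.mem_insert_self v σ.1
      refine (dif_pos this).trans ?_
      congr 1
      exact Subtype.ext (Finset.erase_insert (K.link_vnotmem v σ))

lemma link_fc_top_empty (K : SComplex T) (v : T) :
    IsEmpty ((K.link v).Fc (Fintype.card T)) := by
  constructor
  intro σ
  have huniv : σ.1 = Finset.univ := Finset.eq_univ_of_card σ.1 σ.2.2
  exact K.link_vnotmem v σ (huniv ▸ Finset.mem_univ v)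

lemma sumF_split (K : SComplex T) (v : T) (hv : {v} ∈ K.faces) :
    ∑ j ∈ Finset.range (Fintype.card T + 1), fcC K j
      = ∑ j ∈ Finset.range (Fintype.card T + 1), fcC (K.delete v) j
        + ∑ j ∈ Finset.range (Fintype.card T + 1), fcC (K.link v) j := by
  set N := Fintype.card T with hN
  rw [Finset.sum_range_succ' (fcC K) N, Finset.sum_range_succ' (fcC (K.delete v)) N,
    Finset.sum_range_succ (fcC (K.link v)) N]
  have h1 : ∑ j ∈ Finset.range N, fcC K (j+1)
      = ∑ j ∈ Finset.range N, (fcC (K.delete v) (j+1) + fcC (K.link v) j) :=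
    Finset.sum_congr rfl fun j _ => fcC_split K v hv j
  rw [Finset.sum_add_distrib] at h1
  have h2 : fcC K 0 = 1 := fcC_zero_eq_one K
  have h3 : fcC (K.delete v) 0 = 1 := fcC_zero_eq_one (K.delete v)
  have h4 : fcC (K.link v) N = 0 := by
    have := link_fc_top_empty K v
    rw [fcC]
    exact Fintype.card_eq_zero
  omega

lemma sumR_split (K : SComplex T) (v : T) (hv : {v} ∈ K.faces) :
    ∑ j ∈ Finset.range (Fintype.card T), rkB k (K.delete v) j
      + ∑ j ∈ Finset.range (Fintype.card T), rkB k (K.link v) j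
      ≤ ∑ j ∈ Finset.range (Fintype.card T), rkB k K j := by
  have hpos : 0 < Fintype.card T := Fintype.card_pos_iff.mpr ⟨v⟩
  obtain ⟨n', hn'⟩ : ∃ n', Fintype.card T = n' + 1 :=
    ⟨Fintype.card T - 1, (Nat.succ_pred_eq_of_pos hpos).symm⟩
  rw [hn', Finset.sum_range_succ' (rkB k K) n', Finset.sum_range_succ' (rkB k (K.delete v)) n',
    Finset.sum_range_succ (rkB k (K.link v)) n']
  have h0 : rkB k (K.link v) n' = 0 := by
    apply rkB_eq_zero_of_isEmpty
    rw [← hn']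
    exact link_fc_top_empty K v
  have hsum : ∑ j ∈ Finset.range n', (rkB k (K.delete v) (j+1) + rkB k (K.link v) j)
      ≤ ∑ j ∈ Finset.range n', rkB k K (j+1) :=
    Finset.sum_le_sum fun j _ => rkB_delete_succ_add_link_le K v hv j
  rw [Finset.sum_add_distrib] at hsum
  have h00 : rkB k (K.delete v) 0 ≤ rkB k K 0 := rkB_delete_zero_le K v
  omega

/-- Main recursion: deletion–link inequality for the total Betti number. -/
lemma totalBetti_delete_link (K : SComplex T) (v : T) (hv : {v} ∈ K.faces) :
    totalBetti k K ≤ totalBetti k (K.delete v) + totalBetti k (K.link v) := by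
  have h1 := totalBetti_add_rk (k := k) K
  have h2 := totalBetti_add_rk (k := k) (K.delete v)
  have h3 := totalBetti_add_rk (k := k) (K.link v)
  have h4 := sumF_split K v hv
  have h5 := sumR_split (k := k) K v hv
  omega

/-- Cone lemma: if deletion and link coincide, total Betti number vanishes. -/
lemma totalBetti_cone (K : SComplex T) (v : T) (hv : {v} ∈ K.faces)
    (hdl : K.delete v = K.link v) : totalBetti k K = 0 := by
  have h1 := totalBetti_add_rk (k := k) K
  have h4 := sumF_split K v hv
  rw [hdl] at h4
  have h6 : ∑ j ∈ Finset.range (Fintype.card T), fcC (K.link v) j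
      ≤ ∑ j ∈ Finset.range (Fintype.card T), rkB k K j :=
    Finset.sum_le_sum fun j _ => fcC_link_le_rkB K v hv j
  have h7 : ∑ j ∈ Finset.range (Fintype.card T + 1), fcC (K.link v) j
      = ∑ j ∈ Finset.range (Fintype.card T), fcC (K.link v) j
        + fcC (K.link v) (Fintype.card T) := Finset.sum_range_succ _ _
  have h8 : fcC (K.link v) (Fintype.card T) = 0 := by
    have := link_fc_top_empty K v
    exact Fintype.card_eq_zero
  omega

end ClaimsLayer


section GraphLayer

variable {k : Type*} [Field k] {T : Type*} [Fintype T]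

lemma SComplex.ext' {K L : SComplex T} (h : K.faces = L.faces) : K = L := by
  cases K; cases L; cases h; rfl

/-- The independence complex of `H` restricted to the vertex subset `S`. -/
def indOn (H : SimpleGraph T) (S : Finset T) : SComplex T where
  faces := {σ | σ ⊆ S ∧ ∀ ⦃a⦄, a ∈ σ → ∀ ⦃b⦄, b ∈ σ → ¬ H.Adj a b}
  empty_mem := ⟨Finset.empty_subset S, by intro a ha; simp at ha⟩
  down_closed := by
    intro s t hs hts
    exact ⟨hts.trans hs.1, fun a ha b hb => hs.2 (hts ha) (hts hb)⟩

lemma mem_indOn {H : SimpleGraph T} {S σ : Finset T} :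
    σ ∈ (indOn H S).faces ↔ σ ⊆ S ∧ ∀ ⦃a⦄, a ∈ σ → ∀ ⦃b⦄, b ∈ σ → ¬ H.Adj a b :=
  Iff.rfl

/-- Closed neighbourhood as a finset. -/
noncomputable def nbhdF (H : SimpleGraph T) (v : T) : Finset T :=
  insert v (Finset.univ.filter (fun w => H.Adj v w))

lemma mem_nbhdF {H : SimpleGraph T} {v z : T} :
    z ∈ nbhdF H v ↔ z = v ∨ H.Adj v z := by
  simp [nbhdF]

lemma singleton_mem_indOn {H : SimpleGraph T} {S : Finset T} {v : T} (hv : v ∈ S) :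
    {v} ∈ (indOn H S).faces := by
  refine ⟨Finset.singleton_subset_iff.mpr hv, ?_⟩
  intro a ha b hb
  rw [Finset.mem_singleton] at ha hb
  subst ha; subst hb
  exact H.irrefl

lemma delete_indOn (H : SimpleGraph T) (S : Finset T) (v : T) :
    (indOn H S).delete v = indOn H (S.erase v) := by
  apply SComplex.ext'
  ext σ
  show (σ ∈ (indOn H S).faces ∧ v ∉ σ) ↔ _
  rw [mem_indOn, mem_indOn]
  constructor
  · rintro ⟨⟨h1, h2⟩, h3⟩
    exact ⟨fun z hz => Finset.mem_erase.mpr ⟨fun he => h3 (he ▸ hz), h1 hz⟩, h2⟩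
  · rintro ⟨h1, h2⟩
    refine ⟨⟨fun z hz => (Finset.mem_erase.mp (h1 hz)).2, h2⟩, fun hvσ => ?_⟩
    exact (Finset.mem_erase.mp (h1 hvσ)).1 rfl

lemma link_indOn (H : SimpleGraph T) (S : Finset T) (v : T) (hvS : v ∈ S) :
    (indOn H S).link v = indOn H (S \ nbhdF H v) := by
  apply SComplex.ext'
  ext σ
  show (σ ∈ {s : Finset T | v ∉ s ∧ insert v s ∈ (indOn H S).faces} ∪ {∅}) ↔ _
  rw [mem_indOn]
  constructor
  · rintro (⟨hvn, hins⟩ | hempty)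
    · rw [mem_indOn] at hins
      refine ⟨?_, fun a ha b hb => hins.2 (Finset.mem_insert_of_mem ha)
        (Finset.mem_insert_of_mem hb)⟩
      intro z hz
      rw [Finset.mem_sdiff]
      refine ⟨hins.1 (Finset.mem_insert_of_mem hz), ?_⟩
      rw [mem_nbhdF]
      rintro (rfl | hadj)
      · exact hvn hz
      · exact hins.2 (Finset.mem_insert_self v σ) (Finset.mem_insert_of_mem hz) hadj
    · have : σ = ∅ := hempty
      subst this
      exact ⟨Finset.empty_subset _, by intro a ha; simp at ha⟩
  · rintro ⟨h1, h2⟩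
    left
    have hvn : v ∉ σ := by
      intro hvσ
      have := h1 hvσ
      rw [Finset.mem_sdiff, mem_nbhdF] at this
      exact this.2 (Or.inl rfl)
    refine ⟨hvn, ?_⟩
    rw [mem_indOn]
    constructor
    · intro z hz
      rcases Finset.mem_insert.mp hz with rfl | hz'
      · exact hvS
      · exact (Finset.mem_sdiff.mp (h1 hz')).1
    · intro a ha b hb hadj
      rcases Finset.mem_insert.mp ha with rfl | ha' <;>
        rcases Finset.mem_insert.mp hb with rfl | hb'
      · exact H.irrefl hadj
      · have := (Finset.mem_sdiff.mp (h1 hb')).2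
        rw [mem_nbhdF] at this
        exact this (Or.inr hadj)
      · have := (Finset.mem_sdiff.mp (h1 ha')).2
        rw [mem_nbhdF] at this
        exact this (Or.inr hadj.symm)
      · exact h2 ha' hb' hadj

lemma isolated_delete_eq_link (H : SimpleGraph T) (S : Finset T) (v : T) (hvS : v ∈ S)
    (hiso : ∀ w ∈ S, ¬ H.Adj v w) :
    (indOn H S).delete v = (indOn H S).link v := by
  rw [delete_indOn, link_indOn H S v hvS]
  congr 1
  ext z
  rw [Finset.mem_erase, Finset.mem_sdiff, mem_nbhdF]
  constructor
  · rintro ⟨hne, hz⟩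
    refine ⟨hz, ?_⟩
    rintro (rfl | hadj)
    · exact hne rfl
    · exact hiso z hz hadj
  · rintro ⟨hz, hn⟩
    push_neg at hn
    exact ⟨fun h => hn.1 h, hz⟩

lemma totalBetti_indOn_empty (H : SimpleGraph T) :
    totalBetti k (indOn H (∅ : Finset T)) = 1 := by
  have hempty : ∀ j : ℕ, IsEmpty ((indOn H (∅ : Finset T)).Fc (j+1)) := by
    intro j
    constructor
    intro σ
    have h1 : σ.1 ⊆ ∅ := σ.2.1.1
    have h2 := σ.2.2
    rw [Finset.subset_empty] at h1
    rw [h1] at h2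
    simp at h2
  have h1 := totalBetti_add_rk (k := k) (indOn H (∅ : Finset T))
  have h2 : ∀ j ∈ Finset.range (Fintype.card T), rkB k (indOn H (∅:Finset T)) j = 0 :=
    fun j _ => rkB_eq_zero_of_isEmpty _ j (hempty j)
  rw [Finset.sum_congr rfl h2, Finset.sum_const_zero, mul_zero, add_zero] at h1
  have h3 : ∑ j ∈ Finset.range (Fintype.card T + 1), fcC (indOn H (∅:Finset T)) j
      = fcC (indOn H (∅:Finset T)) 0
        + ∑ j ∈ Finset.range (Fintype.card T), fcC (indOn H (∅:Finset T)) (j+1) := by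
    rw [Finset.sum_range_succ']
    omega
  have h4 : ∀ j ∈ Finset.range (Fintype.card T), fcC (indOn H (∅:Finset T)) (j+1) = 0 := by
    intro j _
    have := hempty j
    exact Fintype.card_eq_zero
  rw [Finset.sum_congr rfl h4, Finset.sum_const_zero, add_zero, fcC_zero_eq_one] at h3
  omega

lemma indComplex_eq_indOn (H : SimpleGraph T) :
    indComplex H = indOn H (Finset.univ : Finset T) := by
  apply SComplex.ext'
  ext σ
  show (∀ ⦃a⦄, a ∈ σ → ∀ ⦃b⦄, b ∈ σ → ¬ H.Adj a b) ↔ _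
  rw [mem_indOn]
  exact ⟨fun h => ⟨Finset.subset_univ σ, h⟩, fun h => h.2⟩

end GraphLayer


section NumericLayer

lemma gamma_sum_bound {Γ : ℝ} (hΓmem : Γ ∈ Set.Icc (1 : ℝ) 2)
    (hΓeq : Γ ^ (-4 : ℤ) + Γ ^ (-5 : ℤ) + Γ ^ (-6 : ℤ) = 1) :
    ∀ δ : ℕ, 1 ≤ δ → ∑ i ∈ Finset.range δ, (Γ⁻¹) ^ (δ + 1 + i) ≤ 1 := by
  obtain ⟨hΓ1, hΓ2⟩ := hΓmem
  have hΓpos : (0:ℝ) < Γ := lt_of_lt_of_le one_pos hΓ1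
  have hΓne : Γ ≠ 0 := ne_of_gt hΓpos
  set φ := Γ⁻¹ with hφdef
  have hφpos : 0 < φ := inv_pos.mpr hΓpos
  have hφ1 : φ ≤ 1 := inv_le_one_of_one_le₀ hΓ1
  have hconv : ∀ e : ℕ, Γ ^ (-(e:ℤ)) = φ ^ e := by
    intro e
    rw [zpow_neg, ← inv_zpow, zpow_natCast]
  have hφeq : φ^4 + φ^5 + φ^6 = 1 := by
    have h4 : Γ ^ (-4:ℤ) = φ^4 := by rw [show (-4:ℤ) = -((4:ℕ):ℤ) by norm_num, hconv]
    have h5 : Γ ^ (-5:ℤ) = φ^5 := by rw [show (-5:ℤ) = -((5:ℕ):ℤ) by norm_num, hconv]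
    have h6 : Γ ^ (-6:ℤ) = φ^6 := by rw [show (-6:ℤ) = -((6:ℕ):ℤ) by norm_num, hconv]
    rw [h4, h5, h6] at hΓeq
    exact hΓeq
  have hΓ6 : Γ^6 = Γ^2 + Γ + 1 := by
    have h := hφeq
    rw [hφdef] at h
    field_simp at h
    apply mul_left_cancel₀ (show (Γ^9 : ℝ) ≠ 0 by positivity)
    linear_combination -Γ^9 * h
  have hΓ3 : Γ^3 ≤ Γ + 1 := by
    nlinarith [hΓ6, hΓpos, sq_nonneg (Γ^3 - Γ - 1), sq_nonneg (Γ^3 + Γ + 1)]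
  have hΓ4 : Γ + 1 ≤ Γ^4 := by
    have hsq : (0:ℝ) < Γ^2 := by positivity
    nlinarith [hΓ6, hΓ3, hsq]
  have h34 : φ^3 + φ^4 ≤ 1 := by
    have he : φ^3 + φ^4 = (Γ + 1)/Γ^4 := by
      rw [hφdef]
      field_simp
    rw [he, div_le_one (by positivity)]
    exact hΓ4
  have hgeom : ∀ δ : ℕ, ∑ i ∈ Finset.range δ, φ^(δ+1+i)
      = φ^(δ+1) * ∑ i ∈ Finset.range δ, φ^i := by
    intro δ
    rw [Finset.mul_sum]
    exact Finset.sum_congr rfl fun i _ => by rw [← pow_add]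
  have hstep : ∀ δ : ℕ, 3 ≤ δ →
      ∑ i ∈ Finset.range (δ+1), φ^((δ+1)+1+i) ≤ ∑ i ∈ Finset.range δ, φ^(δ+1+i) := by
    intro δ hδ
    set G := ∑ i ∈ Finset.range δ, φ^i with hGdef
    have hGnn : 0 ≤ G := Finset.sum_nonneg fun i _ => pow_nonneg hφpos.le i
    have hG : G - φ * G = 1 - φ^δ := by
      have h := geom_sum_mul φ δ
      rw [← hGdef] at h
      linear_combination -h
    have hmono1 : φ^δ ≤ φ^3 := pow_le_pow_of_le_one hφpos.le hφ1 hδ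
    have hmono2 : φ^(δ+1) ≤ φ^4 := pow_le_pow_of_le_one hφpos.le hφ1 (by omega)
    have hphi : φ^δ + φ^(δ+1) ≤ 1 := by linarith
    rw [hgeom (δ+1), hgeom δ, Finset.sum_range_succ, ← hGdef]
    have hp1 : φ^((δ+1)+1) = φ^(δ+1) * φ := pow_succ φ (δ+1)
    rw [hp1]
    have hinner : φ * (G + φ^δ) ≤ G := by
      have hps : φ * φ^δ = φ^(δ+1) := by rw [pow_succ]; ring
      nlinarith [hG, hphi, hps]
    calc φ^(δ+1) * φ * (G + φ^δ) = φ^(δ+1) * (φ * (G + φ^δ)) := by ring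
      _ ≤ φ^(δ+1) * G := by
          exact mul_le_mul_of_nonneg_left hinner (pow_nonneg hφpos.le _)
  have hmain3 : ∀ δ : ℕ, 3 ≤ δ → ∑ i ∈ Finset.range δ, φ^(δ+1+i) ≤ 1 := by
    intro δ hδ
    induction δ, hδ using Nat.le_induction with
    | base =>
      have : ∑ i ∈ Finset.range 3, φ^(3+1+i) = φ^4 + φ^5 + φ^6 := by
        rw [Finset.sum_range_succ, Finset.sum_range_succ, Finset.sum_range_one]
        try norm_num
      rw [this, hφeq]
    | succ δ hδ IH => exact le_trans (hstep δ hδ) IH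
  intro δ hδ
  match δ, hδ with
  | 1, _ =>
    have h1 : ∑ i ∈ Finset.range 1, φ^(1+1+i) = φ^2 := by
      rw [Finset.sum_range_one]
    rw [h1]
    exact pow_le_one₀ hφpos.le hφ1
  | 2, _ =>
    have : ∑ i ∈ Finset.range 2, φ^(2+1+i) = φ^3 + φ^4 := by
      rw [Finset.sum_range_succ, Finset.sum_range_one]
      try norm_num
    rw [this]
    exact h34
  | (n+3), _ => exact hmain3 (n+3) (by omega)

end NumericLayer


section KeyInduction

variable {k : Type*} [Field k] {T : Type*} [Fintype T]

lemma indOn_totalBetti_le (Γ : ℝ) (hΓ1 : 1 ≤ Γ)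
    (hnum : ∀ δ : ℕ, 1 ≤ δ → ∑ i ∈ Finset.range δ, (Γ⁻¹) ^ (δ + 1 + i) ≤ 1)
    (H : SimpleGraph T) (htf : ∀ a b c : T, H.Adj a b → H.Adj b c → H.Adj a c → False)
    (S : Finset T) : (totalBetti k (indOn H S) : ℝ) ≤ Γ ^ S.card := by
  have hΓpos : (0:ℝ) < Γ := lt_of_lt_of_le one_pos hΓ1
  have hΓne : Γ ≠ 0 := ne_of_gt hΓpos
  suffices h : ∀ (m : ℕ) (S : Finset T), S.card = m →
      (totalBetti k (indOn H S) : ℝ) ≤ Γ ^ m by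
    exact h S.card S rfl
  intro m
  induction m using Nat.strong_induction_on with
  | _ m IH =>
  intro S hS
  rcases Nat.eq_zero_or_pos m with rfl | hmpos
  · have hSe : S = ∅ := Finset.card_eq_zero.mp hS
    rw [hSe, totalBetti_indOn_empty]
    norm_num
  · have hSne : S.Nonempty := Finset.card_pos.mp (by omega)
    obtain ⟨v, hvS, hmin⟩ :=
      Finset.exists_min_image S (fun w => (S.filter (fun z => H.Adj w z)).card) hSne
    set Nv := S.filter (fun z => H.Adj v z) with hNv
    set δ := Nv.card with hδ
    have hvNv : v ∉ Nv := fun h => H.irrefl (Finset.mem_filter.mp h).2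
    rcases Nat.eq_zero_or_pos δ with hδ0 | hδpos
    · have hNve : Nv = ∅ := Finset.card_eq_zero.mp hδ0
      have hiso : ∀ w ∈ S, ¬ H.Adj v w := by
        intro w hw hadj
        have hmem : w ∈ Nv := Finset.mem_filter.mpr ⟨hw, hadj⟩
        rw [hNve] at hmem
        simp at hmem
      have h0 : totalBetti k (indOn H S) = 0 :=
        totalBetti_cone _ v (singleton_mem_indOn hvS)
          (isolated_delete_eq_link H S v hvS hiso)
      rw [h0]
      push_cast
      positivity
    · have inner : ∀ (n : ℕ) (B : Finset T), B ⊆ Nv → B.card = n →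
          (totalBetti k (indOn H (S \ (Nv \ B))) : ℝ)
            ≤ ∑ i ∈ Finset.range n, Γ ^ ((m : ℤ) - 2*(δ:ℤ) + (n:ℤ) - 1 - (i:ℤ)) := by
        intro n
        induction n with
        | zero =>
          intro B hB hBcard
          have hBe : B = ∅ := Finset.card_eq_zero.mp hBcard
          subst hBe
          rw [Finset.sdiff_empty]
          have hvS' : v ∈ S \ Nv := Finset.mem_sdiff.mpr ⟨hvS, hvNv⟩
          have hiso' : ∀ w ∈ S \ Nv, ¬ H.Adj v w := by
            intro w hw hadj
            have hw' := Finset.mem_sdiff.mp hw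
            exact hw'.2 (Finset.mem_filter.mpr ⟨hw'.1, hadj⟩)
          have h0 : totalBetti k (indOn H (S \ Nv)) = 0 :=
            totalBetti_cone _ v (singleton_mem_indOn hvS')
              (isolated_delete_eq_link H _ v hvS' hiso')
          rw [h0, Finset.sum_range_zero]
          simp
        | succ n IHn =>
          intro B hB hBcard
          have hBne : B.Nonempty := Finset.card_pos.mp (by omega)
          obtain ⟨u, huB⟩ := hBne
          have huNv : u ∈ Nv := hB huB
          have huS : u ∈ S := (Finset.mem_filter.mp huNv).1
          have hadj_vu : H.Adj v u := (Finset.mem_filter.mp huNv).2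
          set D := Nv \ B with hD
          have hDS : D ⊆ S := (Finset.sdiff_subset).trans (Finset.filter_subset _ S)
          have huD : u ∉ D := fun h => (Finset.mem_sdiff.mp h).2 huB
          have huS' : u ∈ S \ D := Finset.mem_sdiff.mpr ⟨huS, huD⟩
          have hrec := totalBetti_delete_link (k := k) (indOn H (S \ D)) u
            (singleton_mem_indOn huS')
          rw [delete_indOn H (S \ D) u, link_indOn H (S \ D) u huS'] at hrec
          have hserase : (S \ D).erase u = S \ (Nv \ B.erase u) := by
            ext z
            simp only [Finset.mem_erase, Finset.mem_sdiff, hD]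
            by_cases hzu : z = u
            · subst hzu
              simp [huNv, huB]
            · simp only [hzu, not_false_iff, true_and, ne_eq]
              try tauto
          have hbound1 : (totalBetti k (indOn H ((S \ D).erase u)) : ℝ)
              ≤ ∑ i ∈ Finset.range n, Γ ^ ((m:ℤ) - 2*(δ:ℤ) + (n:ℤ) - 1 - (i:ℤ)) := by
            rw [hserase]
            exact IHn (B.erase u) ((Finset.erase_subset u B).trans hB)
              (by rw [Finset.card_erase_of_mem huB, hBcard]; omega)
          set S2 := (S \ D) \ nbhdF H u with hS2
          have hc1 : S2.card + ((S \ D) ∩ nbhdF H u).card = (S \ D).card :=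
            Finset.card_sdiff_add_card_inter _ _
          have hc2 : (S \ D).card + D.card = m := by
            have := Finset.card_sdiff_add_card_eq_card hDS
            omega
          have hDcard : D.card + (n+1) = δ := by
            have h1 : D.card = Nv.card - B.card := Finset.card_sdiff_of_subset hB
            have h2 : B.card ≤ Nv.card := Finset.card_le_card hB
            omega
          have hNuD : ∀ z ∈ S.filter (fun w => H.Adj u w), z ∉ D := by
            intro z hz hzD
            have hz' := Finset.mem_filter.mp hz
            have hzNv := (Finset.mem_sdiff.mp hzD).1
            have hadj_vz : H.Adj v z := (Finset.mem_filter.mp hzNv).2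
            exact htf v u z hadj_vu hz'.2 hadj_vz
          have hsub : insert u (S.filter (fun w => H.Adj u w)) ⊆ (S \ D) ∩ nbhdF H u := by
            intro z hz
            rcases Finset.mem_insert.mp hz with rfl | hz'
            · exact Finset.mem_inter.mpr ⟨huS', mem_nbhdF.mpr (Or.inl rfl)⟩
            · have hz'' := Finset.mem_filter.mp hz'
              exact Finset.mem_inter.mpr ⟨Finset.mem_sdiff.mpr ⟨hz''.1, hNuD z hz'⟩,
                mem_nbhdF.mpr (Or.inr hz''.2)⟩
          have huNu : u ∉ S.filter (fun w => H.Adj u w) := by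
            intro h
            exact H.irrefl (Finset.mem_filter.mp h).2
          have hNu_ge : δ ≤ (S.filter (fun z => H.Adj u z)).card := hmin u huS
          have hc3 : δ + 1 ≤ ((S \ D) ∩ nbhdF H u).card := by
            have hcc := Finset.card_le_card hsub
            rw [Finset.card_insert_of_notMem huNu] at hcc
            omega
          have hS2lt : S2.card < m := by omega
          have hbound2 : (totalBetti k (indOn H S2) : ℝ)
              ≤ Γ ^ ((m:ℤ) - 2*(δ:ℤ) + (n:ℤ)) := by
            calc (totalBetti k (indOn H S2) : ℝ) ≤ Γ ^ S2.card := IH S2.card hS2lt S2 rfl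
              _ = Γ ^ ((S2.card : ℤ)) := (zpow_natCast Γ S2.card).symm
              _ ≤ Γ ^ ((m:ℤ) - 2*(δ:ℤ) + (n:ℤ)) := zpow_le_zpow_right₀ hΓ1 (by omega)
          have hsum : (totalBetti k (indOn H (S \ D)) : ℝ)
              ≤ (totalBetti k (indOn H ((S \ D).erase u)) : ℝ)
                + (totalBetti k (indOn H ((S \ D) \ nbhdF H u))) := by
            exact_mod_cast hrec
          have htarget : ∑ i ∈ Finset.range (n+1),
                Γ ^ ((m:ℤ) - 2*(δ:ℤ) + ((n+1 : ℕ):ℤ) - 1 - (i:ℤ))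
              = (∑ i ∈ Finset.range n, Γ ^ ((m:ℤ) - 2*(δ:ℤ) + (n:ℤ) - 1 - (i:ℤ)))
                + Γ ^ ((m:ℤ) - 2*(δ:ℤ) + (n:ℤ)) := by
            rw [Finset.sum_range_succ']
            congr 1
            · refine Finset.sum_congr rfl fun i _ => ?_
              congr 1
              push_cast
              ring
            · congr 1
              push_cast
              ring
          rw [htarget]
          have hS2eq : (totalBetti k (indOn H ((S \ D) \ nbhdF H u)) : ℝ)
              = (totalBetti k (indOn H S2) : ℝ) := by rw [hS2]
          linarith [hsum, hbound1, hbound2, hS2eq.le, hS2eq.ge]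
      have hfinal := inner δ Nv (Finset.Subset.refl Nv) rfl
      rw [Finset.sdiff_self, Finset.sdiff_empty] at hfinal
      have hδ1 : 1 ≤ δ := hδpos
      have hfactor : ∑ i ∈ Finset.range δ, Γ ^ ((m:ℤ) - 2*(δ:ℤ) + (δ:ℤ) - 1 - (i:ℤ))
          = Γ ^ (m:ℤ) * ∑ i ∈ Finset.range δ, (Γ⁻¹) ^ (δ+1+i) := by
        rw [Finset.mul_sum]
        refine Finset.sum_congr rfl fun i _ => ?_
        have hexp : ((m:ℤ) - 2*(δ:ℤ) + (δ:ℤ) - 1 - (i:ℤ)) = (m:ℤ) + (-(((δ+1+i : ℕ)):ℤ)) := by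
          push_cast
          ring
        rw [hexp, zpow_add₀ hΓne, zpow_neg, ← inv_zpow, zpow_natCast, zpow_natCast]
      rw [hfactor] at hfinal
      have hmul : Γ ^ (m:ℤ) * ∑ i ∈ Finset.range δ, (Γ⁻¹) ^ (δ+1+i) ≤ Γ ^ (m:ℤ) * 1 :=
        mul_le_mul_of_nonneg_left (hnum δ hδ1) (le_of_lt (by positivity))
      have hzp : Γ ^ (m:ℤ) = Γ ^ m := zpow_natCast Γ m
      calc (totalBetti k (indOn H S) : ℝ)
          ≤ Γ ^ (m:ℤ) * ∑ i ∈ Finset.range δ, (Γ⁻¹) ^ (δ+1+i) := hfinal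
        _ ≤ Γ ^ (m:ℤ) * 1 := hmul
        _ = Γ ^ m := by rw [mul_one, hzp]

end KeyInduction

end AuxDev

/-- If `Γ ∈ [1,2]` satisfies `Γ⁻⁴ + Γ⁻⁵ + Γ⁻⁶ = 1`, then for any finite
simple triangle-free graph `G` with `n` vertices, `β(G) ≤ (Γ + 1) ^ n`. -/
theorem algBetti_le_of_triangleFree (k : Type*) [Field k]
    (Γ : ℝ) (hΓmem : Γ ∈ Set.Icc (1 : ℝ) 2)
    (hΓeq : Γ ^ (-4 : ℤ) + Γ ^ (-5 : ℤ) + Γ ^ (-6 : ℤ) = 1)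
    (V : Type*) [Fintype V] (G : SimpleGraph V) (htf : G.CliqueFree 3)
    (n : ℕ) (hn : Fintype.card V = n) :
    (algBetti k G : ℝ) ≤ (Γ + 1) ^ n := by
  have hΓ1 : (1:ℝ) ≤ Γ := hΓmem.1
  have hnum := gamma_sum_bound hΓmem hΓeq
  have htfG : ∀ a b c : V, G.Adj a b → G.Adj b c → G.Adj a c → False := by
    intro a b c hab hbc hac
    exact htf {a, b, c} (SimpleGraph.is3Clique_triple_iff.mpr ⟨hab, hac, hbc⟩)
  have hW : ∀ W : Finset V, (totalBetti k (indComplex (G.induce ↑W)) : ℝ) ≤ Γ ^ W.card := by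
    intro W
    have htf' : ∀ a b c : ↥(↑W : Set V), (G.induce ↑W).Adj a b → (G.induce ↑W).Adj b c →
        (G.induce ↑W).Adj a c → False := by
      intro a b c hab hbc hac
      exact htfG a.1 b.1 c.1 hab hbc hac
    have h := indOn_totalBetti_le (k := k) Γ hΓ1 hnum (G.induce (↑W : Set V)) htf'
      (Finset.univ)
    rw [← indComplex_eq_indOn] at h
    have hcard : Fintype.card ↥(↑W : Set V) = W.card := by
      rw [← Fintype.card_coe W]
      exact Fintype.card_congr (Equiv.subtypeEquivRight (fun x => Finset.mem_coe))
    rwa [Finset.card_univ, hcard] at h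
  have hsum : (algBetti k G : ℝ) ≤ ∑ W : Finset V, Γ ^ W.card := by
    rw [algBetti, Nat.cast_sum]
    exact Finset.sum_le_sum fun W _ => hW W
  have hbin : ∑ W : Finset V, Γ ^ W.card = (Γ + 1) ^ n := by
    have h := Finset.prod_add (fun _ : V => Γ) (fun _ : V => (1:ℝ)) Finset.univ
    rw [Finset.prod_const, Finset.card_univ, hn, Finset.powerset_univ] at h
    have h2 : ∀ t : Finset V, (∏ _i ∈ t, Γ) * (∏ _i ∈ Finset.univ \ t, (1:ℝ)) = Γ ^ t.card := by
      intro t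
      rw [Finset.prod_const, Finset.prod_const, one_pow, mul_one]
    rw [Finset.sum_congr rfl (fun t _ => h2 t)] at h
    exact h.symm
  linarith [hsum, hbin]
end

section
/- Let k be a field and d ≥ 1 an integer. Suppose K is a finite abstract simplicial complex with n vertices in which every minimal non-face has cardinality at most d. Then the reduced homology H̃_i(K; k) vanishes for every i > n·(d-1)/d - 1. -/
open Finset

attribute [local instance] Classical.propDecidable

open SComplex

set_option linter.unusedSectionVars false

section Gen
variable {V : Type*} [Fintype V] [LinearOrder V] {k : Type*} [Field k]

/-- sign of vertex `v` relative to finset `s`. -/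
noncomputable def eps (k : Type*) [Field k] {V : Type*} [LinearOrder V]
    (s : Finset V) (v : V) : k :=
  (-1) ^ (s.filter (fun w => w < v)).card

lemma eps_mul_self (s : Finset V) (v : V) : eps k s v * eps k s v = 1 := by
  rw [eps, ← pow_add]
  exact Even.neg_one_pow ⟨_, rfl⟩

lemma eps_erase {s : Finset V} {a : V} (ha : a ∈ s) (b : V) :
    eps k s b = (if a < b then -1 else 1) * eps k (s.erase a) b := by
  unfold eps
  rw [Finset.filter_erase]
  by_cases h : a < b
  · have ha' : a ∈ s.filter (fun w => w < b) := Finset.mem_filter.2 ⟨ha, h⟩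
    have hc := Finset.card_erase_add_one ha'
    rw [if_pos h, ← hc, pow_succ]
    ring
  · have ha' : a ∉ s.filter (fun w => w < b) := by
      simp [Finset.mem_filter, h]
    rw [Finset.erase_eq_of_notMem ha', if_neg h, one_mul]

/-- removing `u` then `w` versus `w` then `u`: signs cancel. -/
lemma eps_pair {t : Finset V} {u w : V} (hu : u ∉ t) (hw : w ∉ t) (huw : u ≠ w) :
    eps k (insert u t) u * eps k (insert w (insert u t)) w
      = -(eps k (insert w t) w * eps k (insert u (insert w t)) u) := by
  have h1 : eps k (insert w (insert u t)) w
      = (if u < w then (-1 : k) else 1) * eps k (insert w t) w := by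
    have hmem : u ∈ insert w (insert u t) := by simp
    have he : (insert w (insert u t)).erase u = insert w t := by
      rw [Finset.insert_comm, Finset.erase_insert (by simp [hu, huw])]
    rw [eps_erase hmem w, he]
  have h2 : eps k (insert u (insert w t)) u
      = (if w < u then (-1 : k) else 1) * eps k (insert u t) u := by
    have hmem : w ∈ insert u (insert w t) := by simp
    have he : (insert u (insert w t)).erase w = insert u t := by
      rw [Finset.insert_comm, Finset.erase_insert (by simp [hw, huw.symm])]
    rw [eps_erase hmem u, he]
  rw [h1, h2]
  rcases huw.lt_or_gt with h' | h'
  · simp only [if_pos h', if_neg h'.not_gt, if_neg (lt_irrefl _)]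
    ring
  · simp only [if_neg h'.not_gt, if_pos h']
    ring

/-- removing `u` from `insert u s` vs removing `v ∈ s` first. -/
lemma eps_swap2 {s : Finset V} {u v : V} (hv : v ∈ s) (hu : u ∉ s) :
    eps k (insert u s) u * eps k (insert u s) v
      = -(eps k s v * eps k (insert u (s.erase v)) u) := by
  have huv : u ≠ v := fun h => hu (h ▸ hv)
  have h1 : eps k (insert u s) u
      = (if v < u then (-1 : k) else 1) * eps k (insert u (s.erase v)) u := by
    have hmem : v ∈ insert u s := Finset.mem_insert_of_mem hv
    have he : (insert u s).erase v = insert u (s.erase v) :=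
      Finset.erase_insert_of_ne huv
    rw [eps_erase hmem u, he]
  have h2 : eps k (insert u s) v
      = (if u < v then (-1 : k) else 1) * eps k s v := by
    have hmem : u ∈ insert u s := Finset.mem_insert_self u s
    rw [eps_erase hmem v, Finset.erase_insert hu]
  rw [h1, h2]
  rcases huv.lt_or_gt with h' | h'
  · simp only [if_pos h', if_neg h'.not_gt]
    ring
  · simp only [if_neg h'.not_gt, if_pos h']
    ring

end Gen
section Gen2
variable {V : Type*} [Fintype V] [LinearOrder V] {k : Type*} [Field k]

/-- global boundary operator on functions `Finset V → k`. -/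
noncomputable def Dop (k : Type*) [Field k] {V : Type*} [Fintype V] [LinearOrder V]
    (x : Finset V → k) : Finset V → k :=
  fun t => ∑ u ∈ tᶜ, eps k (insert u t) u * x (insert u t)

lemma Dop_apply (x : Finset V → k) (t : Finset V) :
    Dop k x t = ∑ u ∈ tᶜ, eps k (insert u t) u * x (insert u t) := rfl

lemma Dop_add (x y : Finset V → k) : Dop k (x + y) = Dop k x + Dop k y := by
  funext t
  simp [Dop, mul_add, Finset.sum_add_distrib]

lemma Dop_sub (x y : Finset V → k) : Dop k (x - y) = Dop k x - Dop k y := by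
  funext t
  simp [Dop, mul_sub, Finset.sum_sub_distrib]

lemma Dop_zero : Dop k (0 : Finset V → k) = 0 := by
  funext t; simp [Dop]

lemma Dop_eq_zero_of_card {x : Finset V → k} {m : ℕ}
    (hx : ∀ s, x s ≠ 0 → s.card = m) {t : Finset V} (ht : t.card + 1 ≠ m) :
    Dop k x t = 0 := by
  apply Finset.sum_eq_zero
  intro u hu
  have hu' : u ∉ t := Finset.mem_compl.1 hu
  have : x (insert u t) = 0 := by
    by_contra h
    exact ht (by rw [← hx _ h, Finset.card_insert_of_notMem hu'])
  rw [this, mul_zero]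

lemma Dop_eq_zero_of_face (K : SComplex V) {x : Finset V → k}
    (hx : ∀ s, x s ≠ 0 → s ∈ K.faces) {t : Finset V} (ht : t ∉ K.faces) :
    Dop k x t = 0 := by
  apply Finset.sum_eq_zero
  intro u hu
  have : x (insert u t) = 0 := by
    by_contra h
    exact ht (K.down_closed (hx _ h) (Finset.subset_insert _ _))
  rw [this, mul_zero]

lemma Dop_support (K : SComplex V) {x : Finset V → k} {m : ℕ}
    (hx : ∀ s, x s ≠ 0 → s ∈ K.faces ∧ s.card = m + 1) :
    ∀ t, Dop k x t ≠ 0 → t ∈ K.faces ∧ t.card = m := by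
  intro t ht
  constructor
  · by_contra h
    exact ht (Dop_eq_zero_of_face K (fun s hs => (hx s hs).1) h)
  · by_contra h
    exact ht (Dop_eq_zero_of_card (fun s hs => (hx s hs).2) (by omega))

lemma Dop_Dop (x : Finset V → k) : Dop k (Dop k x) = 0 := by
  funext t
  show ∑ u ∈ tᶜ, eps k (insert u t) u * Dop k x (insert u t) = 0
  have step : ∀ u ∈ tᶜ,
      eps k (insert u t) u * Dop k x (insert u t)
        = ∑ w ∈ tᶜ.erase u,
            eps k (insert u t) u * (eps k (insert w (insert u t)) w * x (insert w (insert u t))) := by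
    intro u _
    rw [Dop, ← Finset.compl_insert, Finset.mul_sum]
  rw [Finset.sum_congr rfl step]
  have conv : ∀ u ∈ tᶜ, (∑ w ∈ tᶜ.erase u,
      eps k (insert u t) u * (eps k (insert w (insert u t)) w * x (insert w (insert u t))))
      = ∑ w ∈ tᶜ, if u ≠ w then
          eps k (insert u t) u * (eps k (insert w (insert u t)) w * x (insert w (insert u t))) else 0 := by
    intro u _
    rw [Finset.sum_ite, Finset.sum_const_zero, add_zero, Finset.filter_ne]
  rw [Finset.sum_congr rfl conv, ← Finset.sum_product']
  set F : V × V → k := fun p => if p.1 ≠ p.2 then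
      eps k (insert p.1 t) p.1 * (eps k (insert p.2 (insert p.1 t)) p.2 * x (insert p.2 (insert p.1 t))) else 0
    with hF
  show ∑ p ∈ tᶜ ×ˢ tᶜ, F p = 0
  apply Finset.sum_involution (fun p _ => Prod.swap p)
  · intro p hp
    rcases Finset.mem_product.1 hp with ⟨h1, h2⟩
    by_cases hne : p.1 ≠ p.2
    · have h1' : p.1 ∉ t := Finset.mem_compl.1 h1
      have h2' : p.2 ∉ t := Finset.mem_compl.1 h2
      have hx2 : insert p.2 (insert p.1 t) = insert p.1 (insert p.2 t) := Finset.insert_comm _ _ _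
      simp only [hF, if_pos hne, Prod.swap, if_pos (Ne.symm hne)]
      have hpair := eps_pair (k := k) h1' h2' hne
      rw [hx2] at hpair ⊢
      linear_combination (x (insert p.1 (insert p.2 t))) * hpair
    · simp only [hF, if_neg hne]
      push_neg at hne
      simp [Prod.swap, hne]
  · intro p hp h
    have : p.1 ≠ p.2 := by
      by_contra hc
      apply h
      simp [hF, hc]
    intro hc
    exact this (Prod.ext_iff.1 hc).1.symm
  · intro p hp
    rcases Finset.mem_product.1 hp with ⟨h1, h2⟩
    exact Finset.mem_product.2 ⟨h2, h1⟩
  · intro p hp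
    rfl

end Gen2
section Gen3
variable {V : Type*} [Fintype V] [LinearOrder V] {k : Type*} [Field k]

/-- cone homotopy: if `Dop x = 0` then `x` is a boundary of its cone over `v₀`. -/
lemma Dop_cone (v₀ : V) (x : Finset V → k) (hx : Dop k x = 0) :
    Dop k (fun t => if v₀ ∈ t then eps k t v₀ * x (t.erase v₀) else 0) = x := by
  funext t
  show (∑ u ∈ tᶜ, eps k (insert u t) u *
      (if v₀ ∈ insert u t then eps k (insert u t) v₀ * x ((insert u t).erase v₀) else 0)) = x t
  by_cases hv : v₀ ∈ t
  · have hvc : v₀ ∉ tᶜ := by simp [hv]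
    have step : ∀ u ∈ tᶜ, eps k (insert u t) u *
        (if v₀ ∈ insert u t then eps k (insert u t) v₀ * x ((insert u t).erase v₀) else 0)
        = -(eps k t v₀) * (eps k (insert u (t.erase v₀)) u * x (insert u (t.erase v₀))) := by
      intro u hu
      have hu' : u ∉ t := Finset.mem_compl.1 hu
      have huv : u ≠ v₀ := fun h => hu' (h ▸ hv)
      have he : (insert u t).erase v₀ = insert u (t.erase v₀) :=
        Finset.erase_insert_of_ne huv
      rw [if_pos (Finset.mem_insert_of_mem hv), he, ← mul_assoc,
        eps_swap2 (k := k) hv hu']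
      ring
    rw [Finset.sum_congr rfl step, ← Finset.mul_sum]
    have hsum : (∑ u ∈ tᶜ, eps k (insert u (t.erase v₀)) u * x (insert u (t.erase v₀)))
        = -(eps k t v₀ * x t) := by
      have h0 : Dop k x (t.erase v₀) = 0 := by rw [hx]; rfl
      rw [Dop] at h0
      rw [Finset.compl_erase] at h0
      rw [Finset.sum_insert hvc] at h0
      rw [Finset.insert_erase hv] at h0
      linear_combination h0
    rw [hsum]
    have hss := eps_mul_self (k := k) t v₀
    linear_combination (x t) * hss
  · have hvc : v₀ ∈ tᶜ := Finset.mem_compl.2 hv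
    rw [Finset.sum_eq_single_of_mem v₀ hvc]
    · rw [if_pos (Finset.mem_insert_self _ _), Finset.erase_insert hv, ← mul_assoc,
        eps_mul_self, one_mul]
    · intro u hu hne
      have hu' : u ∉ t := Finset.mem_compl.1 hu
      have : v₀ ∉ insert u t := by simp [Finset.mem_insert, hv, Ne.symm hne]
      rw [if_neg this, mul_zero]

end Gen3
section Gen4
variable {V : Type*} [Fintype V] [LinearOrder V] {k : Type*} [Field k]

/-- pushing a cycle into the link of `v`. -/
lemma Dop_linkdown (v : V) (x : Finset V → k) (hx : Dop k x = 0) :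
    Dop k (fun τ => if v ∈ τ then 0 else eps k (insert v τ) v * x (insert v τ)) = 0 := by
  funext τ
  show (∑ u ∈ τᶜ, eps k (insert u τ) u *
      (if v ∈ insert u τ then 0 else eps k (insert v (insert u τ)) v * x (insert v (insert u τ)))) = 0
  by_cases hv : v ∈ τ
  · apply Finset.sum_eq_zero
    intro u _
    rw [if_pos (Finset.mem_insert_of_mem hv), mul_zero]
  · have hvc : v ∈ τᶜ := Finset.mem_compl.2 hv
    rw [← Finset.add_sum_erase _ _ hvc, if_pos (Finset.mem_insert_self _ _), mul_zero, zero_add]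
    have step : ∀ u ∈ τᶜ.erase v, (eps k (insert u τ) u *
        (if v ∈ insert u τ then 0 else eps k (insert v (insert u τ)) v * x (insert v (insert u τ))))
        = -(eps k (insert v τ) v) * (eps k (insert u (insert v τ)) u * x (insert u (insert v τ))) := by
      intro u hu
      have huv : u ≠ v := (Finset.mem_erase.1 hu).1
      have hu' : u ∉ τ := Finset.mem_compl.1 (Finset.mem_erase.1 hu).2
      have hvm : v ∉ insert u τ := by simp [Finset.mem_insert, hv, Ne.symm huv]
      rw [if_neg hvm, ← mul_assoc, eps_pair (k := k) hu' hv huv,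
        Finset.insert_comm v u τ]
      ring
    rw [Finset.sum_congr rfl step, ← Finset.mul_sum]
    have h0 : Dop k x (insert v τ) = 0 := by rw [hx]; rfl
    rw [Dop, Finset.compl_insert] at h0
    rw [h0, mul_zero]

/-- boundary of a lifted link chain, at sets containing `v`. -/
lemma Dop_linkup (v : V) (c : Finset V → k) (hc : ∀ τ, c τ ≠ 0 → v ∉ τ)
    {s : Finset V} (hv : v ∈ s) :
    Dop k (fun s' => if v ∈ s' then eps k s' v * c (s'.erase v) else 0) s
      = -(eps k s v * Dop k c (s.erase v)) := by
  show (∑ u ∈ sᶜ, eps k (insert u s) u *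
      (if v ∈ insert u s then eps k (insert u s) v * c ((insert u s).erase v) else 0))
      = -(eps k s v * Dop k c (s.erase v))
  have hcs : c s = 0 := by
    by_contra h
    exact hc s h hv
  have hvc : v ∉ sᶜ := by simp [hv]
  have step : ∀ u ∈ sᶜ, (eps k (insert u s) u *
      (if v ∈ insert u s then eps k (insert u s) v * c ((insert u s).erase v) else 0))
      = -(eps k s v) * (eps k (insert u (s.erase v)) u * c (insert u (s.erase v))) := by
    intro u hu
    have hu' : u ∉ s := Finset.mem_compl.1 hu
    have huv : u ≠ v := fun h => hu' (h ▸ hv)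
    have he : (insert u s).erase v = insert u (s.erase v) := Finset.erase_insert_of_ne huv
    rw [if_pos (Finset.mem_insert_of_mem hv), he, ← mul_assoc, eps_swap2 (k := k) hv hu']
    ring
  rw [Finset.sum_congr rfl step, ← Finset.mul_sum]
  have hD : Dop k c (s.erase v) = eps k s v * c s
      + ∑ u ∈ sᶜ, eps k (insert u (s.erase v)) u * c (insert u (s.erase v)) := by
    rw [Dop, Finset.compl_erase, Finset.sum_insert hvc, Finset.insert_erase hv]
  rw [hD, hcs]
  ring

end Gen4
section Comb
variable {V : Type*} [Fintype V]

/-- vertex set as a finset. -/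
noncomputable def vertF (K : SComplex V) : Finset V :=
  Finset.univ.filter (fun v => {v} ∈ K.faces)

lemma mem_vertF {K : SComplex V} {v : V} : v ∈ vertF K ↔ {v} ∈ K.faces := by
  simp [vertF]

lemma face_subset_vertF {K : SComplex V} {s : Finset V} (hs : s ∈ K.faces) :
    s ⊆ vertF K := by
  intro v hv
  exact mem_vertF.2 (K.down_closed hs (Finset.singleton_subset_iff.2 hv))

lemma mem_delete_faces {K : SComplex V} {v : V} {s : Finset V} :
    s ∈ (K.delete v).faces ↔ s ∈ K.faces ∧ v ∉ s := Iff.rfl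

lemma mem_link_faces {K : SComplex V} {v : V} {s : Finset V} :
    s ∈ (K.link v).faces ↔ (v ∉ s ∧ insert v s ∈ K.faces) ∨ s = ∅ := Iff.rfl

/-- every non-face contains a minimal non-face. -/
lemma exists_minNonFace (K : SComplex V) :
    ∀ t : Finset V, t ∉ K.faces → ∃ σ, σ ⊆ t ∧ K.IsMinNonFace σ := by
  intro t
  induction t using Finset.strongInduction with
  | _ t ih =>
    intro ht
    by_cases h : ∀ ρ ⊂ t, ρ ∈ K.faces
    · exact ⟨t, Finset.Subset.refl t, ht, h⟩
    · push_neg at h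
      obtain ⟨ρ, hρt, hρ⟩ := h
      obtain ⟨σ, hσρ, hσ⟩ := ih ρ hρt hρ
      exact ⟨σ, hσρ.trans hρt.subset, hσ⟩

lemma minNonFace_ne_empty {K : SComplex V} {σ : Finset V} (h : K.IsMinNonFace σ) :
    σ ≠ ∅ := fun he => h.1 (he ▸ K.empty_mem)

lemma minNonFace_subset_vertF {K : SComplex V} {σ : Finset V}
    (h : K.IsMinNonFace σ) (hc : 2 ≤ σ.card) : σ ⊆ vertF K := by
  intro u hu
  apply mem_vertF.2
  apply h.2
  rw [Finset.ssubset_iff_of_subset (Finset.singleton_subset_iff.2 hu)]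
  have : 1 < σ.card := hc
  obtain ⟨w, hw, hwu⟩ := Finset.exists_mem_ne this u
  exact ⟨w, hw, by simp [hwu]⟩

/-- minimal non-faces of a deletion are small. -/
lemma delete_minNonFace_card {K : SComplex V} (d : ℕ) (hd : 1 ≤ d)
    (hF : ∀ s : Finset V, K.IsMinNonFace s → s.card ≤ d) (v : V) :
    ∀ s : Finset V, (K.delete v).IsMinNonFace s → s.card ≤ d := by
  intro s hs
  by_cases hv : v ∈ s
  · have : s = {v} := by
      by_contra hne
      have hsub : ({v} : Finset V) ⊂ s :=
        Finset.ssubset_iff_subset_ne.2 ⟨Finset.singleton_subset_iff.2 hv, fun h => hne h.symm⟩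
      have := hs.2 _ hsub
      rw [mem_delete_faces] at this
      exact this.2 (Finset.mem_singleton_self v)
    rw [this, Finset.card_singleton]
    exact hd
  · have hsK : s ∉ K.faces := fun h => hs.1 (mem_delete_faces.2 ⟨h, hv⟩)
    obtain ⟨σ, hσs, hσ⟩ := exists_minNonFace K s hsK
    have hσdel : σ ∉ (K.delete v).faces := fun h => hσ.1 (mem_delete_faces.1 h).1
    have : σ = s := by
      by_contra hne
      exact hσdel (hs.2 _ (Finset.ssubset_iff_subset_ne.2 ⟨hσs, hne⟩))
    rw [← this]
    exact hF σ hσ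

/-- minimal non-faces of a link are small. -/
lemma link_minNonFace_card {K : SComplex V} (d : ℕ) (hd : 1 ≤ d)
    (hF : ∀ s : Finset V, K.IsMinNonFace s → s.card ≤ d) (v : V) :
    ∀ s : Finset V, (K.link v).IsMinNonFace s → s.card ≤ d := by
  intro s hs
  have hse : s ≠ ∅ := minNonFace_ne_empty hs
  by_cases hv : v ∈ s
  · -- then s = {v}
    have : s = {v} := by
      by_contra hne
      have hsub : ({v} : Finset V) ⊂ s :=
        Finset.ssubset_iff_subset_ne.2 ⟨Finset.singleton_subset_iff.2 hv, fun h => hne h.symm⟩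
      have h1 := hs.2 _ hsub
      rw [mem_link_faces] at h1
      rcases h1 with ⟨h1, _⟩ | h1
      · exact h1 (Finset.mem_singleton_self v)
      · exact (Finset.singleton_ne_empty v) h1
    rw [this, Finset.card_singleton]; exact hd
  · have hins : insert v s ∉ K.faces := by
      intro h
      exact hs.1 (mem_link_faces.2 (Or.inl ⟨hv, h⟩))
    obtain ⟨σ, hσs, hσ⟩ := exists_minNonFace K _ hins
    by_cases hvσ : v ∈ σ
    · -- σ.erase v ⊆ s is a non-face of the link, unless it is empty
      by_cases hemp : σ.erase v = ∅
      · -- σ = {v}: {v} ∉ K.faces; then every nonempty subset of s is a non-face of link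
        have hσv : σ = {v} := by
          have := Finset.insert_erase hvσ
          rw [hemp] at this
          simp at this
          exact this.symm
        have hvface : ({v} : Finset V) ∉ K.faces := hσv ▸ hσ.1
        -- any nonempty τ with v ∉ τ is not in link
        have hnon : ∀ τ : Finset V, τ ≠ ∅ → v ∉ τ → τ ∉ (K.link v).faces := by
          intro τ hτe hτv h
          rcases mem_link_faces.1 h with ⟨_, h2⟩ | h2
          · exact hvface (K.down_closed h2 (by
              intro x hx
              rw [Finset.mem_singleton] at hx
              exact hx ▸ Finset.mem_insert_self v τ))
          · exact hτe h2
        -- minimality of s: any proper subset is a link face; so s has no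
        -- nonempty proper subsets: card s ≤ 1
        have hcard : s.card ≤ 1 := by
          by_contra hc
          push_neg at hc
          obtain ⟨u, hu⟩ := Finset.nonempty_iff_ne_empty.2 hse
          have hsub : ({u} : Finset V) ⊂ s := by
            rw [Finset.ssubset_iff_of_subset (Finset.singleton_subset_iff.2 hu)]
            obtain ⟨w, hw, hwu⟩ := Finset.exists_mem_ne hc u
            exact ⟨w, hw, by simp [hwu]⟩
          exact hnon {u} (Finset.singleton_ne_empty u)
            (fun h => hv (Finset.mem_singleton.1 h ▸ hu)) (hs.2 _ hsub)
        omega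
      · have h1 : σ.erase v ∉ (K.link v).faces := by
          intro h
          rcases mem_link_faces.1 h with ⟨_, h2⟩ | h2
          · rw [Finset.insert_erase hvσ] at h2
            exact hσ.1 h2
          · exact hemp h2
        have h2 : σ.erase v ⊆ s := by
          intro x hx
          rcases Finset.mem_erase.1 hx with ⟨hxv, hxσ⟩
          rcases Finset.mem_insert.1 (hσs hxσ) with h | h
          · exact absurd h hxv
          · exact h
        have : σ.erase v = s := by
          by_contra hne
          exact h1 (hs.2 _ (Finset.ssubset_iff_subset_ne.2 ⟨h2, hne⟩))
        rw [← this]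
        have hcσ := hF σ hσ
        have h4 := Finset.card_erase_add_one hvσ
        omega
    · have h1 : σ ∉ (K.link v).faces := by
        intro h
        rcases mem_link_faces.1 h with ⟨_, h2⟩ | h2
        · exact hσ.1 (K.down_closed h2 (Finset.subset_insert _ _))
        · exact minNonFace_ne_empty hσ h2
      have h2 : σ ⊆ s := by
        intro x hx
        rcases Finset.mem_insert.1 (hσs hx) with h | h
        · exact absurd (h ▸ hx) hvσ
        · exact h
      have : σ = s := by
        by_contra hne
        exact h1 (hs.2 _ (Finset.ssubset_iff_subset_ne.2 ⟨h2, hne⟩))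
      rw [← this]
      exact hF σ hσ

/-- the erased minimal non-face is a minimal non-face of the link. -/
lemma link_minNonFace_erase {K : SComplex V} {σ : Finset V}
    (hσ : K.IsMinNonFace σ) {v : V} (hv : v ∈ σ) (hc : 2 ≤ σ.card) :
    (K.link v).IsMinNonFace (σ.erase v) := by
  constructor
  · intro h
    rcases mem_link_faces.1 h with ⟨_, h2⟩ | h2
    · rw [Finset.insert_erase hv] at h2
      exact hσ.1 h2
    · have := Finset.card_erase_add_one hv
      rw [h2] at this
      simp at this
      omega
  · intro τ hτ
    have hτv : v ∉ τ := fun h => (Finset.mem_erase.1 (hτ.subset h)).1 rfl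
    apply mem_link_faces.2
    left
    refine ⟨hτv, hσ.2 _ ?_⟩
    have h1 : insert v τ ⊆ σ := by
      intro x hx
      rcases Finset.mem_insert.1 hx with h | h
      · exact h ▸ hv
      · exact (Finset.erase_subset _ _) (hτ.subset h)
    refine Finset.ssubset_iff_subset_ne.2 ⟨h1, ?_⟩
    intro he
    have hcard : (insert v τ).card = τ.card + 1 := Finset.card_insert_of_notMem hτv
    have h2 : τ.card < (σ.erase v).card := Finset.card_lt_card hτ
    have h3 := Finset.card_erase_add_one hv
    rw [he] at hcard
    omega

lemma vertF_delete_subset (K : SComplex V) (v : V) :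
    vertF (K.delete v) ⊆ (vertF K).erase v := by
  intro u hu
  have h := mem_vertF.1 hu
  rw [mem_delete_faces] at h
  exact Finset.mem_erase.2 ⟨fun he => h.2 (he ▸ Finset.mem_singleton_self u),
    mem_vertF.2 h.1⟩

lemma vertF_link_subset (K : SComplex V) (v : V) :
    vertF (K.link v) ⊆ (vertF K).erase v := by
  intro u hu
  have h := mem_vertF.1 hu
  rcases mem_link_faces.1 h with ⟨h1, h2⟩ | h2
  · refine Finset.mem_erase.2 ⟨fun he => h1 (he ▸ Finset.mem_singleton_self u), ?_⟩
    exact mem_vertF.2 (K.down_closed h2 (Finset.subset_insert _ _))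
  · exact absurd h2 (Finset.singleton_ne_empty u)

lemma vertF_link_not_mem {K : SComplex V} {v w : V}
    (h : K.IsMinNonFace {v, w}) : w ∉ vertF (K.link v) := by
  intro hw
  have hmem := mem_vertF.1 hw
  rcases mem_link_faces.1 hmem with ⟨h1, h2⟩ | h2
  · exact h.1 h2
  · exact Finset.singleton_ne_empty w h2

end Comb
section Step
variable {V : Type*} [Fintype V] [LinearOrder V] {k : Type*} [Field k]

/-- homology-vanishing property in chain degree `j`, phrased via `Dop`. -/
def GoodC (k : Type*) [Field k] {V : Type*} [Fintype V] [LinearOrder V]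
    (K : SComplex V) (j : ℕ) : Prop :=
  ∀ x : Finset V → k, (∀ s, x s ≠ 0 → s ∈ K.faces ∧ s.card = j) →
    (∀ t, Dop k x t = 0) →
    ∃ w : Finset V → k, (∀ s, w s ≠ 0 → s ∈ K.faces ∧ s.card = j + 1) ∧ Dop k w = x

lemma GoodC_of_link_delete (K : SComplex V) (v : V) (jm : ℕ)
    (hlink : GoodC k (K.link v) jm) (hdel : GoodC k (K.delete v) (jm + 1)) :
    GoodC k K (jm + 1) := by
  intro x hxsupp hxcyc
  set y : Finset V → k :=
    fun τ => if v ∈ τ then 0 else eps k (insert v τ) v * x (insert v τ) with hy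
  have hysupp : ∀ τ, y τ ≠ 0 → τ ∈ (K.link v).faces ∧ τ.card = jm := by
    intro τ hτ
    rw [hy] at hτ
    by_cases hv : v ∈ τ
    · simp [hv] at hτ
    · simp only [if_neg hv] at hτ
      have hx0 : x (insert v τ) ≠ 0 := (mul_ne_zero_iff.1 hτ).2
      obtain ⟨hf, hc⟩ := hxsupp _ hx0
      rw [Finset.card_insert_of_notMem hv] at hc
      exact ⟨mem_link_faces.2 (Or.inl ⟨hv, hf⟩), by omega⟩
  have hycyc : ∀ t, Dop k y t = 0 := by
    intro t
    rw [hy]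
    rw [Dop_linkdown v x (funext hxcyc)]
    rfl
  obtain ⟨c, hcsupp, hcD⟩ := hlink y hysupp hycyc
  have hcnv : ∀ τ, c τ ≠ 0 → v ∉ τ := by
    intro τ h hvτ
    obtain ⟨hf, hc⟩ := hcsupp τ h
    rcases mem_link_faces.1 hf with ⟨h1, _⟩ | h1
    · exact h1 hvτ
    · rw [h1] at hc
      simp at hc
  set w : Finset V → k :=
    fun s' => if v ∈ s' then eps k s' v * c (s'.erase v) else 0 with hw
  have hwsupp : ∀ s, w s ≠ 0 → s ∈ K.faces ∧ s.card = (jm + 1) + 1 := by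
    intro s h
    rw [hw] at h
    by_cases hv : v ∈ s
    · simp only [if_pos hv] at h
      have hc0 : c (s.erase v) ≠ 0 := (mul_ne_zero_iff.1 h).2
      obtain ⟨hf, hc⟩ := hcsupp _ hc0
      rcases mem_link_faces.1 hf with ⟨_, h2⟩ | h2
      · rw [Finset.insert_erase hv] at h2
        have := Finset.card_erase_add_one hv
        exact ⟨h2, by omega⟩
      · rw [h2] at hc
        simp at hc
    · simp [hv] at h
  have hx2v : ∀ s, v ∈ s → x s + Dop k w s = 0 := by
    intro s hv'
    rw [hw, Dop_linkup v c hcnv hv', hcD, hy]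
    have h1 : v ∉ s.erase v := Finset.notMem_erase v s
    show x s + -(eps k s v * (if v ∈ s.erase v then 0
      else eps k (insert v (s.erase v)) v * x (insert v (s.erase v)))) = 0
    rw [if_neg h1, Finset.insert_erase hv']
    have := eps_mul_self (k := k) s v
    linear_combination (-(x s)) * this
  have hx2supp : ∀ s, (x + Dop k w) s ≠ 0 → s ∈ (K.delete v).faces ∧ s.card = jm + 1 := by
    intro s h
    have hvs : v ∉ s := fun hv' => h (hx2v s hv')
    have hmain : s ∈ K.faces ∧ s.card = jm + 1 := by
      by_cases hx0 : x s = 0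
      · have hD : Dop k w s ≠ 0 := by
          intro h0
          exact h (by simp [Pi.add_apply, hx0, h0])
        exact Dop_support K hwsupp s hD
      · exact hxsupp s hx0
    exact ⟨mem_delete_faces.2 ⟨hmain.1, hvs⟩, hmain.2⟩
  have hx2cyc : ∀ t, Dop k (x + Dop k w) t = 0 := by
    intro t
    rw [Dop_add, Dop_Dop]
    simp [hxcyc t]
  obtain ⟨e, hesupp, heD⟩ := hdel (x + Dop k w) hx2supp hx2cyc
  refine ⟨e - w, ?_, ?_⟩
  · intro s h
    by_cases he : e s = 0
    · have hws : w s ≠ 0 := by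
        intro h0
        exact h (by simp [Pi.sub_apply, he, h0])
      exact hwsupp s hws
    · obtain ⟨hf, hc⟩ := hesupp s he
      exact ⟨(mem_delete_faces.1 hf).1, hc⟩
  · rw [Dop_sub, heD]
    funext s
    simp
end Step
section Key
variable {V : Type*} [Fintype V] [LinearOrder V] {k : Type*} [Field k]

lemma GoodC_of_full (K : SComplex V) (hfull : ∀ t ⊆ vertF K, t ∈ K.faces)
    (j : ℕ) (hj : 1 ≤ j) : GoodC k K j := by
  intro x hxsupp hxcyc
  rcases Finset.eq_empty_or_nonempty (vertF K) with he | hne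
  · have hx0 : x = 0 := by
      funext s
      by_contra h
      obtain ⟨hf, hc⟩ := hxsupp s h
      have := face_subset_vertF hf
      rw [he, Finset.subset_empty] at this
      rw [this] at hc
      simp at hc
      omega
    exact ⟨0, by simp, by rw [Dop_zero, hx0]⟩
  · obtain ⟨v₀, hv₀⟩ := hne
    refine ⟨fun t => if v₀ ∈ t then eps k t v₀ * x (t.erase v₀) else 0, ?_,
      Dop_cone v₀ x (funext hxcyc)⟩
    intro s h
    by_cases hv : v₀ ∈ s
    · simp only [if_pos hv] at h
      have hx0 : x (s.erase v₀) ≠ 0 := (mul_ne_zero_iff.1 h).2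
      obtain ⟨hf, hc⟩ := hxsupp _ hx0
      have hsub : s ⊆ vertF K := by
        intro u hu
        by_cases huv : u = v₀
        · exact huv ▸ hv₀
        · exact face_subset_vertF hf (Finset.mem_erase.2 ⟨huv, hu⟩)
      have := Finset.card_erase_add_one hv
      exact ⟨hfull s hsub, by omega⟩
    · simp [hv] at h

lemma key (d : ℕ) (hd : 1 ≤ d) :
    ∀ n : ℕ, ∀ K : SComplex V, (vertF K).card ≤ n →
      (∀ s : Finset V, K.IsMinNonFace s → s.card ≤ d) →
      (∀ σ : Finset V, K.IsMinNonFace σ → 2 ≤ σ.card → ∀ j : ℕ,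
        ((n : ℝ) - σ.card) * ((d : ℝ) - 1) + ((σ.card : ℝ) - 1) * d < (j : ℝ) * d →
          GoodC k K j)
      ∧ (∀ j : ℕ, (n : ℝ) * ((d : ℝ) - 1) < (j : ℝ) * d → GoodC k K j) := by
  intro n
  induction n using Nat.strong_induction_on with
  | _ n ih =>
    intro K hn hF
    have hD1 : (1 : ℝ) ≤ (d : ℝ) := by exact_mod_cast hd
    have partB : ∀ σ : Finset V, K.IsMinNonFace σ → 2 ≤ σ.card → ∀ j : ℕ,
        ((n : ℝ) - σ.card) * ((d : ℝ) - 1) + ((σ.card : ℝ) - 1) * d < (j : ℝ) * d →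
          GoodC k K j := by
      intro σ hσ hc2 j hj
      have hσv : σ ⊆ vertF K := minNonFace_subset_vertF hσ hc2
      have hcn : σ.card ≤ n := le_trans (Finset.card_le_card hσv) hn
      have hn2 : 2 ≤ n := le_trans hc2 hcn
      obtain ⟨v, hv⟩ := Finset.card_pos.1 (by omega : 0 < σ.card)
      have hvK : v ∈ vertF K := hσv hv
      -- real-number facts
      have hC2 : (2 : ℝ) ≤ (σ.card : ℝ) := by exact_mod_cast hc2
      have hCN : (σ.card : ℝ) ≤ (n : ℝ) := by exact_mod_cast hcn
      have hj2 : 2 ≤ j := by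
        have h1 : (1 : ℝ) < (j : ℝ) := by nlinarith
        have h2 : 1 < j := by exact_mod_cast h1
        omega
      obtain ⟨jm, rfl⟩ : ∃ jm, j = jm + 1 := ⟨j - 1, by omega⟩
      -- deletion branch
      have hdelcard : (vertF (K.delete v)).card ≤ n - 1 := by
        have h1 := Finset.card_le_card (vertF_delete_subset K v)
        have h2 := Finset.card_erase_add_one hvK
        omega
      have hdel := ((ih (n - 1) (by omega)) (K.delete v) hdelcard
        (delete_minNonFace_card d hd hF v)).2 (jm + 1) (by
          push_cast [Nat.cast_sub (by omega : 1 ≤ n)]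
          push_cast at hj
          nlinarith)
      -- link branch
      have hlkF := link_minNonFace_card d hd hF v
      by_cases hcc : σ.card = 2
      · -- σ = {v, w}
        obtain ⟨w, hw⟩ : ∃ w, σ.erase v = {w} := by
          have : (σ.erase v).card = 1 := by
            have := Finset.card_erase_add_one hv
            omega
          exact Finset.card_eq_one.1 this
        have hσvw : σ = {v, w} := by
          have := Finset.insert_erase hv
          rw [hw] at this
          exact this.symm
        have hwv : w ≠ v := by
          intro h
          have : w ∈ σ.erase v := hw ▸ Finset.mem_singleton_self w
          exact (Finset.mem_erase.1 this).1 (h ▸ rfl)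
        have hwK : w ∈ vertF K := hσv (by rw [hσvw]; simp)
        have hlksub : vertF (K.link v) ⊆ ((vertF K).erase v).erase w := by
          intro u hu
          refine Finset.mem_erase.2 ⟨?_, vertF_link_subset K v hu⟩
          intro he
          exact vertF_link_not_mem (hσvw ▸ hσ) (he ▸ hu)
        have hlkcard : (vertF (K.link v)).card ≤ n - 2 := by
          have h1 := Finset.card_le_card hlksub
          have h2 := Finset.card_erase_add_one (Finset.mem_erase.2 ⟨hwv, hwK⟩)
          have h3 := Finset.card_erase_add_one hvK
          omega
        have hlink := ((ih (n - 2) (by omega)) (K.link v) hlkcard hlkF).2 jm (by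
          push_cast [Nat.cast_sub (by omega : 2 ≤ n)]
          rw [hcc] at hj
          push_cast at hj
          nlinarith)
        exact GoodC_of_link_delete K v jm hlink hdel
      · -- σ.card ≥ 3
        have hc3 : 3 ≤ σ.card := by omega
        have hlkcard : (vertF (K.link v)).card ≤ n - 1 := by
          have h1 := Finset.card_le_card (vertF_link_subset K v)
          have h2 := Finset.card_erase_add_one hvK
          omega
        have herase2 : 2 ≤ (σ.erase v).card := by
          have := Finset.card_erase_add_one hv
          omega
        have hlink := ((ih (n - 1) (by omega)) (K.link v) hlkcard hlkF).1
          (σ.erase v) (link_minNonFace_erase hσ hv hc2) herase2 jm (by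
            have hce := Finset.card_erase_add_one hv
            have hcast : ((σ.erase v).card : ℝ) = (σ.card : ℝ) - 1 := by
              have : (σ.erase v).card = σ.card - 1 := by omega
              rw [this]
              push_cast [Nat.cast_sub (by omega : 1 ≤ σ.card)]
              ring
            rw [hcast]
            push_cast [Nat.cast_sub (by omega : 1 ≤ n)]
            push_cast at hj
            nlinarith)
        exact GoodC_of_link_delete K v jm hlink hdel
    refine ⟨partB, ?_⟩
    intro j hj
    by_cases hfull : ∀ t ⊆ vertF K, t ∈ K.faces
    · refine GoodC_of_full K hfull j ?_
      by_contra h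
      push_neg at h
      have hj0 : j = 0 := by omega
      rw [hj0] at hj
      push_cast at hj
      nlinarith [Nat.cast_nonneg (α := ℝ) n]
    · push_neg at hfull
      obtain ⟨t, hts, htn⟩ := hfull
      obtain ⟨σ, hσt, hσ⟩ := exists_minNonFace K t htn
      have hc2 : 2 ≤ σ.card := by
        by_contra h
        push_neg at h
        interval_cases hcc : σ.card
        · rw [Finset.card_eq_zero] at hcc
          exact hσ.1 (hcc ▸ K.empty_mem)
        · obtain ⟨u, hu⟩ := Finset.card_eq_one.1 hcc
          apply hσ.1
          rw [hu]
          exact mem_vertF.1 (hts (hσt (hu ▸ Finset.mem_singleton_self u)))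
      have hcd : σ.card ≤ d := hF σ hσ
      refine partB σ hσ hc2 j ?_
      have hCd : (σ.card : ℝ) ≤ (d : ℝ) := by exact_mod_cast hcd
      have hC2 : (2 : ℝ) ≤ (σ.card : ℝ) := by exact_mod_cast hc2
      nlinarith

end Key
section Bridge
variable {V : Type*} [Fintype V] {k : Type*} [Field k]

noncomputable def extC (k : Type*) [Field k] {V : Type*} [Fintype V] (K : SComplex V)
    (j : ℕ) (z : SComplex.Chains k K j) : Finset V → k :=
  fun s => if h : s ∈ K.faces ∧ s.card = j then z ⟨s, h⟩ else 0

lemma bdryElt_eq (K : SComplex V) (j : ℕ)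
    (s : {s : Finset V // s ∈ K.faces ∧ s.card = j + 1})
    (t : {s : Finset V // s ∈ K.faces ∧ s.card = j}) :
    SComplex.bdryElt k K j s t =
      if t.1 ⊆ s.1 then
        ∑ v ∈ s.1 \ t.1, @eps k _ V (IsWellOrder.linearOrder WellOrderingRel) s.1 v
      else 0 := rfl

lemma bdry_eq_Dop (K : SComplex V) (j : ℕ) (z : SComplex.Chains k K (j + 1))
    (t : {s : Finset V // s ∈ K.faces ∧ s.card = j}) :
    SComplex.bdry k K j z t =
      @Dop k _ V _ (IsWellOrder.linearOrder WellOrderingRel) (extC k K (j + 1) z) t.1 := by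
  have L1 : SComplex.bdry k K j z t
      = ∑ s : {s : Finset V // s ∈ K.faces ∧ s.card = j + 1},
          z s * SComplex.bdryElt k K j s t := by
    rw [SComplex.bdry, LinearMap.sum_apply]
    rw [Finset.sum_apply]
    apply Finset.sum_congr rfl
    intro s _
    rw [LinearMap.comp_apply, LinearMap.toSpanSingleton_apply, LinearMap.proj_apply,
      Pi.smul_apply, smul_eq_mul]
  rw [L1]
  have L2 : ∀ s : {s : Finset V // s ∈ K.faces ∧ s.card = j + 1},
      z s * SComplex.bdryElt k K j s t
        = ∑ u ∈ t.1ᶜ, if s.1 = insert u t.1 then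
            @eps k _ V (IsWellOrder.linearOrder WellOrderingRel) s.1 u * z s else 0 := by
    intro s
    rw [bdryElt_eq]
    by_cases hts : t.1 ⊆ s.1
    · rw [if_pos hts]
      have hcard : (s.1 \ t.1).card = 1 := by
        rw [Finset.card_sdiff_of_subset hts, s.2.2, t.2.2]
        omega
      obtain ⟨u₀, hu₀⟩ := Finset.card_eq_one.1 hcard
      have hu₀m : u₀ ∈ s.1 \ t.1 := hu₀ ▸ Finset.mem_singleton_self u₀
      have hu₀s : u₀ ∈ s.1 := (Finset.mem_sdiff.1 hu₀m).1
      have hu₀t : u₀ ∉ t.1 := (Finset.mem_sdiff.1 hu₀m).2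
      have hseq : s.1 = insert u₀ t.1 :=
        (Finset.eq_of_subset_of_card_le (Finset.insert_subset hu₀s hts)
          (by rw [Finset.card_insert_of_notMem hu₀t, s.2.2, t.2.2])).symm
      rw [hu₀, Finset.sum_singleton]
      rw [Finset.sum_eq_single_of_mem u₀ (Finset.mem_compl.2 hu₀t)]
      · rw [if_pos hseq]
        ring
      · intro b hb hbne
        apply if_neg
        intro hbe
        apply hbne
        have hbm : b ∈ s.1 \ t.1 := Finset.mem_sdiff.2
          ⟨hbe ▸ Finset.mem_insert_self b t.1, Finset.mem_compl.1 hb⟩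
        rw [hu₀] at hbm
        exact Finset.mem_singleton.1 hbm
    · rw [if_neg hts, mul_zero]
      symm
      apply Finset.sum_eq_zero
      intro u _
      apply if_neg
      intro he
      exact hts (he ▸ Finset.subset_insert u t.1)
  rw [Finset.sum_congr rfl (fun s _ => L2 s), Finset.sum_comm,
    @Dop_apply V _ (IsWellOrder.linearOrder WellOrderingRel) k _]
  apply Finset.sum_congr rfl
  intro u hu
  have hut : u ∉ t.1 := Finset.mem_compl.1 hu
  have hcard : (insert u t.1).card = j + 1 := by
    rw [Finset.card_insert_of_notMem hut, t.2.2]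
  by_cases hf : insert u t.1 ∈ K.faces
  · rw [Finset.sum_eq_single_of_mem (⟨insert u t.1, hf, hcard⟩ :
      {s : Finset V // s ∈ K.faces ∧ s.card = j + 1}) (Finset.mem_univ _)]
    · rw [if_pos rfl, extC, dif_pos (⟨hf, hcard⟩ : insert u t.1 ∈ K.faces ∧ _)]
    · intro s _ hsne
      apply if_neg
      intro he
      exact hsne (Subtype.ext he)
  · rw [extC, dif_neg (fun h : _ ∧ _ => hf h.1), mul_zero]
    apply Finset.sum_eq_zero
    intro s _
    apply if_neg
    intro he
    exact hf (he ▸ s.2.1)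

end Bridge
/-- If every minimal non-face of `K` has cardinality at most `d` and
`K` has `n` vertices, then the reduced homology `H̃_i(K; k)` vanishes for every
`i > n(d-1)/d - 1` (recall `homologyMod k K j` is `H̃_{j-1}(K; k)`). -/
theorem homology_vanishing_of_no_missing_faces (k : Type*) [Field k]
    (d : ℕ) (hd : 1 ≤ d) (V : Type*) [Fintype V] (K : SComplex V)
    (hvert : ∀ v : V, {v} ∈ K.faces)
    (hF : ∀ s : Finset V, K.IsMinNonFace s → s.card ≤ d)
    (j : ℕ)
    (hj : (Fintype.card V : ℝ) * ((d : ℝ) - 1) / d - 1 < (j : ℝ) - 1) :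
    Subsingleton (homologyMod k K j) := by
  have hd0 : (0 : ℝ) < (d : ℝ) := by exact_mod_cast hd
  have hD1 : (1 : ℝ) ≤ (d : ℝ) := by exact_mod_cast hd
  have hjj : (Fintype.card V : ℝ) * ((d : ℝ) - 1) < (j : ℝ) * d := by
    have h2 : (Fintype.card V : ℝ) * ((d : ℝ) - 1) / d < (j : ℝ) := by linarith
    exact (div_lt_iff₀ hd0).1 h2
  have hj1 : 1 ≤ j := by
    by_contra h
    push_neg at h
    have hj0 : j = 0 := by omega
    rw [hj0] at hjj
    norm_num at hjj
    have h0 : (0 : ℝ) ≤ (Fintype.card V : ℝ) * ((d : ℝ) - 1) :=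
      mul_nonneg (Nat.cast_nonneg _) (by linarith [hD1])
    linarith
  obtain ⟨jm, rfl⟩ : ∃ jm, j = jm + 1 := ⟨j - 1, by omega⟩
  have hvF : vertF K = (Finset.univ : Finset V) := by
    ext v
    simp [mem_vertF, hvert]
  have hkey := ((@key V _ (IsWellOrder.linearOrder WellOrderingRel) k _ d hd
    (Fintype.card V)) K (by rw [hvF, Finset.card_univ]) hF).2 (jm + 1) hjj
  apply Submodule.Quotient.subsingleton_iff.2
  rw [Submodule.eq_top_iff']
  intro z
  rw [Submodule.mem_comap]
  have hzmem : z.1 ∈ LinearMap.ker (SComplex.bdry k K jm) := z.2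
  have hzc : SComplex.bdry k K jm z.1 = 0 := LinearMap.mem_ker.1 hzmem
  set x := extC k K (jm + 1) z.1 with hx
  have hxsupp : ∀ s, x s ≠ 0 → s ∈ K.faces ∧ s.card = jm + 1 := by
    intro s h
    rw [hx, extC] at h
    by_cases hh : s ∈ K.faces ∧ s.card = jm + 1
    · exact hh
    · rw [dif_neg hh] at h
      exact absurd rfl h
  have hxcyc : ∀ t, @Dop k _ V _ (IsWellOrder.linearOrder WellOrderingRel) x t = 0 := by
    intro t
    by_cases ht : t ∈ K.faces ∧ t.card = jm
    · have hb := bdry_eq_Dop K jm z.1 ⟨t, ht⟩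
      rw [← hb, hzc]
      rfl
    · rcases not_and_or.1 ht with h | h
      · exact @Dop_eq_zero_of_face V _ (IsWellOrder.linearOrder WellOrderingRel) k _ K x
          (fun s hs => (hxsupp s hs).1) t h
      · exact @Dop_eq_zero_of_card V _ (IsWellOrder.linearOrder WellOrderingRel) k _ x
          (jm + 1) (fun s hs => (hxsupp s hs).2) t (by omega)
  obtain ⟨w, hwsupp, hwD⟩ := hkey x hxsupp hxcyc
  have hmem : z.1 ∈ SComplex.bdries k K (jm + 1) := by
    rw [SComplex.bdries, LinearMap.mem_range]
    refine ⟨(fun s => w s.1 : SComplex.Chains k K (jm + 1 + 1)), ?_⟩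
    funext t
    have hb := bdry_eq_Dop K (jm + 1) (fun s => w s.1) t
    rw [hb]
    have hextW : extC k K (jm + 1 + 1) (fun s => w s.1) = w := by
      funext s
      rw [extC]
      by_cases h : s ∈ K.faces ∧ s.card = jm + 1 + 1
      · rw [dif_pos h]
      · rw [dif_neg h]
        by_contra hne
        exact h (hwsupp s (Ne.symm hne))
    rw [hextW, hwD, hx, extC, dif_pos t.2]
  simpa using hmem
end
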